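/- arXiv:2509.19118 — 11 statements merged into one kernel-verified Lean document; each statement's English description precedes it below -/
import Mathlib

section
/- Classification of two-dimensional B-polytopes: let S \subset Z^2_{\ge 0} be a 2-dimensional B-polytope, i.e., every segment between two points of S is either a B-segment (its two endpoints lie at lattice distance 1 from a common coordinate axis, forming a height-1 pyramid over a point of that axis) or a segment whose affine span (line through the two points) passes through the origin. Then, up to swapping the two coordinates, S is one of: (1) a B_1-polytope: S consists of a single point (a, 1) together with at least two points on the ray {(x, 0) : x \ge 0}; or (2) a border polytope: S contains (0,1) and (1,1), at least one point (x, 0) with x \ge 1, possibly the origin, and no other points. -/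
/-- A B-segment in `ℤ²_{≥0}`: one endpoint lies on a coordinate axis `{x_i = 0}` and the
other endpoint has its `i`-th coordinate equal to `1` (a height-1 pyramid over a point of
the axis). -/
def IsBSeg (p q : ℤ × ℤ) : Prop :=
  (p.1 = 0 ∧ q.1 = 1) ∨ (q.1 = 0 ∧ p.1 = 1) ∨ (p.2 = 0 ∧ q.2 = 1) ∨ (q.2 = 0 ∧ p.2 = 1)

/-- The affine span of the segment `pq` (the line through `p` and `q`) contains the origin. -/
def SpanThroughOrigin (p q : ℤ × ℤ) : Prop := p.1 * q.2 = p.2 * q.1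

/-- A finite subset of `ℤ²` is 2-dimensional: it contains three non-collinear points. -/
def TwoDim (S : Finset (ℤ × ℤ)) : Prop :=
  ∃ p ∈ S, ∃ q ∈ S, ∃ r ∈ S, (q.1 - p.1) * (r.2 - p.2) ≠ (q.2 - p.2) * (r.1 - p.1)

/-- A 2-dimensional B-polytope in `ℤ²_{≥0}`. -/
def IsBPolytope2 (S : Finset (ℤ × ℤ)) : Prop :=
  (∀ p ∈ S, 0 ≤ p.1 ∧ 0 ≤ p.2) ∧ TwoDim S ∧
    ∀ p ∈ S, ∀ q ∈ S, p ≠ q → IsBSeg p q ∨ SpanThroughOrigin p q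

/-- B₁-polytope: a single point `(a,1)` together with at least two points on the ray `(⋆,0)`. -/
def IsB1Poly (S : Finset (ℤ × ℤ)) : Prop :=
  ∃ a : ℤ, (a, 1) ∈ S ∧ (∀ p ∈ S, p = (a, 1) ∨ p.2 = 0) ∧
    ∃ p ∈ S, ∃ q ∈ S, p ≠ q ∧ p.2 = 0 ∧ q.2 = 0

/-- Border polytope: the points `(0,1)`, `(1,1)`, at least one point `(x,0)` with `x ≥ 1`,
possibly the origin, and nothing else. -/
def IsBorderPoly (S : Finset (ℤ × ℤ)) : Prop :=
  (0, 1) ∈ S ∧ (1, 1) ∈ S ∧ (∃ p ∈ S, p.2 = 0 ∧ 1 ≤ p.1) ∧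
    ∀ p ∈ S, p = (0, 1) ∨ p = (1, 1) ∨ p = (0, 0) ∨ (p.2 = 0 ∧ 1 ≤ p.1)

/- ### Auxiliary lemmas -/

lemma prod_eq' {p q : ℤ × ℤ} (h1 : p.1 = q.1) (h2 : p.2 = q.2) : p = q := Prod.ext h1 h2

lemma prod_eq {p : ℤ × ℤ} {a b : ℤ} (h1 : p.1 = a) (h2 : p.2 = b) : p = (a, b) :=
  prod_eq' h1 h2

lemma mem_swap {S : Finset (ℤ × ℤ)} {p : ℤ × ℤ} :
    p ∈ S.image Prod.swap ↔ p.swap ∈ S := by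
  constructor
  · intro hp
    obtain ⟨q, hq, rfl⟩ := Finset.mem_image.mp hp
    simpa using hq
  · intro hp
    exact Finset.mem_image.mpr ⟨p.swap, hp, by simp⟩

lemma collinear3 {p q r : ℤ × ℤ} (hpq : p.1 * q.2 = p.2 * q.1) (hpr : p.1 * r.2 = p.2 * r.1)
    (hqr : q.1 * r.2 = q.2 * r.1) :
    (q.1 - p.1) * (r.2 - p.2) = (q.2 - p.2) * (r.1 - p.1) := by
  linear_combination hqr - hpr + hpq

lemma two_prop {S : Finset (ℤ × ℤ)} (htd : TwoDim S) (P : ℤ × ℤ → Prop) (c : ℤ × ℤ)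
    (hall : ∀ p ∈ S, p = c ∨ P p) :
    ∃ p ∈ S, ∃ q ∈ S, p ≠ q ∧ P p ∧ P q := by
  obtain ⟨p, hp, q, hq, r, hr, hd⟩ := htd
  have hpq : p ≠ q := by rintro rfl; exact hd (by ring)
  have hpr : p ≠ r := by rintro rfl; exact hd (by ring)
  have hqr : q ≠ r := by rintro rfl; exact hd (by ring)
  rcases hall p hp with h1 | h1
  · rcases hall q hq with h2 | h2
    · exact absurd (h1.trans h2.symm) hpq
    · rcases hall r hr with h3 | h3
      · exact absurd (h1.trans h3.symm) hpr
      · exact ⟨q, hq, r, hr, hqr, h2, h3⟩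
  · rcases hall q hq with h2 | h2
    · rcases hall r hr with h3 | h3
      · exact absurd (h2.trans h3.symm) hqr
      · exact ⟨p, hp, r, hr, hpr, h1, h3⟩
    · exact ⟨p, hp, q, hq, hpq, h1, h2⟩

lemma bp_swap {S : Finset (ℤ × ℤ)} (h : IsBPolytope2 S) : IsBPolytope2 (S.image Prod.swap) := by
  obtain ⟨hpos, htd, hseg⟩ := h
  refine ⟨?_, ?_, ?_⟩
  · intro p hp
    have := hpos p.swap (mem_swap.mp hp)
    exact ⟨this.2, this.1⟩
  · obtain ⟨p, hp, q, hq, r, hr, hd⟩ := htd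
    refine ⟨p.swap, mem_swap.mpr (by simpa using hp), q.swap, mem_swap.mpr (by simpa using hq),
      r.swap, mem_swap.mpr (by simpa using hr), ?_⟩
    simp only [Prod.fst_swap, Prod.snd_swap]
    exact fun e => hd e.symm
  · intro p hp q hq hne
    have hne' : p.swap ≠ q.swap := fun e => hne (by simpa using congrArg Prod.swap e)
    rcases hseg p.swap (mem_swap.mp hp) q.swap (mem_swap.mp hq) hne' with hb | hs
    · left
      unfold IsBSeg at hb ⊢
      simp only [Prod.fst_swap, Prod.snd_swap] at hb
      tauto
    · right
      unfold SpanThroughOrigin at hs ⊢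
      simp only [Prod.fst_swap, Prod.snd_swap] at hs
      linarith

/-- An off-axis point paired with a nonzero point of the x-axis must have height 1. -/
lemma off_y {S : Finset (ℤ × ℤ)}
    (hseg : ∀ p ∈ S, ∀ q ∈ S, p ≠ q → IsBSeg p q ∨ SpanThroughOrigin p q)
    {w q : ℤ × ℤ} (hwS : w ∈ S) (hw2 : w.2 = 0) (hw1 : 1 ≤ w.1)
    (hqS : q ∈ S) (hq1 : 1 ≤ q.1) (hq2 : 1 ≤ q.2) : q.2 = 1 := by
  have hne : w ≠ q := fun e => by rw [e] at hw2; omega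
  rcases hseg w hwS q hqS hne with hb | hs
  · rcases hb with ⟨x, y⟩ | ⟨x, y⟩ | ⟨x, y⟩ | ⟨x, y⟩ <;> omega
  · exfalso
    have hs' : w.1 * q.2 = w.2 * q.1 := hs
    rw [hw2, zero_mul] at hs'
    nlinarith

/-- A nonzero x-axis point and a nonzero y-axis point: one of them is at distance 1. -/
lemma ax_ax {S : Finset (ℤ × ℤ)}
    (hseg : ∀ p ∈ S, ∀ q ∈ S, p ≠ q → IsBSeg p q ∨ SpanThroughOrigin p q)
    {p q : ℤ × ℤ} (hpS : p ∈ S) (hp2 : p.2 = 0) (hp1 : 1 ≤ p.1)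
    (hqS : q ∈ S) (hq1 : q.1 = 0) (hq2 : 1 ≤ q.2) : p.1 = 1 ∨ q.2 = 1 := by
  have hne : p ≠ q := fun e => by rw [e] at hp2; omega
  rcases hseg p hpS q hqS hne with hb | hs
  · rcases hb with ⟨x, y⟩ | ⟨x, y⟩ | ⟨x, y⟩ | ⟨x, y⟩ <;> omega
  · exfalso
    have hs' : p.1 * q.2 = p.2 * q.1 := hs
    rw [hp2, hq1, zero_mul] at hs'
    nlinarith

/-- A nonzero y-axis point paired with an off-axis point of height 1 forces `c.1 = 1`. -/
lemma yax_c {S : Finset (ℤ × ℤ)}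
    (hseg : ∀ p ∈ S, ∀ q ∈ S, p ≠ q → IsBSeg p q ∨ SpanThroughOrigin p q)
    {u c : ℤ × ℤ} (huS : u ∈ S) (hu1 : u.1 = 0) (hu2 : 1 ≤ u.2)
    (hcS : c ∈ S) (hc1 : 1 ≤ c.1) (hc2 : c.2 = 1) : c.1 = 1 := by
  have hne : u ≠ c := fun e => by rw [e] at hu1; omega
  rcases hseg u huS c hcS hne with hb | hs
  · rcases hb with ⟨x, y⟩ | ⟨x, y⟩ | ⟨x, y⟩ | ⟨x, y⟩ <;> omega
  · exfalso
    have hs' : u.1 * c.2 = u.2 * c.1 := hs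
    rw [hu1, zero_mul] at hs'
    nlinarith

/-- The main classification, under the extra assumption that `S` contains a nonzero
point of the x-axis. -/
lemma main_lemma (S : Finset (ℤ × ℤ)) (h : IsBPolytope2 S)
    {w : ℤ × ℤ} (hwS : w ∈ S) (hw2 : w.2 = 0) (hw1 : 1 ≤ w.1) :
    (IsB1Poly S ∨ IsBorderPoly S) ∨
      (IsB1Poly (S.image Prod.swap) ∨ IsBorderPoly (S.image Prod.swap)) := by
  have hpos := h.1
  have htd := h.2.1
  have hseg := h.2.2
  by_cases hC : ∃ c ∈ S, 1 ≤ c.1 ∧ 1 ≤ c.2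
  · obtain ⟨c, hcS, hc1, hc2⟩ := hC
    have hc2' : c.2 = 1 := off_y hseg hwS hw2 hw1 hcS hc1 hc2
    -- all off-axis points coincide with c
    have hoff : ∀ q ∈ S, 1 ≤ q.1 → 1 ≤ q.2 → q = c := by
      intro q hq h1 h2
      have hq2 : q.2 = 1 := off_y hseg hwS hw2 hw1 hq h1 h2
      by_contra hne
      rcases hseg q hq c hcS hne with hb | hs
      · rcases hb with ⟨x, y⟩ | ⟨x, y⟩ | ⟨x, y⟩ | ⟨x, y⟩ <;> omega
      · have hs' : q.1 * c.2 = q.2 * c.1 := hs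
        rw [hq2, hc2', mul_one, one_mul] at hs'
        exact hne (prod_eq' hs' (by omega))
    by_cases hB : ∃ u ∈ S, u.1 = 0 ∧ 1 ≤ u.2
    · obtain ⟨u, huS, hu1, hu2⟩ := hB
      have hca : c.1 = 1 := yax_c hseg huS hu1 hu2 hcS hc1 hc2'
      by_cases hB2 : ∃ v ∈ S, v.1 = 0 ∧ 2 ≤ v.2
      · -- border polytope after swapping
        obtain ⟨v, hvS, hv1, hv2⟩ := hB2
        have hwx : w.1 = 1 := by
          rcases ax_ax hseg hwS hw2 hw1 hvS hv1 (by omega) with h' | h'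
          · exact h'
          · omega
        right; right
        refine ⟨?_, ?_, ?_, ?_⟩
        · apply mem_swap.mpr
          have e : (((0 : ℤ), (1 : ℤ)) : ℤ × ℤ).swap = w := (prod_eq hwx hw2).symm
          rw [e]; exact hwS
        · apply mem_swap.mpr
          have e : (((1 : ℤ), (1 : ℤ)) : ℤ × ℤ).swap = c := (prod_eq hca hc2').symm
          rw [e]; exact hcS
        · refine ⟨(v.2, 0), mem_swap.mpr ?_, rfl, by omega⟩
          have : ((v.2, 0) : ℤ × ℤ).swap = v := (prod_eq hv1 rfl).symm
          rw [this]; exact hvS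
        · intro p hp
          have hq := mem_swap.mp hp
          have h0 := hpos p.swap hq
          simp only [Prod.fst_swap, Prod.snd_swap] at h0
          by_cases h1 : p.1 = 0
          · -- the S-point p.swap is on the x-axis
            by_cases h2 : p.2 = 0
            · exact Or.inr (Or.inr (Or.inl (prod_eq h1 h2)))
            · have h2' : 1 ≤ p.2 := by omega
              have := ax_ax hseg hq (by simpa using h1) (by simpa using h2') hvS hv1 (by omega)
              simp only [Prod.fst_swap, Prod.snd_swap] at this
              rcases this with h' | h'
              · exact Or.inl (prod_eq h1 h')
              · omega
          · have h1' : 1 ≤ p.1 := by omega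
            by_cases h2 : p.2 = 0
            · exact Or.inr (Or.inr (Or.inr ⟨h2, h1'⟩))
            · have h2' : 1 ≤ p.2 := by omega
              have := hoff p.swap hq (by simpa using h2') (by simpa using h1')
              have e1 : p.2 = c.1 := congrArg Prod.fst this
              have e2 : p.1 = c.2 := congrArg Prod.snd this
              exact Or.inr (Or.inl (prod_eq (by omega) (by omega)))
      · -- border polytope: u = (0,1)
        push_neg at hB2
        have hu2' : u.2 = 1 := by have := hB2 u huS hu1; omega
        left; right
        refine ⟨prod_eq hu1 hu2' ▸ huS, prod_eq hca hc2' ▸ hcS, ⟨w, hwS, hw2, hw1⟩, ?_⟩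
        intro p hp
        have h0 := hpos p hp
        by_cases h2 : p.2 = 0
        · by_cases h1 : p.1 = 0
          · exact Or.inr (Or.inr (Or.inl (prod_eq h1 h2)))
          · exact Or.inr (Or.inr (Or.inr ⟨h2, by omega⟩))
        · have h2' : 1 ≤ p.2 := by omega
          by_cases h1 : p.1 = 0
          · have := hB2 p hp h1
            exact Or.inl (prod_eq h1 (by omega))
          · have := hoff p hp (by omega) h2'
            rw [this]
            exact Or.inr (Or.inl (prod_eq hca hc2'))
    · -- B₁-polytope with apex c = (c.1, 1)
      push_neg at hB
      have hall : ∀ p ∈ S, p = (c.1, 1) ∨ p.2 = 0 := by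
        intro p hp
        have h0 := hpos p hp
        by_cases h2 : p.2 = 0
        · exact Or.inr h2
        · have h2' : 1 ≤ p.2 := by omega
          by_cases h1 : p.1 = 0
          · exact absurd h2' (by simpa using hB p hp h1)
          · have := hoff p hp (by omega) h2'
            exact Or.inl (this.trans (prod_eq rfl hc2'))
      left; left
      refine ⟨c.1, prod_eq rfl hc2' ▸ hcS, hall, ?_⟩
      exact two_prop htd (fun p => p.2 = 0) (c.1, 1) hall
  · -- no off-axis points at all
    push_neg at hC
    have hB : ∃ u ∈ S, u.1 = 0 ∧ 1 ≤ u.2 := by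
      by_contra hB
      push_neg at hB
      have hall : ∀ p ∈ S, p.2 = 0 := by
        intro p hp
        have h0 := hpos p hp
        by_cases h1 : p.1 = 0
        · have := hB p hp h1; omega
        · have := hC p hp (by omega); omega
      obtain ⟨p, hp, q, hq, r, hr, hd⟩ := htd
      exact hd (by rw [hall p hp, hall q hq, hall r hr]; ring)
    obtain ⟨u, huS, hu1, hu2⟩ := hB
    by_cases hA2 : ∃ v ∈ S, v.2 = 0 ∧ 2 ≤ v.1
    · -- B₁-polytope with apex (0,1)
      obtain ⟨v, hvS, hv2, hv1⟩ := hA2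
      have hyax : ∀ x ∈ S, x.1 = 0 → 1 ≤ x.2 → x.2 = 1 := by
        intro x hx h1 h2
        rcases ax_ax hseg hvS hv2 (by omega) hx h1 h2 with h' | h'
        · omega
        · exact h'
      have hall : ∀ p ∈ S, p = ((0 : ℤ), (1 : ℤ)) ∨ p.2 = 0 := by
        intro p hp
        have h0 := hpos p hp
        by_cases h2 : p.2 = 0
        · exact Or.inr h2
        · have h2' : 1 ≤ p.2 := by omega
          by_cases h1 : p.1 = 0
          · exact Or.inl (prod_eq h1 (hyax p hp h1 h2'))
          · have := hC p hp (by omega); omega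
      left; left
      refine ⟨0, prod_eq hu1 (hyax u huS hu1 hu2) ▸ huS, hall, ?_⟩
      exact two_prop htd (fun p => p.2 = 0) (0, 1) hall
    · -- B₁-polytope of the swap, with apex (0,1)
      push_neg at hA2
      have hwx : w.1 = 1 := by have := hA2 w hwS hw2; omega
      right; left
      have hmem : ((0 : ℤ), (1 : ℤ)) ∈ S.image Prod.swap := by
        apply mem_swap.mpr
        have : (((0 : ℤ), (1 : ℤ)) : ℤ × ℤ).swap = w := (prod_eq hwx hw2).symm
        rw [this]; exact hwS
      have hall : ∀ p ∈ S.image Prod.swap, p = ((0 : ℤ), (1 : ℤ)) ∨ p.2 = 0 := by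
        intro p hp
        have hq := mem_swap.mp hp
        have h0 := hpos p.swap hq
        simp only [Prod.fst_swap, Prod.snd_swap] at h0
        by_cases h1 : p.1 = 0
        · -- S-point on x-axis: p.swap.2 = p.1 = 0
          have := hA2 p.swap hq (by simpa using h1)
          simp only [Prod.fst_swap] at this
          by_cases h2 : p.2 = 0
          · exact Or.inr h2
          · exact Or.inl (prod_eq h1 (by omega))
        · have h1' : 1 ≤ p.1 := by omega
          by_cases h2 : p.2 = 0
          · exact Or.inr h2
          · have h2' : 1 ≤ p.2 := by omega
            have := hC p.swap hq (by simpa using h2')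
            simp only [Prod.snd_swap] at this
            omega
      refine ⟨0, hmem, hall, ?_⟩
      exact two_prop (bp_swap h).2.1 (fun p => p.2 = 0) (0, 1) hall

lemma image_swap_swap' (S : Finset (ℤ × ℤ)) :
    (S.image Prod.swap).image Prod.swap = S := by
  rw [Finset.image_image]
  simp [Function.comp_def]

/-- classification of two-dimensional B-polytopes, up to swapping
the two coordinates. -/
theorem stmt2 (S : Finset (ℤ × ℤ)) (h : IsBPolytope2 S) :
    (IsB1Poly S ∨ IsBorderPoly S) ∨
      (IsB1Poly (S.image Prod.swap) ∨ IsBorderPoly (S.image Prod.swap)) := by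
  have hpos := h.1
  have htd := h.2.1
  have hseg := h.2.2
  have hAB : (∃ p ∈ S, p.2 = 0 ∧ 1 ≤ p.1) ∨ (∃ p ∈ S, p.1 = 0 ∧ 1 ≤ p.2) := by
    by_contra hAB
    push_neg at hAB
    obtain ⟨hA, hB⟩ := hAB
    have cls : ∀ p ∈ S, (p.1 = 0 ∧ p.2 = 0) ∨ (1 ≤ p.1 ∧ 1 ≤ p.2) := by
      intro p hp
      have h0 := hpos p hp
      have h1 := hA p hp
      have h2 := hB p hp
      omega
    have span : ∀ p ∈ S, ∀ q ∈ S, p.1 * q.2 = p.2 * q.1 := by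
      intro p hp q hq
      by_cases he : p = q
      · rw [he]; ring
      · rcases cls p hp with ⟨a, b⟩ | ⟨a, b⟩
        · rw [a, b]; ring
        · rcases cls q hq with ⟨a2, b2⟩ | ⟨a2, b2⟩
          · rw [a2, b2]; ring
          · rcases hseg p hp q hq he with hb | hs
            · rcases hb with ⟨x, y⟩ | ⟨x, y⟩ | ⟨x, y⟩ | ⟨x, y⟩ <;> omega
            · exact hs
    obtain ⟨p, hp, q, hq, r, hr, hd⟩ := htd
    exact hd (collinear3 (span p hp q hq) (span p hp r hr) (span q hq r hr))
  rcases hAB with ⟨w, hw, h2, h1⟩ | ⟨w, hw, h2, h1⟩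
  · exact main_lemma S h hw h2 h1
  · have h' := bp_swap h
    have hw' : w.swap ∈ S.image Prod.swap := Finset.mem_image_of_mem Prod.swap hw
    have hres := main_lemma _ h' hw' (by simpa using h2) (by simpa using h1)
    rw [image_swap_swap'] at hres
    tauto
end

section
/- In the classification of 2-dimensional B-polytopes, there is no point G with both coordinates at least 2: if S \subset Z^2_{\ge 0} is a 2-dimensional set such that every segment between two of its points is a B-segment or has affine span through the origin, then S contains no point (a,b) with a \ge 2 and b \ge 2. -/
/-- a 2-dimensional B-polytope contains no point with both coordinates ≥ 2. -/
theorem stmt3 (S : Finset (ℤ × ℤ))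
    (hnn : ∀ p ∈ S, 0 ≤ p.1 ∧ 0 ≤ p.2) (hdim : TwoDim S)
    (hB : ∀ p ∈ S, ∀ q ∈ S, p ≠ q → IsBSeg p q ∨ SpanThroughOrigin p q) :
    ∀ p ∈ S, ¬(2 ≤ p.1 ∧ 2 ≤ p.2) := by
  rintro p hp ⟨h1, h2⟩
  have key : ∀ q ∈ S, p.1 * q.2 = p.2 * q.1 := by
    intro q hq
    by_cases hpq : p = q
    · rw [← hpq]; ring
    · rcases hB p hp q hq hpq with hseg | hspan
      · rcases hseg with ⟨a, b⟩ | ⟨a, b⟩ | ⟨a, b⟩ | ⟨a, b⟩ <;> omega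
      · exact hspan
  obtain ⟨x, hx, y, hy, z, hz, hne⟩ := hdim
  have ex := key x hx
  have ey := key y hy
  have ez := key z hz
  apply hne
  exact mul_left_cancel₀ (show p.1 * p.1 ≠ 0 by nlinarith)
    (by linear_combination (p.1*(y.1-x.1))*ez + (p.1*(x.1-z.1))*ey + (p.1*(z.1-y.1))*ex)
end

section
/- In a 2-dimensional B-polytope S \subset Z^2_{\ge 0}, there is no pair of points (a, s), (t, b) with a \ge 2 and b \ge 2 (one point with first coordinate \ge 2 and another point with second coordinate \ge 2). -/
lemma no_fat_point (S : Finset (ℤ × ℤ)) (h : IsBPolytope2 S) (p : ℤ × ℤ) (hp : p ∈ S)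
    (h1 : 2 ≤ p.1) (h2 : 2 ≤ p.2) : False := by
  obtain ⟨hpos, ⟨x, hx, y, hy, z, hz, hnc⟩, hpair⟩ := h
  have key : ∀ q ∈ S, p.1 * q.2 = p.2 * q.1 := by
    intro q hq
    by_cases hpq : p = q
    · subst hpq; ring
    · rcases hpair p hp q hq hpq with hb | hs
      · rcases hb with ⟨h', _⟩ | ⟨_, h'⟩ | ⟨h', _⟩ | ⟨_, h'⟩ <;> omega
      · exact hs
  have kx := key x hx
  have ky := key y hy
  have kz := key z hz
  apply hnc
  have hne : p.1 ≠ 0 := by omega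
  have : p.1 * p.1 * ((y.1 - x.1) * (z.2 - x.2)) = p.1 * p.1 * ((y.2 - x.2) * (z.1 - x.1)) := by
    linear_combination ((y.1 - x.1) * p.1) * kz - ((y.1 - x.1) * p.1) * kx -
      ((z.1 - x.1) * p.1) * ky + ((z.1 - x.1) * p.1) * kx
  have := mul_left_cancel₀ (mul_ne_zero hne hne) this
  linarith

/-- a 2-dimensional B-polytope contains no pair of points `(a,s)`, `(t,b)`
with `a ≥ 2` and `b ≥ 2`. -/
theorem stmt4 (S : Finset (ℤ × ℤ)) (h : IsBPolytope2 S) :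
    ¬ ∃ p ∈ S, ∃ q ∈ S, 2 ≤ p.1 ∧ 2 ≤ q.2 := by
  rintro ⟨p, hp, q, hq, ha, hb⟩
  obtain ⟨hpos, htd, hpair⟩ := h
  have hps := (hpos p hp).2
  have hqf := (hpos q hq).1
  have hs1 : p.2 ≤ 1 := by
    by_contra hc
    exact no_fat_point S ⟨hpos, htd, hpair⟩ p hp ha (by omega)
  have ht1 : q.1 ≤ 1 := by
    by_contra hc
    exact no_fat_point S ⟨hpos, htd, hpair⟩ q hq (by omega) hb
  have hpq : p ≠ q := by
    intro h'; rw [h'] at ha; omega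
  rcases hpair p hp q hq hpq with hbseg | hspan
  · rcases hbseg with ⟨h', _⟩ | ⟨_, h'⟩ | ⟨_, h'⟩ | ⟨h', _⟩ <;> omega
  · have : p.1 * q.2 = p.2 * q.1 := hspan
    nlinarith
end

section
/- If a B-facet \tau \subset Z^n_{\ge 0} contains a unit point on a coordinate ray (i.e., the point e_i for some i), then \tau is a B_1-facet, i.e., a pyramid of height 1 with base on a coordinate hyperplane, with apex e_i. -/
/-- Cast an integer lattice point to a rational point. -/
def toQ {n : ℕ} (v : Fin n → ℤ) : Fin n → ℚ := fun i => (v i : ℚ)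

/-- An (n-1)-dimensional B-simplex in `ℤⁿ_{≥0}` (given by its `n` vertices): a pyramid of
lattice height 1 with base on a coordinate hyperplane `{x_i = 0}`. -/
def IsBSimplexN {n : ℕ} (v : Fin n → (Fin n → ℤ)) : Prop :=
  ∃ i : Fin n, ∃ a : Fin n, v a i = 1 ∧ ∀ b : Fin n, b ≠ a → v b i = 0

/-- A B-facet in `ℤⁿ_{≥0}`: an (n-1)-dimensional finite set of lattice points with
nonnegative coordinates, lying on a hyperplane `∑ aᵢxᵢ = b` with all `aᵢ > 0`, all of whose
(n-1)-dimensional simplices with vertices in it are B-simplices. -/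
def IsBFacetN {n : ℕ} (S : Finset (Fin n → ℤ)) : Prop :=
  (∀ p ∈ S, ∀ i, 0 ≤ p i) ∧
  (∃ a : Fin n → ℤ, (∀ i, 0 < a i) ∧ ∃ b : ℤ, ∀ p ∈ S, (∑ i, a i * p i) = b) ∧
  (∃ v : Fin n → (Fin n → ℤ), (∀ j, v j ∈ S) ∧ AffineIndependent ℚ (fun j => toQ (v j))) ∧
  (∀ v : Fin n → (Fin n → ℤ), (∀ j, v j ∈ S) →
    AffineIndependent ℚ (fun j => toQ (v j)) → IsBSimplexN v)

/-- if a B-facet `τ ⊂ ℤⁿ_{≥0}` contains the unit point `e_i` on a coordinate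
ray, then `τ` is a B₁-facet: a pyramid of height 1 with apex `e_i` and base on the
coordinate hyperplane `{x_i = 0}`. -/
theorem stmt5 {n : ℕ} (S : Finset (Fin n → ℤ)) (h : IsBFacetN S) (i : Fin n)
    (hi : (fun j => if j = i then (1 : ℤ) else 0) ∈ S) :
    ∀ p ∈ S, p ≠ (fun j => if j = i then (1 : ℤ) else 0) → p i = 0 := by
  obtain ⟨hpos, ⟨a, ha, b, hb⟩, -, -⟩ := h
  have hbe := hb _ hi
  simp only [mul_ite, mul_one, mul_zero, Finset.sum_ite_eq', Finset.mem_univ, if_true] at hbe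
  intro p hp hne
  have hsum := hb p hp
  have hnn : ∀ j ∈ Finset.univ, 0 ≤ a j * p j :=
    fun j _ => mul_nonneg (ha j).le (hpos p hp j)
  by_contra hpi
  have hpi1 : 1 ≤ p i := lt_of_le_of_ne (hpos p hp i) (Ne.symm hpi)
  have hle : a i * p i ≤ b := hsum ▸ Finset.single_le_sum hnn (Finset.mem_univ i)
  have hge : a i ≤ a i * p i := le_mul_of_one_le_right (ha i).le hpi1
  have heq : a i * p i = a i := le_antisymm (hbe ▸ hle) hge
  have hp1 : p i = 1 :=
    mul_left_cancel₀ (ha i).ne' (heq.trans (mul_one (a i)).symm)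
  -- other coordinates are zero
  have hrest : ∀ j, j ≠ i → p j = 0 := by
    intro j hj
    have hsplit : a i * p i + ∑ k ∈ Finset.univ.erase i, a k * p k = b :=
      (Finset.add_sum_erase _ (fun k => a k * p k) (Finset.mem_univ i)).trans hsum
    have hz : ∑ k ∈ Finset.univ.erase i, a k * p k = 0 := by
      rw [heq, hbe] at hsplit; linarith
    have hterm : a j * p j = 0 :=
      (Finset.sum_eq_zero_iff_of_nonneg (fun k _ => hnn k (Finset.mem_univ k))).mp hz j
        (Finset.mem_erase.mpr ⟨hj, Finset.mem_univ j⟩)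
    rcases mul_eq_zero.mp hterm with h' | h'
    · exact absurd h' (ha j).ne'
    · exact h'
  exact hne (funext fun j => by by_cases hj : j = i <;> simp [hj, hp1, hrest j, *])
end

section
/- The standard cross-polytope, i.e., the set of six points (1,1,0,0), (1,0,1,0), (1,0,0,1), (0,1,1,0), (0,1,0,1), (0,0,1,1) in Z^4_{\ge 0}, is a B-facet: it is 3-dimensional, lies in the hyperplane x_1+x_2+x_3+x_4 = 2 (which has positive normal covector), and every 3-dimensional simplex with vertices among these six points is a B-simplex. -/
/-- A (3-dimensional) B-simplex in `ℤ⁴_{≥0}`: a tetrahedron which is a pyramid of lattice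
height 1 whose base triangle lies in a coordinate hyperplane `{x_i = 0}`:
some coordinate `i` equals `1` at one vertex (the apex) and `0` at the other three. -/
def IsBSimplex4 (v : Fin 4 → (Fin 4 → ℤ)) : Prop :=
  ∃ i : Fin 4, ∃ a : Fin 4, v a i = 1 ∧ ∀ b : Fin 4, b ≠ a → v b i = 0

/-- A B-facet in `ℤ⁴_{≥0}`: a finite 3-dimensional set of lattice points with nonnegative
coordinates, lying on an affine hyperplane `∑ aᵢxᵢ = b` with all `aᵢ > 0` (positive normal
covector), such that every 3-dimensional simplex (affinely independent quadruple) with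
vertices in it is a B-simplex. -/
def IsBFacet (S : Finset (Fin 4 → ℤ)) : Prop :=
  (∀ p ∈ S, ∀ i, 0 ≤ p i) ∧
  (∃ a : Fin 4 → ℤ, (∀ i, 0 < a i) ∧ ∃ b : ℤ, ∀ p ∈ S, (∑ i, a i * p i) = b) ∧
  (∃ v : Fin 4 → (Fin 4 → ℤ), (∀ j, v j ∈ S) ∧ AffineIndependent ℚ (fun j => toQ (v j))) ∧
  (∀ v : Fin 4 → (Fin 4 → ℤ), (∀ j, v j ∈ S) →
    AffineIndependent ℚ (fun j => toQ (v j)) → IsBSimplex4 v)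

/-- A B₁-facet: a pyramid of height 1 with base on a coordinate hyperplane. -/
def IsB1Facet (S : Finset (Fin 4 → ℤ)) : Prop :=
  ∃ i : Fin 4, ∃ q ∈ S, q i = 1 ∧ ∀ p ∈ S, p ≠ q → p i = 0

/-- A B₂-facet: its projection on some coordinate 2-plane is the triangle
`(0,0), (1,0), (0,1)`. -/
def IsB2Facet (S : Finset (Fin 4 → ℤ)) : Prop :=
  ∃ i j : Fin 4, i ≠ j ∧
    (∀ p ∈ S, (p i = 0 ∧ p j = 0) ∨ (p i = 1 ∧ p j = 0) ∨ (p i = 0 ∧ p j = 1)) ∧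
    (∃ p ∈ S, p i = 0 ∧ p j = 0) ∧ (∃ p ∈ S, p i = 1 ∧ p j = 0) ∧
    (∃ p ∈ S, p i = 0 ∧ p j = 1)

/-- A possibly degenerate B₂-facet: its projection on some coordinate 2-plane is contained
in the triangle `(0,0), (1,0), (0,1)`. -/
def IsDegB2Facet (S : Finset (Fin 4 → ℤ)) : Prop :=
  ∃ i j : Fin 4, i ≠ j ∧
    ∀ p ∈ S, (p i = 0 ∧ p j = 0) ∨ (p i = 1 ∧ p j = 0) ∨ (p i = 0 ∧ p j = 1)

/-- A flat border: after permuting coordinates, it contains a triangle `A B C` with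
`A, B` of the form `(0,0,⋆,⋆)` and `C` of the form `(1,1,⋆,⋆)`, and all the other points
are contained in `{x₁ = 0} ∪ {x₂ = 0}`. -/
def IsFlatBorder (S : Finset (Fin 4 → ℤ)) : Prop :=
  ∃ i j : Fin 4, i ≠ j ∧ ∃ A ∈ S, ∃ B ∈ S, ∃ C ∈ S,
    AffineIndependent ℚ (fun k => toQ (![A, B, C] k)) ∧
    A i = 0 ∧ A j = 0 ∧ B i = 0 ∧ B j = 0 ∧ C i = 1 ∧ C j = 1 ∧
    ∀ p ∈ S, p = C ∨ p i = 0 ∨ p j = 0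

/-- The standard cross-polytope. -/
def crossPolytope : Finset (Fin 4 → ℤ) :=
  {![1,1,0,0], ![1,0,1,0], ![1,0,0,1], ![0,1,1,0], ![0,1,0,1], ![0,0,1,1]}

def vert : Fin 6 → (Fin 4 → ℤ) :=
  ![![1,1,0,0], ![1,0,1,0], ![1,0,0,1], ![0,1,1,0], ![0,1,0,1], ![0,0,1,1]]

set_option maxRecDepth 20000 in
set_option maxHeartbeats 2000000 in
lemma key2 : ∀ u0 u1 u2 u3 : Fin 6,
    (∃ i : Fin 4, ∃ a : Fin 4, vert (![u0,u1,u2,u3] a) i = 1 ∧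
      ∀ b : Fin 4, b ≠ a → vert (![u0,u1,u2,u3] b) i = 0) ∨
    (∃ a b : Fin 4, a ≠ b ∧ ∀ i, vert (![u0,u1,u2,u3] a) i = vert (![u0,u1,u2,u3] b) i) ∨
    (∃ a b c d : Fin 4, a ≠ b ∧ a ≠ c ∧ a ≠ d ∧ b ≠ c ∧ b ≠ d ∧ c ≠ d ∧
      ∀ i, vert (![u0,u1,u2,u3] a) i + vert (![u0,u1,u2,u3] b) i
         = vert (![u0,u1,u2,u3] c) i + vert (![u0,u1,u2,u3] d) i) := by decide

lemma mem_cross {p : Fin 4 → ℤ} (hp : p ∈ crossPolytope) : ∃ k : Fin 6, p = vert k := by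
  simp only [crossPolytope, Finset.mem_insert, Finset.mem_singleton] at hp
  rcases hp with h|h|h|h|h|h
  exacts [⟨0, h⟩, ⟨1, h⟩, ⟨2, h⟩, ⟨3, h⟩, ⟨4, h⟩, ⟨5, h⟩]

/-- the standard cross-polytope is a B-facet: it is 3-dimensional, lies on the
hyperplane `x₁+x₂+x₃+x₄ = 2` (positive normal covector), and every 3-dimensional simplex
with vertices in it is a B-simplex. -/
theorem stmt6 : IsBFacet crossPolytope := by
  refine ⟨by decide, ⟨![1,1,1,1], by decide, 2, by decide⟩, ?_, ?_⟩
  · refine ⟨![vert 0, vert 1, vert 2, vert 3], by decide, ?_⟩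
    rw [affineIndependent_iff_of_fintype]
    intro w hw hvs
    rw [Finset.univ.weightedVSub_eq_linear_combination hw] at hvs
    rw [Fin.sum_univ_four] at hw hvs
    have h0 := congrFun hvs 0
    have h1 := congrFun hvs 1
    have h2 := congrFun hvs 2
    have h3 := congrFun hvs 3
    simp only [toQ, vert, Pi.add_apply, Pi.smul_apply, smul_eq_mul, Pi.zero_apply,
      Matrix.cons_val_zero, Matrix.cons_val_one, Matrix.head_cons, Matrix.cons_val_two,
      Matrix.cons_val_three, Matrix.tail_cons] at h0 h1 h2 h3
    push_cast at h0 h1 h2 h3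
    intro i; fin_cases i <;> [show w 0 = 0; show w 1 = 0; show w 2 = 0; show w 3 = 0] <;> linarith
  · intro v hv hAI
    have hu : ∀ j, ∃ k, v j = vert k := fun j => mem_cross (hv j)
    choose u hu' using hu
    have hva : ∀ a : Fin 4, vert (![u 0, u 1, u 2, u 3] a) = v a := by
      intro a; fin_cases a <;> exact (hu' _).symm
    rcases key2 (u 0) (u 1) (u 2) (u 3) with ⟨i, a, h1, h2⟩ | ⟨a, b, hab, h⟩ |
      ⟨a, b, c, d, hab, hac, had, hbc, hbd, hcd, h⟩
    · simp only [hva] at h1 h2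
      exact ⟨i, a, h1, h2⟩
    · exfalso
      simp only [hva] at h
      have : (fun j => toQ (v j)) a = (fun j => toQ (v j)) b := by
        funext i; simp [toQ, h i]
      exact hab (hAI.injective this)
    · exfalso
      simp only [hva] at h
      set w : Fin 4 → ℚ := fun j => if j = a then 1 else if j = b then 1 else -1 with hwdef
      have hwa : w a = 1 := by simp [hwdef]
      have hwb : w b = 1 := by simp [hwdef, Ne.symm hab]
      have hwc : w c = -1 := by simp [hwdef, Ne.symm hac, Ne.symm hbc]
      have hwd : w d = -1 := by simp [hwdef, Ne.symm had, Ne.symm hbd]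
      have hna : a ∉ ({b, c, d} : Finset (Fin 4)) := by simp [hab, hac, had]
      have hnb : b ∉ ({c, d} : Finset (Fin 4)) := by simp [hbc, hbd]
      have hnc : c ∉ ({d} : Finset (Fin 4)) := by simp [hcd]
      have hsum : ∑ e ∈ ({a, b, c, d} : Finset (Fin 4)), w e = 0 := by
        rw [Finset.sum_insert hna, Finset.sum_insert hnb, Finset.sum_insert hnc,
          Finset.sum_singleton, hwa, hwb, hwc, hwd]; ring
      have hcomb : ∑ e ∈ ({a, b, c, d} : Finset (Fin 4)), w e • toQ (v e) = 0 := by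
        rw [Finset.sum_insert hna, Finset.sum_insert hnb, Finset.sum_insert hnc,
          Finset.sum_singleton, hwa, hwb, hwc, hwd]
        funext i
        have hi : ((v a i : ℚ)) + v b i = v c i + v d i := by exact_mod_cast h i
        simp only [toQ, Pi.add_apply, Pi.smul_apply, smul_eq_mul, Pi.zero_apply]
        linarith
      have := affineIndependent_iff.mp hAI _ w hsum hcomb a (by simp)
      rw [hwa] at this; norm_num at this
end

section
/- The set S = {(0,0,0,5), (0,0,1,4), (1,1,0,3), (1,0,2,2), (0,1,2,2)} \subset Z^4_{\ge 0} is 3-dimensional and lies on an affine hyperplane with positive normal covector, but is not a B-facet: there exists a 3-dimensional simplex with vertices in S that is not a pyramid of lattice height 1 with base on a coordinate hyperplane. -/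
/-- The five points of the example. -/
def exampleSet7 : Finset (Fin 4 → ℤ) :=
  {![0,0,0,5], ![0,0,1,4], ![1,1,0,3], ![1,0,2,2], ![0,1,2,2]}


def w7 : Fin 4 → (Fin 4 → ℤ) := ![![0,0,1,4], ![1,1,0,3], ![1,0,2,2], ![0,1,2,2]]

lemma w7_mem : ∀ j, w7 j ∈ exampleSet7 := by decide

lemma w7_ai : AffineIndependent ℚ (fun j => toQ (w7 j)) := by
  rw [affineIndependent_iff]
  intro s w hw hs e he
  have key : ∀ w : Fin 4 → ℚ, ∑ i, w i = 0 → ∑ i, w i • (fun j => toQ (w7 j)) i = 0 →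
      ∀ i, w i = 0 := by
    intro w hw hs
    have h0 := congrFun hs 0
    have h1 := congrFun hs 1
    have h2 := congrFun hs 2
    have h3 := congrFun hs 3
    simp [Fin.sum_univ_four, w7, toQ] at h0 h1 h2 h3 hw
    have e0 : w 0 = 0 := by linarith
    have e1 : w 1 = 0 := by linarith
    have e2 : w 2 = 0 := by linarith
    have e3 : w 3 = 0 := by linarith
    intro i; fin_cases i <;> assumption
  have := key ((↑s : Set (Fin 4)).indicator w) ?_ ?_ e
  · simpa [he] using this
  · rw [← Finset.sum_indicator_subset _ (Finset.subset_univ s)] at hw; exact hw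
  · rw [← Finset.sum_indicator_subset _ (Finset.subset_univ s)] at hs
    simpa [Set.indicator_apply, ite_smul] using hs

lemma w7_not_b : ¬ IsBSimplex4 w7 := by
  unfold IsBSimplex4 w7
  decide

/-- `exampleSet7` is 3-dimensional and lies on an affine hyperplane with
positive normal covector, but it is not a B-facet: some 3-dimensional simplex with vertices
in it is not a B-simplex. -/
theorem stmt7 :
    (∃ v : Fin 4 → (Fin 4 → ℤ), (∀ j, v j ∈ exampleSet7) ∧
      AffineIndependent ℚ (fun j => toQ (v j))) ∧
    (∃ a : Fin 4 → ℤ, (∀ i, 0 < a i) ∧ ∃ b : ℤ, ∀ p ∈ exampleSet7, (∑ i, a i * p i) = b) ∧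
    (∃ v : Fin 4 → (Fin 4 → ℤ), (∀ j, v j ∈ exampleSet7) ∧
      AffineIndependent ℚ (fun j => toQ (v j)) ∧ ¬ IsBSimplex4 v) := by
  refine ⟨⟨w7, w7_mem, w7_ai⟩, ⟨![1,1,1,1], by decide, 5, by decide⟩,
    w7, w7_mem, w7_ai, w7_not_b⟩
end

section
/- Every set of the form {(0,0,0,c_0), (0,0,a,c_1), (a,0,0,c_2), (0,1,1,c_3), (1,1,0,c_4)} \subset Z^4_{\ge 0} with a \ge 1, such that the whole set lies on an affine hyperplane with positive normal covector and the last four points lie in a common affine 2-plane, is a B-facet (a flat B-border pyramid): every 3-dimensional simplex with vertices in it is a pyramid of lattice height 1 with base on a coordinate hyperplane. -/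
lemma fin4_exists : ∀ j k l : Fin 4, ∃ m, m ≠ j ∧ m ≠ k ∧ m ≠ l := by decide
lemma fin4_cover : ∀ j k l m : Fin 4, j≠k → j≠l → j≠m → k≠l → k≠m → l≠m →
    ∀ b : Fin 4, b=j∨b=k∨b=l∨b=m := by decide
lemma aux4 {W v : Fin 4 → (Fin 4 → ℚ)}
    (hinj : Function.Injective v) (h : ∀ t, ∃ s, v t = W s)
    (hv : AffineIndependent ℚ v) : AffineIndependent ℚ W := by
  choose f hf using h
  have hfinj : Function.Injective f := fun x y hxy => hinj (by rw [hf, hf, hxy])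
  have hbij : Function.Bijective f := Finite.injective_iff_bijective.mp hfinj
  let σ := Equiv.ofBijective f hbij
  have hW : W = v ∘ σ.symm := by
    funext s
    have h1 := hf (σ.symm s)
    have h2 : f (σ.symm s) = s := σ.apply_symm_apply s
    simp only [Function.comp_apply, h1, h2]
  rw [hW]
  exact hv.comp_embedding σ.symm.toEmbedding

lemma caseX (a c0 c1 c2 c3 c4 : ℤ) (v : Fin 4 → Fin 4 → ℤ)
    (hmem : ∀ t, v t = ![0,0,0,c0] ∨ v t = ![0,0,a,c1] ∨ v t = ![a,0,0,c2] ∨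
      v t = ![0,1,1,c3] ∨ v t = ![1,1,0,c4])
    (hinj : Function.Injective v)
    (hindep : AffineIndependent ℚ (fun j => toQ (v j)))
    (hcoplanar : ¬ AffineIndependent ℚ
      (fun j => toQ ((![![0,0,a,c1], ![a,0,0,c2], ![0,1,1,c3], ![1,1,0,c4]] : Fin 4 → Fin 4 → ℤ) j)))
    (j k : Fin 4) (hjk : j ≠ k) (hj : v j = ![0,1,1,c3]) (hk : v k = ![1,1,0,c4]) :
    IsBSimplex4 v := by
  have hinjQ : Function.Injective (fun t => toQ (v t)) := hindep.injective
  by_cases hP0 : ∃ l, v l = ![0,0,0,c0]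
  · obtain ⟨l, hl⟩ := hP0
    have hlj : l ≠ j := by
      intro h; subst h
      have := congrFun (hl.symm.trans hj) 1; simp at this
    have hlk : l ≠ k := by
      intro h; subst h
      have := congrFun (hl.symm.trans hk) 1; simp at this
    obtain ⟨m, hmj, hmk, hml⟩ := fin4_exists j k l
    have hm : v m = ![0,0,a,c1] ∨ v m = ![a,0,0,c2] := by
      rcases hmem m with h|h|h|h|h
      · exact absurd (hinj (h.trans hl.symm)) hml
      · exact Or.inl h
      · exact Or.inr h
      · exact absurd (hinj (h.trans hj.symm)) hmj
      · exact absurd (hinj (h.trans hk.symm)) hmk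
    have hcov := fin4_cover j k l m hjk hlj.symm (Ne.symm hmj) hlk.symm (Ne.symm hmk) (Ne.symm hml)
    rcases hm with hm|hm
    · -- points P0,P1,P3,P4 : coordinate 0, apex k
      refine ⟨0, k, by rw [hk]; simp, fun b hb => ?_⟩
      rcases hcov b with rfl|rfl|rfl|rfl
      · rw [hj]; simp
      · exact absurd rfl hb
      · rw [hl]; simp
      · rw [hm]; simp
    · -- points P0,P2,P3,P4 : coordinate 2, apex j
      refine ⟨2, j, by rw [hj]; simp, fun b hb => ?_⟩
      rcases hcov b with rfl|rfl|rfl|rfl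
      · exact absurd rfl hb
      · rw [hk]; simp
      · rw [hl]; simp
      · rw [hm]; simp
  · exfalso
    apply hcoplanar
    refine aux4 hinjQ (fun t => ?_) hindep
    rcases hmem t with h|h|h|h|h
    · exact absurd h (not_exists.mp hP0 t)
    · exact ⟨0, by rw [h]; simp⟩
    · exact ⟨1, by rw [h]; simp⟩
    · exact ⟨2, by rw [h]; simp⟩
    · exact ⟨3, by rw [h]; simp⟩

/-- every set `{(0,0,0,c₀), (0,0,a,c₁), (a,0,0,c₂), (0,1,1,c₃), (1,1,0,c₄)}`
with `a ≥ 1`, lying on an affine hyperplane with positive normal covector and whose last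
four points lie in a common affine 2-plane, is a B-facet (a flat B-border pyramid): every
3-dimensional simplex with vertices in it is a B-simplex. -/
theorem stmt8 (a c0 c1 c2 c3 c4 : ℤ) (ha : 1 ≤ a)
    (h0 : 0 ≤ c0) (h1 : 0 ≤ c1) (h2 : 0 ≤ c2) (h3 : 0 ≤ c3) (h4 : 0 ≤ c4)
    (S : Finset (Fin 4 → ℤ))
    (hS : S = {![0,0,0,c0], ![0,0,a,c1], ![a,0,0,c2], ![0,1,1,c3], ![1,1,0,c4]})
    (hplane : ∃ w : Fin 4 → ℤ, (∀ i, 0 < w i) ∧ ∃ b : ℤ, ∀ p ∈ S, (∑ i, w i * p i) = b)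
    (hcoplanar : ¬ AffineIndependent ℚ
      (fun j => toQ ((![![0,0,a,c1], ![a,0,0,c2], ![0,1,1,c3], ![1,1,0,c4]] : Fin 4 → Fin 4 → ℤ) j))) :
    ∀ v : Fin 4 → (Fin 4 → ℤ), (∀ j, v j ∈ S) →
      AffineIndependent ℚ (fun j => toQ (v j)) → IsBSimplex4 v := by
  classical
  intro v hvS hindep
  have hmem : ∀ t, v t = ![0,0,0,c0] ∨ v t = ![0,0,a,c1] ∨ v t = ![a,0,0,c2] ∨
      v t = ![0,1,1,c3] ∨ v t = ![1,1,0,c4] := by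
    intro t
    have := hvS t
    rw [hS] at this
    simpa using this
  have hinjQ : Function.Injective (fun t => toQ (v t)) := hindep.injective
  have hinj : Function.Injective v := fun x y h => hinjQ (congrArg toQ h)
  -- some index hits P3 or P4
  have claim1 : ∃ j, v j = ![0,1,1,c3] ∨ v j = ![1,1,0,c4] := by
    by_contra hcon
    push_neg at hcon
    have hsub : (Finset.univ.image v) ⊆ {![0,0,0,c0], ![0,0,a,c1], ![a,0,0,c2]} := by
      intro x hx
      simp only [Finset.mem_image, Finset.mem_univ, true_and] at hx
      obtain ⟨t, rfl⟩ := hx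
      rcases hmem t with h|h|h|h|h
      · simp [h]
      · simp [h]
      · simp [h]
      · exact absurd h (hcon t).1
      · exact absurd h (hcon t).2
    have hc1 : (Finset.univ.image v).card = 4 := by
      rw [Finset.card_image_of_injective _ hinj]
      simp
    have hc2 : ({![0,0,0,c0], ![0,0,a,c1], ![a,0,0,c2]} : Finset (Fin 4 → ℤ)).card ≤ 3 := by
      have e1 := Finset.card_insert_le (![0,0,0,c0]) ({![0,0,a,c1], ![a,0,0,c2]} : Finset (Fin 4 → ℤ))
      have e2 := Finset.card_insert_le (![0,0,a,c1]) ({![a,0,0,c2]} : Finset (Fin 4 → ℤ))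
      have e3 : ({![a,0,0,c2]} : Finset (Fin 4 → ℤ)).card = 1 := Finset.card_singleton _
      omega
    have := Finset.card_le_card hsub
    omega
  obtain ⟨j, hj⟩ := claim1
  by_cases hex : ∃ k, k ≠ j ∧ (v k = ![0,1,1,c3] ∨ v k = ![1,1,0,c4])
  · obtain ⟨k, hkj, hk⟩ := hex
    rcases hj with hj|hj <;> rcases hk with hk|hk
    · exact absurd (hinj (hk.trans hj.symm)) hkj
    · exact caseX a c0 c1 c2 c3 c4 v hmem hinj hindep hcoplanar j k (Ne.symm hkj) hj hk
    · exact caseX a c0 c1 c2 c3 c4 v hmem hinj hindep hcoplanar k j hkj hk hj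
    · exact absurd (hinj (hk.trans hj.symm)) hkj
  · push_neg at hex
    refine ⟨1, j, ?_, fun b hb => ?_⟩
    · rcases hj with hj|hj <;> (rw [hj]; simp)
    · have := hex b hb
      rcases hmem b with h|h|h|h|h
      · rw [h]; simp
      · rw [h]; simp
      · rw [h]; simp
      · exact absurd h this.1
      · exact absurd h this.2
end

section
/- Projection lemma: let \tau \subset Z^n_{\ge 0} be a B-facet, E a coordinate subspace such that E \cap \tau is a V-face of \tau (of dimension dim(E) - 1, spanning a simplex in E whose affine span avoids the origin of E^\perp directions) but is not a B-face, i.e., there exists a (dim(E)-1)-dimensional simplex Q_E with vertices in E \cap \tau that is not a B-simplex. Then the projection p_E(\tau) of \tau along E onto the complementary coordinate subspace E^\perp is a B-polytope in E^\perp: every (n - dim(E) - 1)-dimensional simplex with vertices in p_E(\tau) is either a B-simplex or has affine span containing the origin. -/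
/-- The projection along the coordinate subspace `E` spanned by the coordinates in `I`,
onto the complementary coordinate subspace (the `I`-coordinates are set to `0`). -/
def projAlong {n : ℕ} (I : Finset (Fin n)) (p : Fin n → ℤ) : Fin n → ℤ :=
  fun j => if j ∈ I then 0 else p j

open Finset

section AffineIndependence

variable {K V ι : Type*} [Field K] [AddCommGroup V] [Module K V]

theorem zero_mem_affineSpan_of_sum_smul_eq_zero {f : ι → V} {s : Finset ι} {c : ι → K}
    (hc : ∑ i ∈ s, c i ≠ 0) (h : ∑ i ∈ s, c i • f i = 0) :
    (0 : V) ∈ affineSpan K (Set.range f) := by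
  have hw : ∑ i ∈ s, (∑ j ∈ s, c j)⁻¹ * c i = 1 := by rw [← mul_sum, inv_mul_cancel₀ hc]
  have hmem := affineCombination_mem_affineSpan hw f
  rw [affineCombination_eq_linear_combination _ _ _ hw] at hmem
  simpa only [mul_smul, ← smul_sum, h, smul_zero] using hmem

theorem AffineIndependent.zero_mem_affineSpan_of_not_linearIndependent [Fintype ι] {f : ι → V}
    (ha : AffineIndependent K f) (hl : ¬ LinearIndependent K f) :
    (0 : V) ∈ affineSpan K (Set.range f) := by
  obtain ⟨c, hc, i, hi⟩ := Fintype.not_linearIndependent_iff.1 hl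
  exact zero_mem_affineSpan_of_sum_smul_eq_zero
    (fun hsum => hi (ha.eq_zero_of_sum_eq_zero hsum hc i (mem_univ i))) hc

theorem AffineIndependent.zero_mem_affineSpan_of_card_support_lt [Fintype ι] {σ : Type*}
    {f : ι → σ → K} (ha : AffineIndependent K f) (J : Finset σ)
    (hf : ∀ i, ∀ j ∉ J, f i j = 0) (hcard : J.card < Fintype.card ι) :
    (0 : σ → K) ∈ affineSpan K (Set.range f) := by
  refine ha.zero_mem_affineSpan_of_not_linearIndependent fun hl => hcard.not_ge ?_
  have hf : f = Function.ExtendByZero.linearMap K ((↑) : J → σ) ∘ fun i j => f i j := by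
    funext i j
    change f i j = Function.extend Subtype.val (fun j : J => f i j) 0 j
    by_cases hj : j ∈ J
    · exact (Subtype.val_injective.extend_apply (fun j : J => f i j) 0 ⟨j, hj⟩).symm
    · rw [Function.extend_apply' _ _ _ fun ⟨j', hj'⟩ => hj (hj' ▸ j'.2), hf i j hj,
        Pi.zero_apply]
  rw [hf] at hl
  simpa using (hl.of_comp _).fintype_card_le_finrank

theorem AffineMap.eq_of_mem_affineSpan {W : Type*} [AddCommGroup W] [Module K W] {f : ι → V}
    (g : V →ᵃ[K] W) {b : W} (hg : ∀ i, g (f i) = b) {x : V}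
    (hx : x ∈ affineSpan K (Set.range f)) : g x = b := by
  have hmem := AffineSubspace.mem_map_of_mem g hx
  rw [AffineSubspace.map_span, ← Set.range_comp] at hmem
  refine (AffineSubspace.mem_affineSpan_singleton K W).1 (affineSpan_mono K ?_ hmem)
  rintro _ ⟨i, rfl⟩
  exact hg i

theorem affineIndependent_sum_elim_of_map {W κ : Type*} [AddCommGroup W] [Module K W]
    [Fintype ι] [Fintype κ] (π : V →ₗ[K] W) {u : ι → V} {v : κ → V}
    (hu : AffineIndependent K u) (hπu : ∀ i, π (u i) = 0) (hv : AffineIndependent K (π ∘ v))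
    (h0 : (0 : W) ∉ affineSpan K (Set.range (π ∘ v))) :
    AffineIndependent K (Sum.elim u v) := by
  rw [affineIndependent_iff_of_fintype]
  intro c hc0 hcv
  rw [weightedVSub_eq_linear_combination _ hc0, Fintype.sum_sum_type] at hcv
  rw [Fintype.sum_sum_type] at hc0
  simp only [Sum.elim_inl, Sum.elim_inr] at hcv
  have hπv : ∑ r, c (.inr r) • (π ∘ v) r = 0 := by
    simpa [hπu] using congrArg π hcv
  have hr : ∀ r, c (.inr r) = 0 := by
    have ht : ∑ r, c (.inr r) = 0 := by
      by_contra ht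
      exact h0 (zero_mem_affineSpan_of_sum_smul_eq_zero ht hπv)
    exact fun r => hv.eq_zero_of_sum_eq_zero ht hπv r (mem_univ r)
  have hl : ∀ i, c (.inl i) = 0 := by
    simp only [hr, zero_smul, sum_const_zero, add_zero] at hc0 hcv
    exact fun i => hu.eq_zero_of_sum_eq_zero hc0 hcv i (mem_univ i)
  rintro (i | r)
  exacts [hl i, hr r]

end AffineIndependence

section BFacet

variable {n : ℕ} {S : Finset (Fin n → ℤ)}

theorem IsBFacetN.exists_apex (hS : IsBFacetN S) {ι : Type*} [Fintype ι]
    (hcard : Fintype.card ι = n) {v : ι → Fin n → ℤ} (hvS : ∀ s, v s ∈ S)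
    (hv : AffineIndependent ℚ fun s => toQ (v s)) :
    ∃ i s, v s i = 1 ∧ ∀ t, t ≠ s → v t i = 0 := by
  obtain ⟨-, -, -, hsimplex⟩ := hS
  let e := Fintype.equivFinOfCardEq hcard
  obtain ⟨i, a, ha, hb⟩ :=
    hsimplex (v ∘ e.symm) (fun j => hvS _) (hv.comp_embedding e.symm.toEmbedding)
  refine ⟨i, e.symm a, ha, fun t ht => ?_⟩
  simpa using hb (e t) (by rintro rfl; simp at ht)

theorem IsBFacetN.eq_zero_of_zero_mem_affineSpan (hS : IsBFacetN S) {ι : Type*}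
    {u : ι → Fin n → ℤ} (huS : ∀ s, u s ∈ S)
    (h0 : (0 : Fin n → ℚ) ∈ affineSpan ℚ (Set.range fun s => toQ (u s))) :
    ∀ p ∈ S, p = 0 := by
  obtain ⟨hnonneg, ⟨a, ha, b, hb⟩, -⟩ := hS
  let φ : (Fin n → ℚ) →ₗ[ℚ] ℚ := ∑ j, (a j : ℚ) • LinearMap.proj j
  have hφ : ∀ p ∈ S, φ (toQ p) = b := fun p hp => by
    simp [φ, toQ, ← hb p hp]
  have hb0 : b = 0 := by
    have h := φ.toAffineMap.eq_of_mem_affineSpan (fun s => hφ _ (huS s)) h0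
    rw [LinearMap.coe_toAffineMap, map_zero] at h
    exact_mod_cast h.symm
  intro p hp
  have hterms := (sum_eq_zero_iff_of_nonneg fun j _ => mul_nonneg (ha j).le (hnonneg p hp j)).1
    (hb0 ▸ hb p hp)
  funext j
  exact (mul_eq_zero.1 (hterms j (mem_univ j))).resolve_left (ha j).ne'

theorem affineIndependent_sum_elim_of_projAlong {ι κ : Type*} [Fintype ι] [Fintype κ]
    {I : Finset (Fin n)} {u : ι → Fin n → ℤ} {v : κ → Fin n → ℤ}
    (hu : AffineIndependent ℚ fun a => toQ (u a)) (hsupp : ∀ a, ∀ j, j ∉ I → u a j = 0)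
    (hv : AffineIndependent ℚ fun r => toQ (projAlong I (v r)))
    (h0 : (0 : Fin n → ℚ) ∉ affineSpan ℚ (Set.range fun r => toQ (projAlong I (v r)))) :
    AffineIndependent ℚ fun s => toQ (Sum.elim u v s) := by
  let π : (Fin n → ℚ) →ₗ[ℚ] Fin n → ℚ :=
    LinearMap.pi fun j => if j ∈ I then 0 else LinearMap.proj j
  have hπ : ∀ q, π (toQ q) = toQ (projAlong I q) := fun q => by
    funext j; by_cases hj : j ∈ I <;> simp [π, toQ, projAlong, hj]
  have hπu : ∀ a, π (toQ (u a)) = 0 := fun a => by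
    funext j; by_cases hj : j ∈ I <;> simp [π, toQ, hj, hsupp a j]
  rw [show (fun s => toQ (Sum.elim u v s)) = Sum.elim (fun a => toQ (u a)) fun r => toQ (v r)
    from funext <| Sum.rec (fun _ => rfl) fun _ => rfl]
  exact affineIndependent_sum_elim_of_map π hu hπu
    (by simpa [Function.comp_def, hπ] using hv) (by simpa [Function.comp_def, hπ] using h0)

end BFacet

/-- projection lemma: let `τ ⊆ ℤⁿ_{≥0}` be a B-facet and `E` the coordinate
subspace spanned by the coordinates in `I` (with `k = |I| = dim E`). Suppose `E ∩ τ`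
contains a `(k-1)`-dimensional simplex `QE` that is not a B-simplex (so `E ∩ τ` is a
V-face but not a B-face). Then `p_E(τ)` is a B-polytope in `E^⊥`: every
`(n-k-1)`-dimensional simplex with vertices in `p_E(τ)` is either a B-simplex (in the
coordinates outside `I`) or has affine span containing the origin. -/
theorem stmt9 {n : ℕ} (S : Finset (Fin n → ℤ)) (hS : IsBFacetN S)
    (I : Finset (Fin n)) (k : ℕ) (hk : k = I.card)
    (QE : Fin k → (Fin n → ℤ)) (hQEmem : ∀ a, QE a ∈ S)
    (hQEsupp : ∀ a, ∀ j, j ∉ I → QE a j = 0)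
    (hQEind : AffineIndependent ℚ (fun a => toQ (QE a)))
    (hQEnotB : ¬ ∃ i ∈ I, ∃ a, QE a i = 1 ∧ ∀ b, b ≠ a → QE b i = 0) :
    ∀ w : Fin (n - k) → (Fin n → ℤ),
      (∀ a, ∃ p ∈ S, w a = projAlong I p) →
      AffineIndependent ℚ (fun a => toQ (w a)) →
      (∃ i, i ∉ I ∧ ∃ a, w a i = 1 ∧ ∀ b, b ≠ a → w b i = 0) ∨
        (0 : Fin n → ℚ) ∈ affineSpan ℚ (Set.range (fun a => toQ (w a))) := by
  intro w hw hwind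
  refine or_iff_not_imp_right.2 fun h0 => ?_
  choose p hpS hpw using hw
  obtain rfl : w = fun r => projAlong I (p r) := funext hpw
  have hkn : k ≤ n := hk ▸ (card_le_univ I).trans_eq (Fintype.card_fin n)
  obtain ⟨i, s | r, hs, hother⟩ := hS.exists_apex (v := Sum.elim QE p) (by simp; omega)
    (by rintro (a | r); exacts [hQEmem a, hpS r])
    (affineIndependent_sum_elim_of_projAlong hQEind hQEsupp hwind h0)
  · have hiI : i ∈ I := by
      by_contra hiI
      simp [hQEsupp s i hiI] at hs
    exact absurd ⟨i, hiI, s, hs, fun b hb => hother (.inl b) (by simpa)⟩ hQEnotB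
  by_cases hiI : i ∈ I
  · have hQE0 : (0 : Fin n → ℚ) ∈ affineSpan ℚ (Set.range fun a => toQ (QE a)) := by
      refine hQEind.zero_mem_affineSpan_of_card_support_lt (I.erase i) (fun a j hj => ?_)
        (by simpa [hk] using card_erase_lt_of_mem hiI)
      obtain rfl | hji := eq_or_ne j i
      · simpa [toQ] using hother (.inl a) (by simp)
      · simp [toQ, hQEsupp a j fun hjI => hj (mem_erase.2 ⟨hji, hjI⟩)]
    simp [hS.eq_zero_of_zero_mem_affineSpan hQEmem hQE0 (p r) (hpS r)] at hs
  · refine ⟨i, hiI, r, by simpa [projAlong, hiI] using hs, fun b hb => ?_⟩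
    simpa [projAlong, hiI] using hother (.inr b) (by simpa)
end

section
/- Suppose \tau \subset Z^4_{\ge 0} is a B-facet containing an internal V-triangle A_1A_2A_3 in the coordinate subspace Ox_1x_2x_3 (i.e., the triangle lies in {x_4 = 0}, all three vertices have all of x_1, x_2, x_3 involved so that no two of its points lie in a common coordinate 2-plane, and no vertex lies in a coordinate 2-plane). Then every point of \tau has x_4-coordinate at most 1. -/
lemma aux_indep (f : Fin 3 → (Fin 4 → ℚ)) (hf : AffineIndependent ℚ f)
    (h0 : ∀ k, f k 3 = 0) (p : Fin 4 → ℚ) (hp : p 3 ≠ 0) :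
    AffineIndependent ℚ ![f 0, f 1, f 2, p] := by
  rw [affineIndependent_iff_of_fintype]
  intro w hw hvs
  rw [Finset.weightedVSub_eq_linear_combination _ hw] at hvs
  have hsum : w 0 • f 0 + w 1 • f 1 + w 2 • f 2 + w 3 • p = 0 := by
    simpa [Fin.sum_univ_four] using hvs
  have h3 : w 3 * p 3 = 0 := by
    have := congrFun hsum 3
    simpa [h0] using this
  have hw3 : w 3 = 0 := by
    rcases mul_eq_zero.1 h3 with h | h
    · exact h
    · exact absurd h hp
  have hw' : ∀ k : Fin 3, w k.castSucc = 0 := by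
    have := affineIndependent_iff.1 hf Finset.univ (fun k => w k.castSucc) ?_ ?_
    · intro k; exact this k (Finset.mem_univ k)
    · have := hw
      simp [Fin.sum_univ_four] at this
      simp [Fin.sum_univ_three]
      show w 0 + w 1 + w 2 = 0
      linarith [this, hw3]
    · have : w 0 • f 0 + w 1 • f 1 + w 2 • f 2 = 0 := by
        rw [hw3] at hsum; simpa using hsum
      simpa [Fin.sum_univ_three] using this
  intro i
  fin_cases i
  · exact hw' 0
  · exact hw' 1
  · exact hw' 2
  · exact hw3

/-- let `τ ⊂ ℤ⁴_{≥0}` be a B-facet containing an internal V-triangle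
`A₁A₂A₃` in the coordinate subspace `Ox₁x₂x₃` (the triangle lies in `{x₄ = 0}`; no two of
its vertices lie in a common coordinate 2-plane, i.e. share a zero coordinate among
`x₁,x₂,x₃`; and no vertex has two zero coordinates among `x₁,x₂,x₃`). Then every point of
`τ` has `x₄`-coordinate at most 1. -/
theorem stmt13 (S : Finset (Fin 4 → ℤ)) (hS : IsBFacet S)
    (A : Fin 3 → (Fin 4 → ℤ)) (hA : ∀ k, A k ∈ S)
    (hAind : AffineIndependent ℚ (fun k => toQ (A k)))
    (hx4 : ∀ k, A k 3 = 0)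
    (hedges : ∀ k l : Fin 3, k ≠ l → ∀ m : Fin 4, m ≠ 3 → ¬(A k m = 0 ∧ A l m = 0))
    (hverts : ∀ k : Fin 3, ¬ ∃ m m' : Fin 4, m ≠ m' ∧ m ≠ 3 ∧ m' ≠ 3 ∧
      A k m = 0 ∧ A k m' = 0) :
    ∀ p ∈ S, p 3 ≤ 1 := by
  intro p hp
  by_contra hle
  push_neg at hle
  have hp2 : 2 ≤ p 3 := hle
  obtain ⟨hnn, -, -, hB⟩ := hS
  have hvS : ∀ j : Fin 4, (![A 0, A 1, A 2, p]) j ∈ S := by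
    intro j; fin_cases j <;> simp <;> first | exact hA _ | exact hp
  have hind : AffineIndependent ℚ (fun j => toQ ((![A 0, A 1, A 2, p]) j)) := by
    have h := aux_indep (fun k => toQ (A k)) hAind
      (by intro k; simp [toQ, hx4]) (toQ p)
      (by simp only [toQ]; exact_mod_cast (by omega : p 3 ≠ 0))
    convert h using 1
    funext j; fin_cases j <;> rfl
  obtain ⟨i, a, ha1, ha0⟩ := hB _ hvS hind
  by_cases hi : i = 3
  · subst hi
    fin_cases a
    · have := ha1; simp at this; have := hx4 0; omega
    · have := ha1; simp at this; have := hx4 1; omega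
    · have := ha1; simp at this; have := hx4 2; omega
    · have := ha1; simp at this; omega
  · fin_cases a
    · exact hedges 1 2 (by decide) i hi
        ⟨by simpa using ha0 1 (by decide), by simpa using ha0 2 (by decide)⟩
    · exact hedges 0 2 (by decide) i hi
        ⟨by simpa using ha0 0 (by decide), by simpa using ha0 2 (by decide)⟩
    · exact hedges 0 1 (by decide) i hi
        ⟨by simpa using ha0 0 (by decide), by simpa using ha0 1 (by decide)⟩
    · exact hedges 0 1 (by decide) i hi
        ⟨by simpa using ha0 0 (by decide), by simpa using ha0 1 (by decide)⟩
end

section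
/- Lemma (internal triangle): if a B-facet \tau \subset Z^4_{\ge 0} contains an internal V-triangle, then \tau is a B_1-facet, a (possibly degenerate) B_2-facet, or the standard cross-polytope {(1,1,0,0),(1,0,1,0),(1,0,0,1),(0,1,1,0),(0,1,0,1),(0,0,1,1)} (up to permutation of coordinates). -/
/-- `τ` contains an internal V-triangle in the coordinate hyperplane `{x_i = 0}`: an
affinely independent triple of points of `τ` with `x_i = 0` such that no two of them share
a zero coordinate other than `i`, and no single one has two zero coordinates other
than `i`. -/
def HasInternalVTriangle (S : Finset (Fin 4 → ℤ)) : Prop :=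
  ∃ i : Fin 4, ∃ A : Fin 3 → (Fin 4 → ℤ), (∀ k, A k ∈ S) ∧
    AffineIndependent ℚ (fun k => toQ (A k)) ∧
    (∀ k, A k i = 0) ∧
    (∀ k l : Fin 3, k ≠ l → ∀ m : Fin 4, m ≠ i → ¬(A k m = 0 ∧ A l m = 0)) ∧
    (∀ k : Fin 3, ¬ ∃ m m' : Fin 4, m ≠ m' ∧ m ≠ i ∧ m' ≠ i ∧ A k m = 0 ∧ A k m' = 0)

/-!
Let `A` be the internal triangle, in `{x_i = 0}`. For `p ∈ τ` off the plane of `A`, the B-simplex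
`A, p` cannot have its apex at a vertex of `A` (the other two vertices would share a zero
coordinate), so `p i = 1`; such "top" points exist since `τ` is 3-dimensional, and a single one
makes `τ` a B₁-facet. For two top points `C, C'`, at most one edge of `A` is parallel to `C' - C`;
for any other edge, the B-simplex on it and `C, C'` has its apex on the edge, at a coordinate `m`
where `C` and `C'` vanish. If all top points vanish at such an `m`, a point with `x_m ≥ 2` would
span with `C, C'` and a vertex of `A` a simplex that is not a B-simplex, so `τ` is a degenerate
B₂-facet in the coordinates `i, m`. Otherwise there are three top points `e_i + t e_s` with
distinct `s`; this pins down the vertices of `A` and the covector, and all six vertices of the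
cross-polytope lie in `τ`. The cross-polytope has an internal triangle in every coordinate
hyperplane, so every point of `τ` is a `0/1`-vector, comparable with a vertex of the
cross-polytope; positivity of the covector makes them equal.
-/

open Finset

section Covector

variable {ι : Type*} [Fintype ι] {a p q : ι → ℤ}

theorem eq_of_le_of_sum_mul_eq (ha : ∀ x, 0 < a x) (hle : p ≤ q)
    (h : ∑ x, a x * p x = ∑ x, a x * q x) : p = q := by
  by_contra hne
  obtain ⟨x, hx⟩ : ∃ x, p x < q x := by
    by_contra! hge
    exact hne (le_antisymm hle hge)
  refine h.not_lt (Finset.sum_lt_sum (fun y _ => ?_) ⟨x, mem_univ x, ?_⟩)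
  · exact mul_le_mul_of_nonneg_left (hle y) (ha y).le
  · exact mul_lt_mul_of_pos_left hx (ha x)

theorem eq_of_forall_ne_eq_of_sum_mul_eq (ha : ∀ x, 0 < a x) (s : ι)
    (hs : ∀ x, x ≠ s → p x = q x) (h : ∑ x, a x * p x = ∑ x, a x * q x) : p = q := by
  have le_of {p q : ι → ℤ} (hs : ∀ x, x ≠ s → p x = q x) (hle : p s ≤ q s) : p ≤ q := by
    intro x
    by_cases hx : x = s
    · exact hx ▸ hle
    · exact (hs x hx).le
  rcases le_total (p s) (q s) with hle | hle
  · exact eq_of_le_of_sum_mul_eq ha (le_of hs hle) h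
  · exact (eq_of_le_of_sum_mul_eq ha (le_of (fun x hx => (hs x hx).symm) hle) h.symm).symm

end Covector

section AffineIndependence

theorem affineIndependent_toQ_iff {ι : Type*} [Fintype ι] {n : ℕ} (v : ι → Fin n → ℤ) :
    AffineIndependent ℚ (fun j => toQ (v j)) ↔
      ∀ w : ι → ℚ, ∑ j, w j = 0 → (∀ x, ∑ j, w j * v j x = 0) → ∀ j, w j = 0 := by
  rw [affineIndependent_iff_of_fintype]
  refine forall_congr' fun w => forall_congr' fun hw => ?_
  rw [univ.weightedVSub_eq_linear_combination hw, funext_iff]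
  simp [toQ, Finset.sum_apply]

theorem affineIndependent_toQ_four_iff {n : ℕ} (p₀ p₁ p₂ p₃ : Fin n → ℤ) :
    AffineIndependent ℚ (fun j => toQ (![p₀, p₁, p₂, p₃] j)) ↔
      ∀ w₀ w₁ w₂ w₃ : ℚ, w₀ + w₁ + w₂ + w₃ = 0 →
        (∀ x, w₀ * p₀ x + w₁ * p₁ x + w₂ * p₂ x + w₃ * p₃ x = 0) →
        w₀ = 0 ∧ w₁ = 0 ∧ w₂ = 0 ∧ w₃ = 0 := by
  simp only [affineIndependent_toQ_iff, Fin.sum_univ_four, Fin.forall_fin_succ_pi,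
    Fin.forall_fin_zero_pi, Fin.forall_fin_succ]
  simp

theorem AffineIndependent.card_le_card_of_range_subset_affineSpan {k V P ι κ : Type*}
    [DivisionRing k] [AddCommGroup V] [Module k V] [AddTorsor V P] [Fintype ι] [Fintype κ]
    [Nonempty κ] {p : ι → P} {q : κ → P} (hp : AffineIndependent k p)
    (h : Set.range p ⊆ affineSpan k (Set.range q)) : Fintype.card ι ≤ Fintype.card κ := by
  have hdir : vectorSpan k (Set.range p) ≤ vectorSpan k (Set.range q) := by
    rw [← direction_affineSpan, ← direction_affineSpan]
    exact AffineSubspace.direction_le (affineSpan_le.mpr h)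
  calc Fintype.card ι ≤ Module.finrank k (vectorSpan k (Set.range p)) + 1 :=
        hp.card_le_finrank_succ
    _ ≤ Module.finrank k (vectorSpan k (Set.range q)) + 1 := by
        gcongr; exact Submodule.finrank_mono hdir
    _ ≤ Fintype.card κ := finrank_vectorSpan_range_add_one_le k q

theorem eq_of_parallel_to_two_edges {ι : Type*} [Fintype ι] [DecidableEq ι] {n : ℕ}
    {A : ι → Fin n → ℤ} (hA : AffineIndependent ℚ (fun k => toQ (A k))) {k k' l : ι}
    (hkl : k ≠ l) (hkk' : k ≠ k') {C C' : Fin n → ℤ} {c c' : ℚ}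
    (h : ∀ x, (C' x : ℚ) - C x = c * (A k x - A l x))
    (h' : ∀ x, (C' x : ℚ) - C x = c' * (A k' x - A l x)) : C = C' := by
  set w : ι → ℚ := c • (Pi.single k 1 - Pi.single l 1) - c' • (Pi.single k' 1 - Pi.single l 1)
  have hc : c = 0 := by
    have := (affineIndependent_toQ_iff A).1 hA w
      (by simp [w, mul_sub, Finset.sum_sub_distrib, ← Finset.mul_sum]) (fun x => ?_) k
    · simpa [w, hkl, hkk'] using this
    · simp only [w, Pi.sub_apply, Pi.smul_apply, Pi.single_apply, smul_eq_mul, mul_sub, mul_ite,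
        mul_one, mul_zero, sub_mul, ite_mul, zero_mul, sum_sub_distrib, sum_ite_eq', mem_univ,
        ↓reduceIte]
      linear_combination h' x - h x
  funext x
  have := h x
  rw [hc, zero_mul, sub_eq_zero] at this
  exact_mod_cast this.symm

end AffineIndependence

theorem fin3_exists_ne_ne : ∀ a : Fin 3, ∃ b c, b ≠ a ∧ c ≠ a ∧ b ≠ c := by decide

theorem fin3_exists_forall_ne_eq_or_eq :
    ∀ a b : Fin 3, a ≠ b → ∃ c, ∀ d, d ≠ c → d = a ∨ d = b := by
  decide

theorem fin4_exists_forall_ne_eq_or_eq_or_eq : ∀ a b c : Fin 4, a ≠ b → a ≠ c → b ≠ c →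
    ∃ d, ∀ x, x ≠ d → x = a ∨ x = b ∨ x = c := by
  decide

def IsBSimplicial (S : Finset (Fin 4 → ℤ)) : Prop :=
  ∀ v : Fin 4 → Fin 4 → ℤ, (∀ j, v j ∈ S) →
    AffineIndependent ℚ (fun j => toQ (v j)) → IsBSimplex4 v

/-- A V-triangle in `{x_i = 0}` none of whose edges is a V-edge. -/
structure IsVTriangle (S : Finset (Fin 4 → ℤ)) (i : Fin 4) (A : Fin 3 → Fin 4 → ℤ) : Prop where
  mem : ∀ k, A k ∈ S
  affineIndependent : AffineIndependent ℚ (fun k => toQ (A k))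
  apply_base : ∀ k, A k i = 0
  not_common_zero : ∀ k l, k ≠ l → ∀ m, m ≠ i → ¬(A k m = 0 ∧ A l m = 0)

structure IsInternalVTriangle (S : Finset (Fin 4 → ℤ)) (i : Fin 4) (A : Fin 3 → Fin 4 → ℤ) :
    Prop extends IsVTriangle S i A where
  eq_of_apply_eq_zero : ∀ k m m', m ≠ i → m' ≠ i → A k m = 0 → A k m' = 0 → m = m'

theorem HasInternalVTriangle.exists_isInternalVTriangle {S : Finset (Fin 4 → ℤ)}
    (h : HasInternalVTriangle S) : ∃ i A, IsInternalVTriangle S i A := by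
  obtain ⟨i, A, hmem, hind, hbase, hedge, hvertex⟩ := h
  exact ⟨i, A, ⟨hmem, hind, hbase, hedge⟩, fun k m m' hm hm' h h' =>
    by_contra fun hne => hvertex k ⟨m, m', hne, hm, hm', h, h'⟩⟩

/-- The B-simplex `A k, A l, C, C'` has its apex at `A k` or `A l`, in the coordinate `m`. -/
def EdgeApex (i : Fin 4) (A : Fin 3 → Fin 4 → ℤ) (C C' : Fin 4 → ℤ) (k l : Fin 3) : Prop :=
  ∃ m, m ≠ i ∧ C m = 0 ∧ C' m = 0 ∧ (A k m = 1 ∧ A l m = 0 ∨ A k m = 0 ∧ A l m = 1)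

theorem EdgeApex.symm {i : Fin 4} {A : Fin 3 → Fin 4 → ℤ} {C C' : Fin 4 → ℤ} {k l : Fin 3}
    (h : EdgeApex i A C C' k l) : EdgeApex i A C C' l k := by
  obtain ⟨m, hm, hC, hC', hA⟩ := h
  exact ⟨m, hm, hC, hC', by tauto⟩

def IsTopAt (i : Fin 4) (k : Fin 3) (C : Fin 4 → ℤ) : Prop :=
  C i = 1 ∧ 0 < C (i.succAbove k) ∧ ∀ k', k' ≠ k → C (i.succAbove k') = 0

def pairIndicator (u v : Fin 4) : Fin 4 → ℤ := fun x => if x = u ∨ x = v then 1 else 0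

section BFacet

variable {S : Finset (Fin 4 → ℤ)} {i : Fin 4} {A : Fin 3 → Fin 4 → ℤ} {C C' : Fin 4 → ℤ}
  {a : Fin 4 → ℤ} {b : ℤ}

theorem IsBSimplicial.exists_apex (hB : IsBSimplicial S) {p₀ p₁ p₂ p₃ : Fin 4 → ℤ}
    (h₀ : p₀ ∈ S) (h₁ : p₁ ∈ S) (h₂ : p₂ ∈ S) (h₃ : p₃ ∈ S)
    (hind : AffineIndependent ℚ (fun j => toQ (![p₀, p₁, p₂, p₃] j))) :
    ∃ m, (p₀ m = 1 ∧ p₁ m = 0 ∧ p₂ m = 0 ∧ p₃ m = 0) ∨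
      (p₁ m = 1 ∧ p₀ m = 0 ∧ p₂ m = 0 ∧ p₃ m = 0) ∨
      (p₂ m = 1 ∧ p₀ m = 0 ∧ p₁ m = 0 ∧ p₃ m = 0) ∨
      (p₃ m = 1 ∧ p₀ m = 0 ∧ p₁ m = 0 ∧ p₂ m = 0) := by
  obtain ⟨m, a, hapex, hbase⟩ := hB _ (by simp [Fin.forall_fin_succ, *]) hind
  refine ⟨m, ?_⟩
  fin_cases a <;> simp_all [Fin.forall_fin_succ]

namespace IsVTriangle

theorem apply_eq_one_or_mem_affineSpan (hB : IsBSimplicial S) (hA : IsVTriangle S i A)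
    {p : Fin 4 → ℤ} (hp : p ∈ S) :
    p i = 1 ∨ (p i = 0 ∧ toQ p ∈ affineSpan ℚ (Set.range fun k => toQ (A k))) := by
  by_cases hind : AffineIndependent ℚ (fun j => toQ (![A 0, A 1, A 2, p] j))
  · left
    have hmi {k : Fin 3} {m : Fin 4} (h : A k m = 1) : m ≠ i := by
      rintro rfl; simp [hA.apply_base] at h
    obtain ⟨m, h | h | h | h⟩ := hB.exists_apex (hA.mem 0) (hA.mem 1) (hA.mem 2) hp hind
    · exact (hA.not_common_zero 1 2 (by decide) m (hmi h.1) ⟨h.2.1, h.2.2.1⟩).elim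
    · exact (hA.not_common_zero 0 2 (by decide) m (hmi h.1) ⟨h.2.1, h.2.2.1⟩).elim
    · exact (hA.not_common_zero 0 1 (by decide) m (hmi h.1) ⟨h.2.1, h.2.2.1⟩).elim
    · by_cases hm : m = i
      · exact hm ▸ h.1
      · exact (hA.not_common_zero 0 1 (by decide) m hm ⟨h.2.1, h.2.2.1⟩).elim
  · right
    rw [affineIndependent_toQ_four_iff] at hind
    push Not at hind
    obtain ⟨w₀, w₁, w₂, w₃, hsum, hcomb, hw⟩ := hind
    have hw₃ : w₃ ≠ 0 := by
      rintro rfl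
      have := (affineIndependent_toQ_iff A).1 hA.affineIndependent ![w₀, w₁, w₂]
        (by simp only [Fin.sum_univ_three, Matrix.cons_val]; linarith)
        (fun x => by simpa [Fin.sum_univ_three] using hcomb x)
      exact hw (this 0) (this 1) (this 2) rfl
    constructor
    · have := hcomb i
      simp only [hA.apply_base, Int.cast_zero, mul_zero, zero_add] at this
      exact_mod_cast (mul_eq_zero.1 this).resolve_left hw₃
    · set w : Fin 3 → ℚ := ![-w₀ / w₃, -w₁ / w₃, -w₂ / w₃]
      have hw1 : ∑ k, w k = 1 := by
        simp only [w, Fin.sum_univ_three, Matrix.cons_val]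
        field_simp
        linarith
      have hcombo : toQ p = univ.affineCombination ℚ (fun k => toQ (A k)) w := by
        rw [univ.affineCombination_eq_linear_combination _ _ hw1]
        funext x
        simp only [toQ, Finset.sum_apply, Pi.smul_apply, smul_eq_mul, Fin.sum_univ_three,
          Matrix.cons_val, w]
        field_simp
        linear_combination hcomb x
      rw [hcombo]
      exact affineCombination_mem_affineSpan hw1 _

theorem apply_eq_zero_or_one (hB : IsBSimplicial S) (hA : IsVTriangle S i A) {p : Fin 4 → ℤ}
    (hp : p ∈ S) : p i = 0 ∨ p i = 1 :=
  (hA.apply_eq_one_or_mem_affineSpan hB hp).symm.imp_left And.left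

theorem exists_apply_eq_one (hB : IsBSimplicial S) (hA : IsVTriangle S i A)
    (hdim : ∃ v : Fin 4 → Fin 4 → ℤ, (∀ j, v j ∈ S) ∧
      AffineIndependent ℚ (fun j => toQ (v j))) :
    ∃ C ∈ S, C i = 1 := by
  by_contra! hno
  obtain ⟨v, hvS, hv⟩ := hdim
  have hspan : Set.range (fun j => toQ (v j)) ⊆ affineSpan ℚ (Set.range fun k => toQ (A k)) := by
    rintro _ ⟨j, rfl⟩
    exact ((hA.apply_eq_one_or_mem_affineSpan hB (hvS j)).resolve_left (hno _ (hvS j))).2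
  simpa using hv.card_le_card_of_range_subset_affineSpan hspan

theorem isB1Facet (hB : IsBSimplicial S) (hA : IsVTriangle S i A) (hC : C ∈ S) (hCi : C i = 1)
    (honly : ∀ p ∈ S, p i = 1 → p = C) : IsB1Facet S :=
  ⟨i, C, hC, hCi, fun p hp hpC =>
    (hA.apply_eq_zero_or_one hB hp).resolve_right fun hpi => hpC (honly p hp hpi)⟩

theorem edgeApex_or_parallel (hB : IsBSimplicial S) (hA : IsVTriangle S i A)
    (hC : C ∈ S) (hC' : C' ∈ S) (hCi : C i = 1) (hC'i : C' i = 1) {k l : Fin 3}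
    (hkl : k ≠ l) :
    EdgeApex i A C C' k l ∨ ∃ c : ℚ, ∀ x, (C' x : ℚ) - C x = c * (A k x - A l x) := by
  by_cases hind : AffineIndependent ℚ (fun j => toQ (![A k, A l, C, C'] j))
  · left
    obtain ⟨m, h | h | h | h⟩ := hB.exists_apex (hA.mem k) (hA.mem l) hC hC' hind
    · exact ⟨m, by rintro rfl; simp [hA.apply_base] at h, h.2.2.1, h.2.2.2, .inl ⟨h.1, h.2.1⟩⟩
    · exact ⟨m, by rintro rfl; simp [hA.apply_base] at h, h.2.2.1, h.2.2.2, .inr ⟨h.2.1, h.1⟩⟩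
    · exact (hA.not_common_zero k l hkl m (by rintro rfl; simp_all) ⟨h.2.1, h.2.2.1⟩).elim
    · exact (hA.not_common_zero k l hkl m (by rintro rfl; simp_all) ⟨h.2.1, h.2.2.1⟩).elim
  · right
    rw [affineIndependent_toQ_four_iff] at hind
    push Not at hind
    obtain ⟨w₀, w₁, w₂, w₃, hsum, hcomb, hw⟩ := hind
    have hw₃ : w₃ = -w₂ := by
      linarith [show w₂ + w₃ = 0 by simpa [hA.apply_base, hCi, hC'i] using hcomb i]
    have hw₁ : w₁ = -w₀ := by linarith
    subst hw₁ hw₃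
    have hw₂ : w₂ ≠ 0 := by
      intro hw₂
      have hw₀ : w₀ ≠ 0 := fun hw₀ => hw hw₀ (by simp [hw₀]) hw₂ (by simp [hw₂])
      apply hA.affineIndependent.injective.ne hkl
      funext x
      have := hcomb x
      rw [hw₂] at this
      simp only [toQ]
      exact mul_left_cancel₀ hw₀ (by linarith)
    refine ⟨w₀ / w₂, fun x => ?_⟩
    rw [div_mul_eq_mul_div, eq_div_iff hw₂]
    linear_combination -(hcomb x)

theorem exists_forall_edgeApex (hB : IsBSimplicial S) (hA : IsVTriangle S i A)
    (hC : C ∈ S) (hC' : C' ∈ S) (hCi : C i = 1) (hC'i : C' i = 1) (hne : C ≠ C') :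
    ∃ v, ∀ k, k ≠ v → EdgeApex i A C C' k v := by
  have edge {k l : Fin 3} (hkl : k ≠ l) := hA.edgeApex_or_parallel hB hC hC' hCi hC'i hkl
  have flip {k l : Fin 3} {c : ℚ} (h : ∀ x, (C' x : ℚ) - C x = c * (A k x - A l x)) :
      ∀ x, (C' x : ℚ) - C x = -c * (A l x - A k x) := fun x => by rw [h x]; ring
  have parallel {k k' l : Fin 3} (hkl : k ≠ l) (hkk' : k ≠ k') {c c' : ℚ}
      (h : ∀ x, (C' x : ℚ) - C x = c * (A k x - A l x))
      (h' : ∀ x, (C' x : ℚ) - C x = c' * (A k' x - A l x)) : False :=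
    hne (eq_of_parallel_to_two_edges hA.affineIndependent hkl hkk' h h')
  rcases edge (show (1 : Fin 3) ≠ 0 by decide) with h10 | ⟨c10, p10⟩
  · rcases edge (show (2 : Fin 3) ≠ 0 by decide) with h20 | ⟨c20, p20⟩
    · exact ⟨0, fun k hk => by fin_cases k <;> first | exact absurd rfl hk | assumption⟩
    rcases edge (show (1 : Fin 3) ≠ 2 by decide) with h12 | ⟨c12, p12⟩
    · exact ⟨1, fun k hk => by
        fin_cases k <;> first | exact absurd rfl hk | exact h10.symm | exact h12.symm⟩
    · exact (parallel (by decide) (by decide) (flip p20) p12).elim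
  · rcases edge (show (2 : Fin 3) ≠ 0 by decide) with h20 | ⟨c20, p20⟩
    · rcases edge (show (2 : Fin 3) ≠ 1 by decide) with h21 | ⟨c21, p21⟩
      · exact ⟨2, fun k hk => by
          fin_cases k <;> first | exact absurd rfl hk | exact h20.symm | exact h21.symm⟩
      · exact (parallel (by decide) (by decide) p21 (flip p10)).elim
    · exact (parallel (by decide) (by decide) p10 p20).elim

theorem exists_common_zero (hB : IsBSimplicial S) (hA : IsVTriangle S i A)
    (hC : C ∈ S) (hC' : C' ∈ S) (hCi : C i = 1) (hC'i : C' i = 1) (hne : C ≠ C') :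
    ∃ m l, m ≠ i ∧ C m = 0 ∧ C' m = 0 ∧ A l m = 0 := by
  obtain ⟨v, hv⟩ := hA.exists_forall_edgeApex hB hC hC' hCi hC'i hne
  obtain ⟨k, hk⟩ := exists_ne v
  obtain ⟨m, hm, hCm, hC'm, ⟨-, hAv⟩ | ⟨hAk, -⟩⟩ := hv k hk
  · exact ⟨m, v, hm, hCm, hC'm, hAv⟩
  · exact ⟨m, k, hm, hCm, hC'm, hAk⟩

theorem exists_vertex_apply_eq_zero (hB : IsBSimplicial S) (hA : IsVTriangle S i A)
    (htops : ∀ k, ∃ C ∈ S, IsTopAt i k C) (k : Fin 3) :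
    ∃ v, A v (i.succAbove k) = 0 ∧ ∀ l, l ≠ v → A l (i.succAbove k) = 1 := by
  obtain ⟨k', k'', hk', hk'', hk'k''⟩ := fin3_exists_ne_ne k
  obtain ⟨C', hC', hC'i, hC'pos, hC'zero⟩ := htops k'
  obtain ⟨C'', hC'', hC''i, hC''pos, hC''zero⟩ := htops k''
  have hne : C' ≠ C'' := by
    rintro rfl
    exact hC''pos.ne' (hC'zero k'' (Ne.symm hk'k''))
  obtain ⟨v, hv⟩ := hA.exists_forall_edgeApex hB hC' hC'' hC'i hC''i hne
  have hedge : ∀ l, l ≠ v → A l (i.succAbove k) = 1 ∧ A v (i.succAbove k) = 0 ∨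
      A l (i.succAbove k) = 0 ∧ A v (i.succAbove k) = 1 := by
    intro l hl
    obtain ⟨m, hm, hC'm, hC''m, hAm⟩ := hv l hl
    obtain ⟨j, rfl⟩ := Fin.exists_succAbove_eq hm
    have hj' : j ≠ k' := by rintro rfl; exact hC'pos.ne' hC'm
    have hj'' : j ≠ k'' := by rintro rfl; exact hC''pos.ne' hC''m
    obtain rfl : j = k := by omega
    exact hAm
  obtain ⟨l₁, l₂, hl₁, hl₂, hl₁₂⟩ := fin3_exists_ne_ne v
  have hv₀ : A v (i.succAbove k) = 0 := by
    rcases hedge l₁ hl₁ with h₁ | h₁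
    · exact h₁.2
    rcases hedge l₂ hl₂ with h₂ | h₂
    · exact h₂.2
    exact (hA.not_common_zero l₁ l₂ hl₁₂ _ (Fin.succAbove_ne i k) ⟨h₁.1, h₂.1⟩).elim
  refine ⟨v, hv₀, fun l hl => ?_⟩
  rcases hedge l hl with h | h
  · exact h.1
  · simp [hv₀] at h

end IsVTriangle

namespace IsInternalVTriangle

theorem apply_le_one_of_top_apply_eq_zero (ha : ∀ x, 0 < a x)
    (hab : ∀ p ∈ S, ∑ x, a x * p x = b) (hB : IsBSimplicial S) (hA : IsInternalVTriangle S i A)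
    {l : Fin 3} {m : Fin 4} (hmi : m ≠ i) (hAm : A l m = 0)
    (hC : C ∈ S) (hC' : C' ∈ S) (hCi : C i = 1) (hC'i : C' i = 1) (hne : C ≠ C')
    (hCm : C m = 0) (hC'm : C' m = 0) {p : Fin 4 → ℤ} (hp : p ∈ S) (hpi : p i = 0) :
    p m ≤ 1 := by
  by_contra! hpm
  have hind : AffineIndependent ℚ (fun j => toQ (![p, A l, C, C'] j)) := by
    rw [affineIndependent_toQ_four_iff]
    intro w₀ w₁ w₂ w₃ hsum hcomb
    have hw₀ : w₀ = 0 := by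
      have := hcomb m
      simp only [hAm, hCm, hC'm, Int.cast_zero, mul_zero, add_zero] at this
      exact (mul_eq_zero.1 this).resolve_right (by exact_mod_cast (by omega : p m ≠ 0))
    have hw₃ : w₃ = -w₂ := by
      linarith [show w₂ + w₃ = 0 by simpa [hpi, hA.apply_base, hCi, hC'i] using hcomb i]
    subst hw₀ hw₃
    obtain rfl : w₁ = 0 := by linarith
    suffices w₂ = 0 by simp [this]
    by_contra hw₂
    refine hne (funext fun x => ?_)
    have := hcomb x
    exact_mod_cast mul_left_cancel₀ hw₂ (show w₂ * (C x : ℚ) = w₂ * C' x by linarith)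
  have hzero (m' : Fin 4) (hm' : m' ≠ i) (h : A l m' = 0) : m' = m :=
    hA.eq_of_apply_eq_zero l m' m hm' hmi h hAm
  obtain ⟨m', h | h | h | h⟩ := hB.exists_apex hp (hA.mem l) hC hC' hind
  · obtain rfl | hm' := eq_or_ne m' i
    · simp [hpi] at h
    · rw [hzero m' hm' h.2.1] at h; omega
  · have hm'i : m' ≠ i := by rintro rfl; simp [hA.apply_base] at h
    have hm'm : m' ≠ m := by rintro rfl; simp [hAm] at h
    obtain ⟨d, hd⟩ :=
      fin4_exists_forall_ne_eq_or_eq_or_eq i m m' hmi.symm hm'i.symm hm'm.symm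
    refine hne (eq_of_forall_ne_eq_of_sum_mul_eq ha d (fun x hx => ?_)
      ((hab C hC).trans (hab C' hC').symm))
    rcases hd x hx with rfl | rfl | rfl
    · rw [hCi, hC'i]
    · rw [hCm, hC'm]
    · rw [h.2.2.1, h.2.2.2]
  · obtain rfl | hm' := eq_or_ne m' i
    · simp [hC'i] at h
    · rw [hzero m' hm' h.2.2.1] at h; simp [hCm] at h
  · obtain rfl | hm' := eq_or_ne m' i
    · simp [hCi] at h
    · rw [hzero m' hm' h.2.2.1] at h; simp [hC'm] at h

theorem isDegB2Facet_of_top_apply_eq_zero (hpos : ∀ p ∈ S, ∀ x, 0 ≤ p x)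
    (ha : ∀ x, 0 < a x) (hab : ∀ p ∈ S, ∑ x, a x * p x = b) (hB : IsBSimplicial S)
    (hA : IsInternalVTriangle S i A) {l : Fin 3} {m : Fin 4} (hmi : m ≠ i) (hAm : A l m = 0)
    (hC : C ∈ S) (hC' : C' ∈ S) (hCi : C i = 1) (hC'i : C' i = 1) (hne : C ≠ C')
    (htop : ∀ p ∈ S, p i = 1 → p m = 0) : IsDegB2Facet S := by
  refine ⟨i, m, hmi.symm, fun p hp => ?_⟩
  rcases hA.apply_eq_zero_or_one hB hp with hpi | hpi
  · have := hA.apply_le_one_of_top_apply_eq_zero ha hab hB hmi hAm hC hC' hCi hC'i hne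
      (htop C hC hCi) (htop C' hC' hC'i) hp hpi
    have := hpos p hp m
    omega
  · exact .inr (.inl ⟨hpi, htop p hp hpi⟩)

theorem isDegB2Facet_of_two_tops (hpos : ∀ p ∈ S, ∀ x, 0 ≤ p x) (ha : ∀ x, 0 < a x)
    (hab : ∀ p ∈ S, ∑ x, a x * p x = b) (hB : IsBSimplicial S) (hA : IsInternalVTriangle S i A)
    (hC : C ∈ S) (hC' : C' ∈ S) (hCi : C i = 1) (hC'i : C' i = 1) (hne : C ≠ C')
    (honly : ∀ p ∈ S, p i = 1 → p = C ∨ p = C') : IsDegB2Facet S := by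
  obtain ⟨m, l, hmi, hCm, hC'm, hAm⟩ := hA.exists_common_zero hB hC hC' hCi hC'i hne
  refine hA.isDegB2Facet_of_top_apply_eq_zero hpos ha hab hB hmi hAm hC hC' hCi hC'i hne
    fun p hp hpi => ?_
  rcases honly p hp hpi with rfl | rfl <;> assumption

theorem isDegB2Facet_of_top_subsingleton_zeros (hpos : ∀ p ∈ S, ∀ x, 0 ≤ p x)
    (ha : ∀ x, 0 < a x) (hab : ∀ p ∈ S, ∑ x, a x * p x = b) (hB : IsBSimplicial S)
    (hA : IsInternalVTriangle S i A) (hC : C ∈ S) (hC' : C' ∈ S) (hCi : C i = 1)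
    (hC'i : C' i = 1) (hne : C ≠ C')
    (hzero : ∀ m m', m ≠ i → m' ≠ i → C m = 0 → C m' = 0 → m = m') : IsDegB2Facet S := by
  obtain ⟨m, l, hmi, hCm, -, hAm⟩ := hA.exists_common_zero hB hC hC' hCi hC'i hne
  refine hA.isDegB2Facet_of_top_apply_eq_zero hpos ha hab hB hmi hAm hC hC' hCi hC'i hne
    fun p hp hpi => ?_
  obtain rfl | hpC := eq_or_ne p C
  · exact hCm
  obtain ⟨m', -, hm'i, hCm', hpm', -⟩ := hA.exists_common_zero hB hC hp hCi hpi hpC.symm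
  rwa [hzero m' m hm'i hmi hCm' hCm] at hpm'

end IsInternalVTriangle

theorem exists_pairIndicator_of_mem_crossPolytope : ∀ i : Fin 4, ∀ q ∈ crossPolytope,
    ∃ k : Fin 3, q = pairIndicator i (i.succAbove k) ∨ q = 1 - pairIndicator i (i.succAbove k) := by
  decide

theorem pairIndicator_mem_crossPolytope : ∀ (i : Fin 4) (k : Fin 3),
    pairIndicator i (i.succAbove k) ∈ crossPolytope ∧
      1 - pairIndicator i (i.succAbove k) ∈ crossPolytope := by
  decide

theorem exists_mem_crossPolytope_le_or_le {p : Fin 4 → ℤ} (hp : ∀ x, p x = 0 ∨ p x = 1) :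
    ∃ q ∈ crossPolytope, p ≤ q ∨ q ≤ p := by
  have key : ∀ c : Fin 4 → Bool, ∃ q ∈ crossPolytope,
      (∀ x, (if c x then 1 else 0 : ℤ) ≤ q x) ∨ ∀ x, q x ≤ (if c x then 1 else 0 : ℤ) := by
    decide
  have hpc : p = fun x => if p x = 1 then 1 else 0 :=
    funext fun x => by rcases hp x with h | h <;> simp [h]
  rw [hpc]
  simpa [Pi.le_def] using key fun x => decide (p x = 1)

theorem isVTriangle_of_crossPolytope_subset (hS : crossPolytope ⊆ S) (j : Fin 4) :
    IsVTriangle S j (fun k => 1 - pairIndicator j (j.succAbove k)) where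
  mem k := hS (pairIndicator_mem_crossPolytope j k).2
  affineIndependent := by
    rw [affineIndependent_toQ_iff]
    intro w hsum hcomb k
    have := hcomb (j.succAbove k)
    simp only [Fin.sum_univ_three] at hsum
    fin_cases k <;> simp [Fin.sum_univ_three, pairIndicator, Fin.succAbove_ne] at this ⊢ <;>
      linarith
  apply_base k := by simp [pairIndicator]
  not_common_zero := by
    revert j
    decide

theorem eq_crossPolytope_of_crossPolytope_subset (ha : ∀ x, 0 < a x)
    (hab : ∀ p ∈ S, ∑ x, a x * p x = b) (hB : IsBSimplicial S) (hS : crossPolytope ⊆ S) :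
    S = crossPolytope := by
  refine Finset.Subset.antisymm (fun p hp => ?_) hS
  obtain ⟨q, hq, hpq | hqp⟩ := exists_mem_crossPolytope_le_or_le (p := p) fun x =>
    (isVTriangle_of_crossPolytope_subset hS x).apply_eq_zero_or_one hB hp
  · rwa [eq_of_le_of_sum_mul_eq ha hpq ((hab p hp).trans (hab q (hS hq)).symm)]
  · rwa [← eq_of_le_of_sum_mul_eq ha hqp ((hab q (hS hq)).trans (hab p hp).symm)]

theorem exists_isTopAt (hpos : ∀ p ∈ S, ∀ x, 0 ≤ p x) (ha : ∀ x, 0 < a x)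
    (hab : ∀ p ∈ S, ∑ x, a x * p x = b) {q : Fin 4 → ℤ} (hq : q ∈ S) (hqi : q i = 1)
    (hC : C ∈ S) (hCi : C i = 1) (hne : q ≠ C) {m m' : Fin 4} (hm : m ≠ i) (hm' : m' ≠ i)
    (hqm : q m = 0) (hqm' : q m' = 0) (hmm' : m ≠ m') : ∃ k, IsTopAt i k q := by
  obtain ⟨k₁, rfl⟩ := Fin.exists_succAbove_eq hm
  obtain ⟨k₂, rfl⟩ := Fin.exists_succAbove_eq hm'
  obtain ⟨k, hk⟩ := fin3_exists_forall_ne_eq_or_eq k₁ k₂ (fun h => hmm' (h ▸ rfl))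
  have hzero (k' : Fin 3) (hk' : k' ≠ k) : q (i.succAbove k') = 0 := by
    rcases hk k' hk' with rfl | rfl <;> assumption
  refine ⟨k, hqi, ?_, hzero⟩
  by_contra! hle
  refine hne (eq_of_le_of_sum_mul_eq ha (fun x => ?_) ((hab q hq).trans (hab C hC).symm))
  rcases Fin.eq_self_or_eq_succAbove i x with rfl | ⟨j, rfl⟩
  · rw [hqi, hCi]
  · have hqj : q (i.succAbove j) = 0 := by
      obtain rfl | hj := eq_or_ne j k
      · exact le_antisymm hle (hpos q hq _)
      · exact hzero j hj
    rw [hqj]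
    exact hpos C hC _

theorem IsTopAt.eq (ha : ∀ x, 0 < a x) (hab : ∀ p ∈ S, ∑ x, a x * p x = b) {k : Fin 3}
    (hC : C ∈ S) (hC' : C' ∈ S) (h : IsTopAt i k C) (h' : IsTopAt i k C') : C = C' := by
  refine eq_of_forall_ne_eq_of_sum_mul_eq ha (i.succAbove k) (fun x hx => ?_)
    ((hab C hC).trans (hab C' hC').symm)
  rcases Fin.eq_self_or_eq_succAbove i x with rfl | ⟨j, rfl⟩
  · rw [h.1, h'.1]
  · have hjk : j ≠ k := by rintro rfl; exact hx rfl
    rw [h.2.2 j hjk, h'.2.2 j hjk]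

theorem IsTopAt.eq_pairIndicator (ha : ∀ x, 0 < a x) (hab : ∀ p ∈ S, ∑ x, a x * p x = b)
    (hbot : ∀ k, 1 - pairIndicator i (i.succAbove k) ∈ S) {k : Fin 3} (hC : C ∈ S)
    (h : IsTopAt i k C) : C = pairIndicator i (i.succAbove k) := by
  have e₀ := hab _ (hbot 0)
  have e₁ := hab _ (hbot 1)
  have e₂ := hab _ (hbot 2)
  simp only [Pi.sub_apply, Pi.one_apply, pairIndicator, Fin.sum_univ_succAbove _ i,
    Fin.ne_succAbove, Fin.succAbove_ne, Fin.succAbove_inj, or_false, false_or, ↓reduceIte,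
    Fin.sum_univ_three, Fin.reduceEq, sub_self, sub_zero, mul_zero, mul_one, zero_add, add_zero]
    at e₀ e₁ e₂
  have hc (j : Fin 3) : 2 * a (i.succAbove j) = b := by
    fin_cases j <;> simp only [Fin.zero_eta, Fin.mk_one, Fin.reduceFinMk] <;> linarith
  have hCsum := hab C hC
  rw [Fin.sum_univ_succAbove _ i, Finset.sum_eq_single k
    (fun j _ hj => by rw [h.2.2 j hj, mul_zero]) (by simp), h.1] at hCsum
  have hCk : C (i.succAbove k) = 1 := by nlinarith [ha i, ha (i.succAbove k), h.2.1, hc k]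
  funext x
  rcases Fin.eq_self_or_eq_succAbove i x with rfl | ⟨j, rfl⟩
  · simp [pairIndicator, h.1]
  · obtain rfl | hj := eq_or_ne j k
    · simp [pairIndicator, hCk]
    · simp [pairIndicator, h.2.2 j hj, Fin.succAbove_ne, hj]

theorem forall_exists_isTopAt (hpos : ∀ p ∈ S, ∀ x, 0 ≤ p x) (ha : ∀ x, 0 < a x)
    (hab : ∀ p ∈ S, ∑ x, a x * p x = b)
    (hzeros : ∀ C ∈ S, C i = 1 → ∃ m m', m ≠ i ∧ m' ≠ i ∧ C m = 0 ∧ C m' = 0 ∧ m ≠ m')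
    {C₀ C₁ C₂ : Fin 4 → ℤ} (hC₀ : C₀ ∈ S) (hC₁ : C₁ ∈ S) (hC₂ : C₂ ∈ S) (hC₀i : C₀ i = 1)
    (hC₁i : C₁ i = 1) (hC₂i : C₂ i = 1) (h₁₀ : C₁ ≠ C₀) (h₂₀ : C₂ ≠ C₀) (h₂₁ : C₂ ≠ C₁) :
    ∀ k, ∃ C ∈ S, IsTopAt i k C := by
  have top {C C'} (hC : C ∈ S) (hCi : C i = 1) (hC' : C' ∈ S) (hC'i : C' i = 1)
      (hne : C ≠ C') : ∃ k, IsTopAt i k C := by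
    obtain ⟨m, m', hm, hm', hCm, hCm', hmm'⟩ := hzeros C hC hCi
    exact exists_isTopAt hpos ha hab hC hCi hC' hC'i hne hm hm' hCm hCm' hmm'
  obtain ⟨k₀, h₀⟩ := top hC₀ hC₀i hC₁ hC₁i h₁₀.symm
  obtain ⟨k₁, h₁⟩ := top hC₁ hC₁i hC₀ hC₀i h₁₀
  obtain ⟨k₂, h₂⟩ := top hC₂ hC₂i hC₀ hC₀i h₂₀
  have distinct {C C' k k'} (hC : C ∈ S) (hC' : C' ∈ S) (h : IsTopAt i k C)
      (h' : IsTopAt i k' C') (hne : C ≠ C') : k ≠ k' := by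
    rintro rfl
    exact hne (h.eq ha hab hC hC' h')
  have := distinct hC₁ hC₀ h₁ h₀ h₁₀
  have := distinct hC₂ hC₀ h₂ h₀ h₂₀
  have := distinct hC₂ hC₁ h₂ h₁ h₂₁
  intro k
  by_cases hk₀ : k = k₀
  · exact ⟨C₀, hC₀, hk₀ ▸ h₀⟩
  by_cases hk₁ : k = k₁
  · exact ⟨C₁, hC₁, hk₁ ▸ h₁⟩
  obtain rfl : k = k₂ := by omega
  exact ⟨C₂, hC₂, h₂⟩

namespace IsInternalVTriangle

theorem eq_one_sub_pairIndicator (hA : IsInternalVTriangle S i A) {τ : Fin 3 → Fin 3}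
    (hτ : ∀ k, A (τ k) (i.succAbove k) = 0 ∧ ∀ l, l ≠ τ k → A l (i.succAbove k) = 1)
    (k : Fin 3) : A (τ k) = 1 - pairIndicator i (i.succAbove k) := by
  funext x
  rcases Fin.eq_self_or_eq_succAbove i x with rfl | ⟨j, rfl⟩
  · simp [pairIndicator, hA.apply_base]
  obtain rfl | hjk := eq_or_ne j k
  · simp [pairIndicator, (hτ j).1]
  have hτjk : τ k ≠ τ j := fun h => hjk <| Fin.succAbove_right_injective <|
    hA.eq_of_apply_eq_zero (τ k) _ _ (Fin.succAbove_ne i j) (Fin.succAbove_ne i k)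
      (h ▸ (hτ j).1) (hτ k).1
  simp [pairIndicator, (hτ j).2 _ hτjk, Fin.succAbove_ne, hjk]

theorem crossPolytope_subset (ha : ∀ x, 0 < a x) (hab : ∀ p ∈ S, ∑ x, a x * p x = b)
    (hB : IsBSimplicial S) (hA : IsInternalVTriangle S i A)
    (htops : ∀ k, ∃ C ∈ S, IsTopAt i k C) : crossPolytope ⊆ S := by
  choose τ hτ using hA.exists_vertex_apply_eq_zero hB htops
  have hbot (k : Fin 3) : 1 - pairIndicator i (i.succAbove k) ∈ S :=
    hA.eq_one_sub_pairIndicator hτ k ▸ hA.mem (τ k)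
  intro q hq
  obtain ⟨k, rfl | rfl⟩ := exists_pairIndicator_of_mem_crossPolytope i q hq
  · obtain ⟨C, hC, hCk⟩ := htops k
    rwa [← hCk.eq_pairIndicator ha hab hbot hC]
  · exact hbot k

end IsInternalVTriangle

end BFacet

/-- internal triangle lemma: if a B-facet `τ ⊂ ℤ⁴_{≥0}` contains an
internal V-triangle, then `τ` is a B₁-facet, a (possibly degenerate) B₂-facet, or the
standard cross-polytope. -/
theorem stmt14 (S : Finset (Fin 4 → ℤ)) (hS : IsBFacet S)
    (h : HasInternalVTriangle S) :
    IsB1Facet S ∨ IsDegB2Facet S ∨ S = crossPolytope := by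
  obtain ⟨hpos, ⟨a, ha, b, hab⟩, hdim, hB⟩ := hS
  obtain ⟨i, A, hA⟩ := h.exists_isInternalVTriangle
  obtain ⟨C₀, hC₀, hC₀i⟩ := hA.exists_apply_eq_one hB hdim
  by_cases h₁ : ∃ C₁ ∈ S, C₁ i = 1 ∧ C₁ ≠ C₀
  swap
  · push Not at h₁
    exact .inl (hA.isB1Facet hB hC₀ hC₀i h₁)
  obtain ⟨C₁, hC₁, hC₁i, h₁₀⟩ := h₁
  by_cases h₂ : ∃ C₂ ∈ S, C₂ i = 1 ∧ C₂ ≠ C₀ ∧ C₂ ≠ C₁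
  swap
  · push Not at h₂
    exact .inr (.inl (hA.isDegB2Facet_of_two_tops hpos ha hab hB hC₀ hC₁ hC₀i hC₁i
      h₁₀.symm fun p hp hpi => (em (p = C₀)).imp_right (h₂ p hp hpi)))
  obtain ⟨C₂, hC₂, hC₂i, h₂₀, h₂₁⟩ := h₂
  by_cases h₃ : ∃ C ∈ S, C i = 1 ∧ ∀ m m', m ≠ i → m' ≠ i → C m = 0 → C m' = 0 → m = m'
  · obtain ⟨C, hC, hCi, hzero⟩ := h₃
    obtain ⟨C', hC', hC'i, hne⟩ : ∃ C' ∈ S, C' i = 1 ∧ C ≠ C' := by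
      by_cases hC₀C : C = C₀
      · exact ⟨C₁, hC₁, hC₁i, hC₀C ▸ h₁₀.symm⟩
      · exact ⟨C₀, hC₀, hC₀i, hC₀C⟩
    exact .inr (.inl (hA.isDegB2Facet_of_top_subsingleton_zeros hpos ha hab hB hC hC' hCi hC'i
      hne hzero))
  push Not at h₃
  have htops := forall_exists_isTopAt hpos ha hab h₃ hC₀ hC₁ hC₂ hC₀i hC₁i hC₂i h₁₀ h₂₀ h₂₁
  exact .inr (.inr (eq_crossPolytope_of_crossPolytope_subset ha hab hB
    (hA.crossPolytope_subset ha hab hB htops)))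
end

section
/- Lemma (pyramid with apex on a coordinate ray): if a B-facet \tau \subset Z^4_{\ge 0} is a pyramid whose apex lies on a coordinate ray (point of the form (0,0,0,c) up to permutation of coordinates, c \ge 2) with a 2-dimensional base, then \tau is a B_1-facet, a B_2-facet, or a flat B-border pyramid, i.e., up to permutation of coordinates a set of 5 points {(0,0,0,*), (0,0,a,*), (a,0,0,*), (0,1,1,*), (1,1,0,*)} whose last four points lie in a common affine 2-plane. -/
/-- A flat B-border pyramid: up to a permutation of coordinates, a set of 5 points
`{(0,0,0,⋆), (0,0,a,⋆), (a,0,0,⋆), (0,1,1,⋆), (1,1,0,⋆)}` whose last four points lie in a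
common affine 2-plane. -/
def IsFlatBBorderPyramid (S : Finset (Fin 4 → ℤ)) : Prop :=
  ∃ σ : Equiv.Perm (Fin 4), ∃ a c0 c1 c2 c3 c4 : ℤ, 1 ≤ a ∧
    S.image (fun p => p ∘ σ) =
      {![0,0,0,c0], ![0,0,a,c1], ![a,0,0,c2], ![0,1,1,c3], ![1,1,0,c4]} ∧
    ¬ AffineIndependent ℚ (fun j => toQ
      ((![![0,0,a,c1], ![a,0,0,c2], ![0,1,1,c3], ![1,1,0,c4]] : Fin 4 → Fin 4 → ℤ) j))

/-!
Forgetting the coordinate `i` of the apex ray is injective on the hyperplane of `τ` and preserves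
affine (in)dependence there. It sends `Q` to the origin and the planar base `τ \ {Q}` to a planar
set `B ⊆ ℤ³_{≥0}`. A non-collinear triangle of `B` spans a tetrahedron of `τ` together with `Q`
(otherwise `τ` would be flat); since `Q` vanishes off `i` and has `i`-th coordinate `≥ 2`, the
B-simplex condition then says that some coordinate of `ℤ³` takes the values `1, 0, 0` on the
triangle.

The classification of such planar `B` is a case analysis on the levels of a coordinate `z`
carrying these values, driven by two facts: two distinct points of a level together with a point
off it are never collinear, and every point of `B` satisfies the affine equation of any
non-collinear triangle of `B`. It ends with a coordinate that is `1` at a single point and `0`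
elsewhere, with `B` lying over the unit triangle of a coordinate plane, or with
`B = {(0,0,a), (a,0,0), (0,1,1), (1,1,0)}` up to permuting coordinates; these three shapes lift to
the three alternatives.
-/

open Finset

/-! ### Affine dependence -/

section Weights

variable {K : Type*} [Field K] {ι κ : Type*} [Fintype ι]

theorem not_affineIndependent_iff_weights (p : ι → κ → K) :
    ¬ AffineIndependent K p ↔
      ∃ w : ι → K, w ≠ 0 ∧ ∑ j, w j = 0 ∧ ∀ k, ∑ j, w j * p j k = 0 := by
  classical
  rw [affineIndependent_iff]
  constructor
  · intro h
    push Not at h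
    obtain ⟨s, w, hsum, hcomb, j, hj, hwj⟩ := h
    refine ⟨fun j => if j ∈ s then w j else 0, fun h0 => hwj (by simpa [hj] using congrFun h0 j),
      by simpa [Finset.sum_ite_mem] using hsum, fun k => ?_⟩
    have := congrFun hcomb k
    simpa [Finset.sum_apply, ite_mul, Finset.sum_ite_mem] using this
  · rintro ⟨w, hw0, hsum, hcomb⟩ h
    refine hw0 (funext fun j => h univ w hsum (funext fun k => ?_) j (mem_univ j))
    simpa [Finset.sum_apply] using hcomb k

theorem not_affineIndependent_three_iff (a b c : κ → K) :
    ¬ AffineIndependent K ![a, b, c] ↔ ∃ r s t : K, ¬ (r = 0 ∧ s = 0 ∧ t = 0) ∧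
      r + s + t = 0 ∧ ∀ k, r * a k + s * b k + t * c k = 0 := by
  rw [not_affineIndependent_iff_weights]
  constructor
  · rintro ⟨w, hw0, hsum, hcomb⟩
    refine ⟨w 0, w 1, w 2, fun ⟨h0, h1, h2⟩ => hw0 ?_, by simpa [Fin.sum_univ_three] using hsum,
      fun k => by simpa [Fin.sum_univ_three] using hcomb k⟩
    funext j; fin_cases j <;> assumption
  · rintro ⟨r, s, t, h0, hsum, hcomb⟩
    refine ⟨![r, s, t], fun h => h0 ⟨congrFun h 0, congrFun h 1, congrFun h 2⟩,
      by simpa [Fin.sum_univ_three] using hsum,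
      fun k => by simpa [Fin.sum_univ_three] using hcomb k⟩

theorem not_affineIndependent_four_iff (a b c d : κ → K) :
    ¬ AffineIndependent K ![a, b, c, d] ↔ ∃ r s t u : K, ¬ (r = 0 ∧ s = 0 ∧ t = 0 ∧ u = 0) ∧
      r + s + t + u = 0 ∧ ∀ k, r * a k + s * b k + t * c k + u * d k = 0 := by
  rw [not_affineIndependent_iff_weights]
  constructor
  · rintro ⟨w, hw0, hsum, hcomb⟩
    refine ⟨w 0, w 1, w 2, w 3, fun ⟨h0, h1, h2, h3⟩ => hw0 ?_,
      by simpa [Fin.sum_univ_four] using hsum, fun k => by simpa [Fin.sum_univ_four] using hcomb k⟩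
    funext j; fin_cases j <;> assumption
  · rintro ⟨r, s, t, u, h0, hsum, hcomb⟩
    refine ⟨![r, s, t, u], fun h => h0 ⟨congrFun h 0, congrFun h 1, congrFun h 2, congrFun h 3⟩,
      by simpa [Fin.sum_univ_four] using hsum, fun k => by simpa [Fin.sum_univ_four] using hcomb k⟩

end Weights

theorem AffineIndependent.of_comp_perm {K : Type*} [Field K] {ι : Type*} {n : ℕ}
    {v : ι → Fin n → K} (σ : Equiv.Perm (Fin n)) (h : AffineIndependent K fun j => v j ∘ σ) :
    AffineIndependent K v :=
  AffineIndependent.of_comp (LinearEquiv.funCongrLeft K K σ).toLinearMap.toAffineMap h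

section AffineSpan

variable {k V P : Type*} [Field k] [AddCommGroup V] [Module k V] [AddTorsor V P]

theorem mem_affineSpan_of_not_affineIndependent_cons {n : ℕ} {T : Fin n → P} {p : P}
    (hT : AffineIndependent k T) (h : ¬ AffineIndependent k (Fin.cons p T : Fin (n + 1) → P)) :
    p ∈ affineSpan k (Set.range T) := by
  by_contra hp
  refine h (AffineIndependent.affineIndependent_of_notMem_span (i := 0)
    ((affineIndependent_equiv (finSuccAboveEquiv 0)).mp ?_) ?_)
  · convert hT using 1
    funext j
    simp [finSuccAboveEquiv_apply]
  · have himage : (Fin.cons p T : Fin (n + 1) → P) '' {x | x ≠ 0} = Set.range T := by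
      ext q
      constructor
      · rintro ⟨j, hj, rfl⟩
        obtain ⟨j, rfl⟩ := Fin.exists_succ_eq.mpr hj
        exact ⟨j, by simp⟩
      · rintro ⟨j, rfl⟩
        exact ⟨j.succ, Fin.succ_ne_zero j, by simp⟩
    simpa [himage] using hp

theorem AffineIndependent.card_le_finrank_direction_succ [FiniteDimensional k V] {ι : Type*}
    [Fintype ι] {p : ι → P} (hp : AffineIndependent k p) {E : AffineSubspace k P}
    (hE : ∀ j, p j ∈ E) : Fintype.card ι ≤ Module.finrank k E.direction + 1 := by
  refine hp.card_le_finrank_succ.trans (Nat.add_le_add_right (Submodule.finrank_mono ?_) 1)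
  rw [← direction_affineSpan]
  exact AffineSubspace.direction_le (affineSpan_le.mpr (Set.range_subset_iff.mpr hE))

end AffineSpan

theorem not_affineIndependent_of_apply_eq_zero {K : Type*} [Field K] {n : ℕ} {ι : Type*}
    [Fintype ι] (hι : Fintype.card ι = n + 1) {v : ι → Fin n → K} (k : Fin n)
    (hv : ∀ j, v j k = 0) : ¬ AffineIndependent K v := by
  intro hind
  let W := LinearMap.ker (LinearMap.proj (R := K) (φ := fun _ : Fin n => K) k)
  have hle : vectorSpan K (Set.range v) ≤ W := by
    rw [vectorSpan_def, Submodule.span_le]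
    rintro _ ⟨_, ⟨j, rfl⟩, _, ⟨j', rfl⟩, rfl⟩
    simp [W, hv]
  have hlt := Submodule.finrank_lt (s := W) fun h => by
    have : Pi.single k (1 : K) ∈ W := h ▸ Submodule.mem_top
    simp [W] at this
  have := Submodule.finrank_mono hle
  rw [hind.finrank_vectorSpan hι, Module.finrank_fin_fun] at *
  omega

section Hyperplane

variable {K : Type*} [Field K] {n : ℕ} {a : Fin (n + 1) → K} {b : K} {i : Fin (n + 1)}

theorem affineIndependent_removeNth_iff {ι : Type*} [Fintype ι] {p : ι → Fin (n + 1) → K}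
    (ha : a i ≠ 0) (hp : ∀ j, ∑ m, a m * p j m = b) :
    AffineIndependent K (fun j => Fin.removeNth i (p j)) ↔ AffineIndependent K p := by
  rw [← not_iff_not, not_affineIndependent_iff_weights, not_affineIndependent_iff_weights]
  refine ⟨fun ⟨w, hw0, hsum, hcomb⟩ => ⟨w, hw0, hsum, fun m => ?_⟩,
    fun ⟨w, hw0, hsum, hcomb⟩ => ⟨w, hw0, hsum, fun k => hcomb _⟩⟩
  by_cases hm : m = i
  · subst hm
    have key : ∑ j, w j * ∑ m', a m' * p j m' = 0 := by simp [hp, ← Finset.sum_mul, hsum]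
    simp_rw [Fin.sum_univ_succAbove _ m, mul_add, Finset.sum_add_distrib, Finset.mul_sum] at key
    rw [Finset.sum_comm] at key
    have hrest : ∑ k, ∑ j, w j * (a (m.succAbove k) * p j (m.succAbove k)) = 0 :=
      Finset.sum_eq_zero fun k _ => by
        have := hcomb k
        simp only [Fin.removeNth_apply] at this
        simp_rw [mul_left_comm (w _), ← Finset.mul_sum, this, mul_zero]
    rw [hrest, add_zero] at key
    simp_rw [mul_left_comm (w _), ← Finset.mul_sum] at key
    exact (mul_eq_zero.mp key).resolve_left ha
  · obtain ⟨k, rfl⟩ := Fin.exists_succAbove_eq hm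
    exact hcomb k

end Hyperplane

theorem eq_of_removeNth_eq {R : Type*} [CommRing R] [IsDomain R] {n : ℕ}
    {a : Fin (n + 1) → R} {b : R} {i : Fin (n + 1)} (ha : a i ≠ 0) {p q : Fin (n + 1) → R}
    (hp : ∑ m, a m * p m = b) (hq : ∑ m, a m * q m = b)
    (h : Fin.removeNth i p = Fin.removeNth i q) : p = q := by
  have hrest (k) : p (i.succAbove k) = q (i.succAbove k) := congrFun h k
  have hi : p i = q i := by
    rw [Fin.sum_univ_succAbove _ i] at hp hq
    simp only [hrest] at hp
    exact mul_left_cancel₀ ha (add_right_cancel (hp.trans hq.symm))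
  funext m
  by_cases hm : m = i
  · exact hm ▸ hi
  · obtain ⟨k, rfl⟩ := Fin.exists_succAbove_eq hm
    exact hrest k

section Minors

variable {n : ℕ}

def minor (k l : Fin n) (A B C : Fin n → ℤ) : ℤ :=
  (B k - A k) * (C l - A l) - (B l - A l) * (C k - A k)

theorem affineIndependent_of_minor_ne_zero {A B C : Fin n → ℤ} (k l : Fin n)
    (h : minor k l A B C ≠ 0) : AffineIndependent ℚ ![toQ A, toQ B, toQ C] := by
  by_contra hdep
  obtain ⟨r, s, t, h0, hsum, hcomb⟩ := (not_affineIndependent_three_iff _ _ _).mp hdep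
  have hk := hcomb k
  have hl := hcomb l
  simp only [toQ] at hk hl
  have hQ : ((minor k l A B C : ℤ) : ℚ) ≠ 0 := by exact_mod_cast h
  have hs : s * (minor k l A B C : ℚ) = 0 := by
    push_cast [minor]; linear_combination (C l - A l : ℚ) * hk - (C k - A k : ℚ) * hl
      - ((C l - A l) * A k - (C k - A k) * A l : ℚ) * hsum
  have ht : t * (minor k l A B C : ℚ) = 0 := by
    push_cast [minor]; linear_combination (B k - A k : ℚ) * hl - (B l - A l : ℚ) * hk
      - ((B k - A k) * A l - (B l - A l) * A k : ℚ) * hsum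
  have hs0 := (mul_eq_zero.mp hs).resolve_right hQ
  have ht0 := (mul_eq_zero.mp ht).resolve_right hQ
  exact h0 ⟨by linear_combination hsum - hs0 - ht0, hs0, ht0⟩

theorem ne_of_affineIndependent {p₁ p₂ p₃ : Fin n → ℤ}
    (hind : AffineIndependent ℚ ![toQ p₁, toQ p₂, toQ p₃]) : p₂ ≠ p₃ := by
  rintro rfl
  exact absurd (hind.injective (a₁ := 1) (a₂ := 2) rfl) (by decide)

end Minors

/-! ### Planar lattice configurations with a unit coordinate -/

def IsUnitAt (k : Fin 3) (A B C : Fin 3 → ℤ) : Prop :=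
  (A k = 1 ∧ B k = 0 ∧ C k = 0) ∨ (A k = 0 ∧ B k = 1 ∧ C k = 0) ∨ (A k = 0 ∧ B k = 0 ∧ C k = 1)

/-- Models the shadow of the base of a pyramidal B-facet along the axis of its apex. -/
structure IsUnitPlanar (B : Finset (Fin 3 → ℤ)) : Prop where
  nonneg : ∀ p ∈ B, ∀ k, 0 ≤ p k
  coplanar : ∀ p₁ ∈ B, ∀ p₂ ∈ B, ∀ p₃ ∈ B, ∀ p₄ ∈ B,
    ¬ AffineIndependent ℚ ![toQ p₁, toQ p₂, toQ p₃, toQ p₄]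
  unit : ∀ p₁ ∈ B, ∀ p₂ ∈ B, ∀ p₃ ∈ B, AffineIndependent ℚ ![toQ p₁, toQ p₂, toQ p₃] →
    ∃ k, IsUnitAt k p₁ p₂ p₃

structure Axes (x y z : Fin 3) : Prop where
  xy : x ≠ y
  xz : x ≠ z
  yz : y ≠ z

-- The shadows of B₁-facets, B₂-facets and flat B-border pyramids.
def HasLoneUnit (B : Finset (Fin 3 → ℤ)) : Prop :=
  ∃ k, ∃ q ∈ B, q k = 1 ∧ ∀ p ∈ B, p ≠ q → p k = 0

def InUnitTriangle (B : Finset (Fin 3 → ℤ)) : Prop :=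
  ∃ k l, k ≠ l ∧ ∀ p ∈ B, (p k = 0 ∧ p l = 0) ∨ (p k = 1 ∧ p l = 0) ∨ (p k = 0 ∧ p l = 1)

def IsFlatQuad (B : Finset (Fin 3 → ℤ)) : Prop :=
  ∃ x y z, Axes x y z ∧ ∃ a : ℤ, 1 ≤ a ∧ ∃ b₁ ∈ B, ∃ b₂ ∈ B, ∃ b₃ ∈ B, ∃ b₄ ∈ B,
    (b₁ x, b₁ y, b₁ z) = (0, 0, a) ∧ (b₂ x, b₂ y, b₂ z) = (a, 0, 0) ∧
    (b₃ x, b₃ y, b₃ z) = (0, 1, 1) ∧ (b₄ x, b₄ y, b₄ z) = (1, 1, 0) ∧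
    ∀ p ∈ B, p = b₁ ∨ p = b₂ ∨ p = b₃ ∨ p = b₄

namespace Axes

variable {x y z : Fin 3}

theorem swap (h : Axes x y z) : Axes y x z := ⟨h.xy.symm, h.yz, h.xz⟩

theorem exists_of_third (z : Fin 3) : ∃ x y, Axes x y z := by
  fin_cases z
  exacts [⟨1, 2, by decide, by decide, by decide⟩, ⟨0, 2, by decide, by decide, by decide⟩,
    ⟨0, 1, by decide, by decide, by decide⟩]

theorem eq_or (h : Axes x y z) (k : Fin 3) : k = x ∨ k = y ∨ k = z := by
  have := h.xy; have := h.xz; have := h.yz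
  omega

theorem ext (h : Axes x y z) {p q : Fin 3 → ℤ} (hx : p x = q x) (hy : p y = q y)
    (hz : p z = q z) : p = q :=
  funext fun k => by rcases h.eq_or k with rfl | rfl | rfl <;> assumption

theorem injective_succAbove (ax : Axes x y z) (i : Fin 4) :
    Function.Injective ![i.succAbove x, i.succAbove y, i.succAbove z, i] := by
  have := ax.xy; have := ax.xz; have := ax.yz
  intro a b hab
  fin_cases a <;> fin_cases b <;> simp_all [Fin.succAbove_ne, (Fin.succAbove_ne _ _).symm]

noncomputable def succAbovePerm (ax : Axes x y z) (i : Fin 4) : Equiv.Perm (Fin 4) :=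
  Equiv.ofBijective ![i.succAbove x, i.succAbove y, i.succAbove z, i]
    (ax.injective_succAbove i).bijective_of_finite

theorem comp_succAbovePerm (ax : Axes x y z) (i : Fin 4) (p : Fin 4 → ℤ) :
    p ∘ ax.succAbovePerm i = ![p (i.succAbove x), p (i.succAbove y), p (i.succAbove z), p i] := by
  funext j; fin_cases j <;> rfl

end Axes

theorem IsUnitAt.exists_ordered {B : Finset (Fin 3 → ℤ)} {k : Fin 3} {p₁ p₂ p₃ : Fin 3 → ℤ}
    (h₁ : p₁ ∈ B) (h₂ : p₂ ∈ B) (h₃ : p₃ ∈ B) (hind : AffineIndependent ℚ ![toQ p₁, toQ p₂, toQ p₃])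
    (hk : IsUnitAt k p₁ p₂ p₃) :
    ∃ P₁ ∈ B, ∃ P₂ ∈ B, ∃ P₃ ∈ B, AffineIndependent ℚ ![toQ P₁, toQ P₂, toQ P₃] ∧
      P₁ k = 1 ∧ P₂ k = 0 ∧ P₃ k = 0 := by
  rcases hk with ⟨e₁, e₂, e₃⟩ | ⟨e₁, e₂, e₃⟩ | ⟨e₁, e₂, e₃⟩
  · exact ⟨p₁, h₁, p₂, h₂, p₃, h₃, hind, e₁, e₂, e₃⟩
  · exact ⟨p₂, h₂, p₁, h₁, p₃, h₃, hind.comm_left, e₂, e₁, e₃⟩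
  · exact ⟨p₃, h₃, p₁, h₁, p₂, h₂, hind.reverse_of_three.comm_right, e₃, e₁, e₂⟩

namespace IsUnitPlanar

variable {B : Finset (Fin 3 → ℤ)} {x y z : Fin 3} (hB : IsUnitPlanar B)
include hB

theorem unit_xyz (ax : Axes x y z) {p₁ p₂ p₃ : Fin 3 → ℤ} (h₁ : p₁ ∈ B) (h₂ : p₂ ∈ B)
    (h₃ : p₃ ∈ B) (hind : AffineIndependent ℚ ![toQ p₁, toQ p₂, toQ p₃]) :
    IsUnitAt x p₁ p₂ p₃ ∨ IsUnitAt y p₁ p₂ p₃ ∨ IsUnitAt z p₁ p₂ p₃ := by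
  obtain ⟨k, hk⟩ := hB.unit p₁ h₁ p₂ h₂ p₃ h₃ hind
  rcases ax.eq_or k with rfl | rfl | rfl <;> simp only [hk, true_or, or_true]

theorem unit_xyz_of_minor (ax : Axes x y z) {p₁ p₂ p₃ : Fin 3 → ℤ} (h₁ : p₁ ∈ B) (h₂ : p₂ ∈ B)
    (h₃ : p₃ ∈ B) (k l : Fin 3) (hkl : minor k l p₁ p₂ p₃ ≠ 0) :
    IsUnitAt x p₁ p₂ p₃ ∨ IsUnitAt y p₁ p₂ p₃ ∨ IsUnitAt z p₁ p₂ p₃ :=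
  hB.unit_xyz ax h₁ h₂ h₃ (affineIndependent_of_minor_ne_zero k l hkl)

theorem affine_eq {u₁ u₂ u₃ : Fin 3 → ℤ} (h₁ : u₁ ∈ B) (h₂ : u₂ ∈ B) (h₃ : u₃ ∈ B)
    (hind : AffineIndependent ℚ ![toQ u₁, toQ u₂, toQ u₃]) (k l m : Fin 3) (α β γ d : ℤ)
    (e₁ : α * u₁ k + β * u₁ l + γ * u₁ m = d) (e₂ : α * u₂ k + β * u₂ l + γ * u₂ m = d)
    (e₃ : α * u₃ k + β * u₃ l + γ * u₃ m = d) :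
    ∀ p ∈ B, α * p k + β * p l + γ * p m = d := by
  intro p hp
  obtain ⟨w, r, s, t, h0, hsum, hcomb⟩ :=
    (not_affineIndependent_four_iff _ _ _ _).mp (hB.coplanar p hp u₁ h₁ u₂ h₂ u₃ h₃)
  have hw : w ≠ 0 := by
    rintro rfl
    refine (not_affineIndependent_three_iff _ _ _).mpr ⟨r, s, t, fun h => h0 ⟨rfl, h⟩,
      by linear_combination hsum, fun j => by linear_combination hcomb j⟩ hind
  have ek := hcomb k
  have el := hcomb l
  have em := hcomb m
  simp only [toQ] at ek el em
  have q₁ : (α * u₁ k + β * u₁ l + γ * u₁ m : ℚ) = d := by exact_mod_cast e₁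
  have q₂ : (α * u₂ k + β * u₂ l + γ * u₂ m : ℚ) = d := by exact_mod_cast e₂
  have q₃ : (α * u₃ k + β * u₃ l + γ * u₃ m : ℚ) = d := by exact_mod_cast e₃
  have key : w * ((α * p k + β * p l + γ * p m : ℤ) - d : ℚ) = 0 := by
    push_cast
    linear_combination (α : ℚ) * ek + (β : ℚ) * el + (γ : ℚ) * em
      - r * q₁ - s * q₂ - t * q₃ - (d : ℚ) * hsum
  have := (mul_eq_zero.mp key).resolve_left hw
  exact_mod_cast sub_eq_zero.mp this

theorem unit_xy_of_level (ax : Axes x y z) {u v w : Fin 3 → ℤ} (hu : u ∈ B) (hv : v ∈ B)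
    (hw : w ∈ B) (huv : u ≠ v) (hz : u z = v z) (hwz : w z ≠ u z)
    (hnot : ¬ (u z = 0 ∧ w z = 1)) : IsUnitAt x u v w ∨ IsUnitAt y u v w := by
  have hminor : minor x z u v w ≠ 0 ∨ minor y z u v w ≠ 0 := by
    by_contra! h
    obtain ⟨hx, hy⟩ := h
    simp only [minor, ← hz, sub_self, zero_mul, sub_zero] at hx hy
    have hwz' : w z - u z ≠ 0 := sub_ne_zero.mpr hwz
    exact huv (ax.ext (by linarith [(mul_eq_zero.mp hx).resolve_right hwz'])
      (by linarith [(mul_eq_zero.mp hy).resolve_right hwz']) hz)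
  rcases hminor.elim (hB.unit_xyz_of_minor ax hu hv hw x z) (hB.unit_xyz_of_minor ax hu hv hw y z)
    with h | h | h
  · exact .inl h
  · exact .inr h
  · unfold IsUnitAt at h; omega

theorem unit_xy_of_const (ax : Axes x y z) {c : ℤ} (hc : ∀ p ∈ B, p z = c)
    {p₁ p₂ p₃ : Fin 3 → ℤ} (h₁ : p₁ ∈ B) (h₂ : p₂ ∈ B) (h₃ : p₃ ∈ B)
    (hind : AffineIndependent ℚ ![toQ p₁, toQ p₂, toQ p₃]) :
    IsUnitAt x p₁ p₂ p₃ ∨ IsUnitAt y p₁ p₂ p₃ := by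
  rcases hB.unit_xyz ax h₁ h₂ h₃ hind with h | h | h
  · exact .inl h
  · exact .inr h
  · have := hc _ h₁; have := hc _ h₂; have := hc _ h₃
    unfold IsUnitAt at h; omega

theorem hasLoneUnit_of_const_of_far (ax : Axes x y z) {c : ℤ} (hc : ∀ p ∈ B, p z = c)
    {P₁ Pa Pb R : Fin 3 → ℤ} (hP₁ : P₁ ∈ B) (hPa : Pa ∈ B) (hPb : Pb ∈ B) (hR : R ∈ B)
    (hP₁x : P₁ x = 1) (hPax : Pa x = 0) (hPay : Pa y = 0) (hPbx : Pb x = 0) (hPby : Pb y = 1)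
    (hRx : 2 ≤ R x) (hRy : R y = 0) : HasLoneUnit B := by
  have unit {p₁ p₂ p₃} (h₁ : p₁ ∈ B) (h₂ : p₂ ∈ B) (h₃ : p₃ ∈ B) (hm : minor x y p₁ p₂ p₃ ≠ 0) :=
    hB.unit_xy_of_const ax hc h₁ h₂ h₃ (affineIndependent_of_minor_ne_zero x y hm)
  have hP₁y : P₁ y = 0 := by
    by_contra hne
    have h₁ := unit hP₁ hR hPa (by
      have : minor x y P₁ R Pa = -(P₁ y * R x) := by simp only [minor, hP₁x, hPax, hPay, hRy]; ring
      exact this ▸ neg_ne_zero.mpr (mul_ne_zero hne (by omega)))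
    have hP₁y : P₁ y = 1 := by unfold IsUnitAt at h₁; omega
    have h₂ := unit hP₁ hR hPb (by simp [minor, hP₁x, hPbx, hPby, hRy, hP₁y])
    unfold IsUnitAt at h₂; omega
  refine ⟨y, Pb, hPb, hPby, fun p hp hne => ?_⟩
  by_contra hpy
  have hpy₁ : 1 ≤ p y := by have := hB.nonneg p hp y; omega
  by_cases hpx : p x = 0
  · have h := unit hp hR hP₁ (by simp only [minor, hpx, hRy, hP₁x, hP₁y]; intro h; nlinarith)
    have : p y = 1 := by unfold IsUnitAt at h; omega
    exact hne (ax.ext (by omega) (by omega) (by rw [hc p hp, hc Pb hPb]))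
  · have h₁ := unit hp hPa hPb (by
      simp only [minor, hPax, hPay, hPbx, hPby]; intro h; apply hpx; linarith)
    have hpx₁ : p x = 1 := by unfold IsUnitAt at h₁; omega
    have h₂ := unit hp hR hPb (by simp only [minor, hpx₁, hRy, hPbx, hPby]; intro h; nlinarith)
    unfold IsUnitAt at h₂; omega

theorem hasLoneUnit_of_const_of_unit (ax : Axes x y z) {c : ℤ} (hc : ∀ p ∈ B, p z = c)
    {P₁ P₂ P₃ : Fin 3 → ℤ} (hP₁ : P₁ ∈ B) (hP₂ : P₂ ∈ B) (hP₃ : P₃ ∈ B)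
    (hind : AffineIndependent ℚ ![toQ P₁, toQ P₂, toQ P₃])
    (hP₁x : P₁ x = 1) (hP₂x : P₂ x = 0) (hP₃x : P₃ x = 0) : HasLoneUnit B := by
  have hP₂₃ : P₂ y ≠ P₃ y := fun h => ne_of_affineIndependent hind
    (ax.ext (hP₂x.trans hP₃x.symm) h ((hc P₂ hP₂).trans (hc P₃ hP₃).symm))
  by_cases hlone : ∀ p ∈ B, p ≠ P₁ → p x = 0
  · exact ⟨x, P₁, hP₁, hP₁x, hlone⟩
  push Not at hlone
  obtain ⟨R, hR, hRP₁, hRx⟩ := hlone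
  by_cases hfar : ∃ R' ∈ B, R' x ≠ 0 ∧ R' x ≠ 1
  · obtain ⟨R', hR', hR'0, hR'1⟩ := hfar
    have hm : minor x y R' P₂ P₃ = R' x * (P₂ y - P₃ y) := by
      simp only [minor, hP₂x, hP₃x]; ring
    have h := hB.unit_xy_of_const ax hc hR' hP₂ hP₃
      (affineIndependent_of_minor_ne_zero x y (hm ▸ mul_ne_zero hR'0 (sub_ne_zero.mpr hP₂₃)))
    have hR'2 : 2 ≤ R' x := by have := hB.nonneg R' hR' x; omega
    unfold IsUnitAt at h
    rcases h with (h | h | h) | (h | h | h) <;> try omega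
    · exact hB.hasLoneUnit_of_const_of_far ax hc hP₁ hP₃ hP₂ hR' hP₁x hP₃x h.2.2 hP₂x h.2.1
        hR'2 h.1
    · exact hB.hasLoneUnit_of_const_of_far ax hc hP₁ hP₂ hP₃ hR' hP₁x hP₂x h.2.1 hP₃x h.2.2
        hR'2 h.1
  · push Not at hfar
    have hRx₁ : R x = 1 := hfar R hR hRx
    have hRy : R y ≠ P₁ y := fun h => hRP₁
      (ax.ext (hRx₁.trans hP₁x.symm) h ((hc R hR).trans (hc P₁ hP₁).symm))
    have level {W} (hW : W ∈ B) (hWx : W x = 0) : W y = 0 := by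
      have h := hB.unit_xy_of_const ax hc hP₁ hR hW (affineIndependent_of_minor_ne_zero x y
        (by simp only [minor, hP₁x, hRx₁, hWx]; intro h; exact hRy (by linarith)))
      unfold IsUnitAt at h; omega
    exact absurd ((level hP₂ hP₂x).trans (level hP₃ hP₃x).symm) hP₂₃

theorem hasLoneUnit_of_const (ax : Axes x y z) {c : ℤ} (hc : ∀ p ∈ B, p z = c)
    (hne : ∃ p₁ ∈ B, ∃ p₂ ∈ B, ∃ p₃ ∈ B, AffineIndependent ℚ ![toQ p₁, toQ p₂, toQ p₃]) :
    HasLoneUnit B := by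
  obtain ⟨p₁, h₁, p₂, h₂, p₃, h₃, hind⟩ := hne
  rcases hB.unit_xy_of_const ax hc h₁ h₂ h₃ hind with h | h
  · obtain ⟨P₁, hP₁, P₂, hP₂, P₃, hP₃, hind', e₁, e₂, e₃⟩ := h.exists_ordered h₁ h₂ h₃ hind
    exact hB.hasLoneUnit_of_const_of_unit ax hc hP₁ hP₂ hP₃ hind' e₁ e₂ e₃
  · obtain ⟨P₁, hP₁, P₂, hP₂, P₃, hP₃, hind', e₁, e₂, e₃⟩ := h.exists_ordered h₁ h₂ h₃ hind
    exact hB.hasLoneUnit_of_const_of_unit ax.swap hc hP₁ hP₂ hP₃ hind' e₁ e₂ e₃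

theorem eq_of_level (ax : Axes x y z) {c : ℤ} {R₁ R₂ R₃ W : Fin 3 → ℤ} (h₁ : R₁ ∈ B) (h₂ : R₂ ∈ B)
    (h₃ : R₃ ∈ B) (hW : W ∈ B) (hz₁ : R₁ z = c) (hz₂ : R₂ z = c) (hz₃ : R₃ z = c) (hWz : W z ≠ c)
    (hx : R₂ x = R₃ x) (hx₁ : R₁ x ≠ R₂ x) : R₂ = R₃ := by
  by_contra hne
  have hy : R₃ y - R₂ y ≠ 0 := fun h => hne (ax.ext hx (by linarith) (hz₂.trans hz₃.symm))
  have hm : minor x y R₁ R₂ R₃ = (R₂ x - R₁ x) * (R₃ y - R₂ y) := by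
    simp only [minor, ← hx]; ring
  have hind := affineIndependent_of_minor_ne_zero x y
    (hm ▸ mul_ne_zero (sub_ne_zero.mpr (Ne.symm hx₁)) hy)
  have hplane := hB.affine_eq h₁ h₂ h₃ hind x y z 0 0 1 c (by simp [hz₁]) (by simp [hz₂])
    (by simp [hz₃]) W hW
  exact hWz (by simpa using hplane)

theorem inUnitTriangle_of_level_pair (ax : Axes x y z) (hz : ∀ p ∈ B, p z = 0 ∨ p z = 1)
    {u v W : Fin 3 → ℤ} (hu : u ∈ B) (hv : v ∈ B) (hW : W ∈ B) (huv : u ≠ v)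
    (huz : u z = 1) (hvz : v z = 1) (hux : u x = 0) (hvx : v x = 0) (hWz : W z = 0)
    (hWx : W x = 1) : InUnitTriangle B := by
  have hy : u y ≠ v y := fun h => huv (ax.ext (hux.trans hvx.symm) h (huz.trans hvz.symm))
  have hind := affineIndependent_of_minor_ne_zero y z (A := u) (B := v) (C := W) (by
    simp only [minor, huz, hvz, hWz]; intro h; exact hy (by linear_combination h))
  have hplane := hB.affine_eq hu hv hW hind x y z 1 0 1 1 (by simp [hux, huz]) (by simp [hvx, hvz])
    (by simp [hWx, hWz])
  refine ⟨x, z, ax.xz, fun p hp => ?_⟩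
  have := hplane p hp
  rcases hz p hp with h | h <;> rw [h] at this ⊢ <;> omega

theorem isFlatQuad_of_level_one_pair (ax : Axes x y z) (hz : ∀ p ∈ B, p z = 0 ∨ p z = 1)
    {u₀ u₁ W₁ W₂ : Fin 3 → ℤ} (hu₀ : u₀ ∈ B) (hu₁ : u₁ ∈ B) (hW₁ : W₁ ∈ B) (hW₂ : W₂ ∈ B)
    (hne : u₀ ≠ u₁) (hU : ∀ p ∈ B, p z = 1 → p = u₀ ∨ p = u₁) (hu₀x : u₀ x = 1)
    (hu₀y : u₀ y = 0) (hu₀z : u₀ z = 1) (hu₁x : u₁ x = 0) (hu₁y : u₁ y = 1) (hu₁z : u₁ z = 1)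
    (hW₁x : 1 ≤ W₁ x) (hW₁y : W₁ y = 0) (hW₁z : W₁ z = 0) (hW₂x : W₂ x = 0) (hW₂z : W₂ z = 0) :
    IsFlatQuad B := by
  have hind := affineIndependent_of_minor_ne_zero x z (A := u₀) (B := u₁) (C := W₁)
    (by simp [minor, hu₀x, hu₁x, hu₀z, hu₁z, hW₁z])
  have hplane := hB.affine_eq hu₀ hu₁ hW₁ hind x y z 1 1 (W₁ x - 1) (W₁ x)
    (by rw [hu₀x, hu₀y, hu₀z]; ring) (by rw [hu₁x, hu₁y, hu₁z]; ring) (by rw [hW₁y, hW₁z]; ring)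
  have hW₂y : W₂ y = W₁ x := by have := hplane W₂ hW₂; rw [hW₂x, hW₂z] at this; linarith
  refine ⟨x, z, y, ⟨ax.xz, ax.xy, ax.yz.symm⟩, _, hW₁x, W₂, hW₂, W₁, hW₁, u₁, hu₁, u₀, hu₀,
    by rw [hW₂x, hW₂z, hW₂y], by rw [hW₁z, hW₁y], by rw [hu₁x, hu₁z, hu₁y],
    by rw [hu₀x, hu₀z, hu₀y], fun p hp => ?_⟩
  rcases hz p hp with h | h
  · have hp' := hplane p hp
    rw [h] at hp'
    have := hB.unit_xy_of_level ax hu₀ hu₁ hp hne (hu₀z.trans hu₁z.symm) (by omega) (by omega)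
    unfold IsUnitAt at this
    by_cases hpx : p x = 0
    · exact .inl (ax.ext (by omega) (by nlinarith) (by omega))
    · exact .inr (.inl (ax.ext (by omega) (by omega) (by omega)))
  · rcases hU p hp h with rfl | rfl
    · exact .inr (.inr (.inr rfl))
    · exact .inr (.inr (.inl rfl))

theorem classify_of_level_one_pair_of_x (ax : Axes x y z) (hz : ∀ p ∈ B, p z = 0 ∨ p z = 1)
    {u₀ u₁ : Fin 3 → ℤ} (hu₀ : u₀ ∈ B) (hu₁ : u₁ ∈ B) (hne : u₀ ≠ u₁)
    (hU : ∀ p ∈ B, p z = 1 → p = u₀ ∨ p = u₁) (hu₀z : u₀ z = 1) (hu₁z : u₁ z = 1)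
    (hu₀x : u₀ x = 1) (hu₁x : u₁ x = 0) :
    HasLoneUnit B ∨ InUnitTriangle B ∨ IsFlatQuad B := by
  have unit {W} (hW : W ∈ B) (hWz : W z = 0) : IsUnitAt x u₀ u₁ W ∨ IsUnitAt y u₀ u₁ W :=
    hB.unit_xy_of_level ax hu₀ hu₁ hW hne (hu₀z.trans hu₁z.symm) (by omega) (by omega)
  have lone {k} {q : Fin 3 → ℤ} (hq : q = u₀ ∨ q = u₁) (hqk : q k = 1) (hk : u₀ k + u₁ k = 1)
      (h0 : ∀ W ∈ B, W z = 0 → W k = 0) : HasLoneUnit B := by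
    refine ⟨k, q, hq.elim (· ▸ hu₀) (· ▸ hu₁), hqk, fun p hp hpq => ?_⟩
    rcases hz p hp with h | h
    · exact h0 p hp h
    · rcases hU p hp h with rfl | rfl <;> rcases hq with rfl | rfl <;>
        first | omega | exact absurd rfl hpq
  by_cases hx : ∀ W ∈ B, W z = 0 → W x = 0
  · exact .inl (lone (.inl rfl) hu₀x (by omega) hx)
  push Not at hx
  obtain ⟨W₁, hW₁, hW₁z, hW₁x⟩ := hx
  have hy₁ := (unit hW₁ hW₁z).resolve_left (by unfold IsUnitAt; omega)
  unfold IsUnitAt at hy₁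
  by_cases hup : u₀ y = 0 ∧ u₁ y = 0
  · exact .inr (.inl (hB.inUnitTriangle_of_level_pair ax.swap hz hu₀ hu₁ hW₁ hne hu₀z hu₁z hup.1
      hup.2 hW₁z (by omega)))
  by_cases hy : ∀ W ∈ B, W z = 0 → W y = 0
  · by_cases h₀ : u₀ y = 1
    · exact .inl (lone (.inl rfl) h₀ (by omega) hy)
    · exact .inl (lone (.inr rfl) (by omega) (by omega) hy)
  push Not at hy
  obtain ⟨W₂, hW₂, hW₂z, hW₂y⟩ := hy
  have hW₂x : W₂ x = 0 := by have := unit hW₂ hW₂z; unfold IsUnitAt at this; omega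
  have hs : 1 ≤ W₁ x := by have := hB.nonneg W₁ hW₁ x; omega
  by_cases h₀ : u₀ y = 1
  · have hind := affineIndependent_of_minor_ne_zero x z (A := u₀) (B := u₁) (C := W₁)
      (by simp [minor, hu₀x, hu₁x, hu₀z, hu₁z, hW₁z])
    have hplane := hB.affine_eq hu₀ hu₁ hW₁ hind x y z (-1) 1 (-W₁ x) (-W₁ x)
      (by rw [hu₀x, h₀, hu₀z]; ring) (by rw [hu₁x, show u₁ y = 0 by omega, hu₁z]; ring)
      (by rw [show W₁ y = 0 by omega, hW₁z]; ring) W₂ hW₂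
    rw [hW₂x, hW₂z] at hplane
    have := hB.nonneg W₂ hW₂ y
    omega
  · exact .inr (.inr (hB.isFlatQuad_of_level_one_pair ax hz hu₀ hu₁ hW₁ hW₂ hne hU hu₀x (by omega)
      hu₀z hu₁x (by omega) hu₁z hs (by omega) hW₁z hW₂x hW₂z))

theorem classify_of_level_one_pair (ax : Axes x y z)
    (hz : ∀ p ∈ B, p z = 0 ∨ p z = 1) {u₀ u₁ W : Fin 3 → ℤ} (hu₀ : u₀ ∈ B) (hu₁ : u₁ ∈ B)
    (hW : W ∈ B) (hne : u₀ ≠ u₁) (hU : ∀ p ∈ B, p z = 1 → p = u₀ ∨ p = u₁) (hu₀z : u₀ z = 1)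
    (hu₁z : u₁ z = 1) (hWz : W z = 0) (hunit : IsUnitAt x u₀ u₁ W) :
    HasLoneUnit B ∨ InUnitTriangle B ∨ IsFlatQuad B := by
  rcases hunit with ⟨e₀, e₁, e⟩ | ⟨e₀, e₁, e⟩ | ⟨e₀, e₁, e⟩
  · exact hB.classify_of_level_one_pair_of_x ax hz hu₀ hu₁ hne hU hu₀z hu₁z e₀ e₁
  · exact hB.classify_of_level_one_pair_of_x ax hz hu₁ hu₀ hne.symm
      (fun p hp h => (hU p hp h).symm) hu₁z hu₀z e₁ e₀
  · exact .inr (.inl (hB.inUnitTriangle_of_level_pair ax hz hu₀ hu₁ hW hne hu₀z hu₁z e₀ e₁ hWz e))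

theorem inUnitTriangle_of_three_on_level_one (ax : Axes x y z) (hz : ∀ p ∈ B, p z = 0 ∨ p z = 1)
    {R₁ R₂ R₃ W : Fin 3 → ℤ} (h₁ : R₁ ∈ B) (h₂ : R₂ ∈ B) (h₃ : R₃ ∈ B) (hW : W ∈ B)
    (h₁₂ : R₁ ≠ R₂) (h₁₃ : R₁ ≠ R₃) (h₂₃ : R₂ ≠ R₃) (hz₁ : R₁ z = 1) (hz₂ : R₂ z = 1)
    (hz₃ : R₃ z = 1) (hWz : W z = 0) : InUnitTriangle B := by
  by_cases hx : ∃ u ∈ B, ∃ v ∈ B, u ≠ v ∧ u z = 1 ∧ v z = 1 ∧ u x = 0 ∧ v x = 0 ∧ W x = 1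
  · obtain ⟨u, hu, v, hv, huv, huz, hvz, hux, hvx, hWx⟩ := hx
    exact hB.inUnitTriangle_of_level_pair ax hz hu hv hW huv huz hvz hux hvx hWz hWx
  by_cases hy : ∃ u ∈ B, ∃ v ∈ B, u ≠ v ∧ u z = 1 ∧ v z = 1 ∧ u y = 0 ∧ v y = 0 ∧ W y = 1
  · obtain ⟨u, hu, v, hv, huv, huz, hvz, huy, hvy, hWy⟩ := hy
    exact hB.inUnitTriangle_of_level_pair ax.swap hz hu hv hW huv huz hvz huy hvy hWz hWy
  push Not at hx hy
  have unit {u v} (hu : u ∈ B) (hv : v ∈ B) (huv : u ≠ v) (huz : u z = 1) (hvz : v z = 1) :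
      (u x + v x = 1 ∧ 0 ≤ u x ∧ 0 ≤ v x) ∨ (u y + v y = 1 ∧ 0 ≤ u y ∧ 0 ≤ v y) := by
    have := hB.unit_xy_of_level ax hu hv hW huv (huz.trans hvz.symm) (by omega) (by omega)
    have := hx u hu v hv huv huz hvz
    have := hy u hu v hv huv huz hvz
    unfold IsUnitAt at *
    omega
  have odd {k k' : Fin 3} (ak : Axes k k' z) {a b c : Fin 3 → ℤ}
      (ha : a ∈ B) (hb : b ∈ B) (hc : c ∈ B) (hza : a z = 1) (hzb : b z = 1) (hzc : c z = 1)
      (hbc : b ≠ c) : ¬ (b k = c k ∧ a k ≠ b k) := fun h =>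
    hbc (hB.eq_of_level ak ha hb hc hW hza hzb hzc (by omega) h.1 h.2)
  have := unit h₁ h₂ h₁₂ hz₁ hz₂
  have := unit h₁ h₃ h₁₃ hz₁ hz₃
  have := unit h₂ h₃ h₂₃ hz₂ hz₃
  have := odd ax h₁ h₂ h₃ hz₁ hz₂ hz₃ h₂₃
  have := odd ax h₂ h₁ h₃ hz₂ hz₁ hz₃ h₁₃
  have := odd ax h₃ h₁ h₂ hz₃ hz₁ hz₂ h₁₂
  have := odd ax.swap h₁ h₂ h₃ hz₁ hz₂ hz₃ h₂₃
  have := odd ax.swap h₂ h₁ h₃ hz₂ hz₁ hz₃ h₁₃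
  have := odd ax.swap h₃ h₁ h₂ hz₃ hz₁ hz₂ h₁₂
  omega

theorem classify_of_levels_zero_one (ax : Axes x y z) (hz : ∀ p ∈ B, p z = 0 ∨ p z = 1)
    {P₁ R W : Fin 3 → ℤ} (hP₁ : P₁ ∈ B) (hR : R ∈ B) (hW : W ∈ B) (hRP₁ : R ≠ P₁)
    (hP₁z : P₁ z = 1) (hRz : R z = 1) (hWz : W z = 0) :
    HasLoneUnit B ∨ InUnitTriangle B ∨ IsFlatQuad B := by
  by_cases h₃ : ∃ p ∈ B, p z = 1 ∧ p ≠ P₁ ∧ p ≠ R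
  · obtain ⟨p, hp, hpz, hpP₁, hpR⟩ := h₃
    exact .inr (.inl (hB.inUnitTriangle_of_three_on_level_one ax hz hP₁ hR hp hW hRP₁.symm hpP₁.symm
      hpR.symm hP₁z hRz hpz hWz))
  push Not at h₃
  have hU (p) (hp : p ∈ B) (hpz : p z = 1) : p = P₁ ∨ p = R := by
    by_cases h : p = P₁
    exacts [.inl h, .inr (h₃ p hp hpz h)]
  rcases hB.unit_xy_of_level ax hP₁ hR hW hRP₁.symm (hP₁z.trans hRz.symm) (by omega) (by omega)
    with h | h
  · exact hB.classify_of_level_one_pair ax hz hP₁ hR hW hRP₁.symm hU hP₁z hRz hWz h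
  · exact hB.classify_of_level_one_pair ax.swap hz hP₁ hR hW hRP₁.symm hU hP₁z hRz hWz h

theorem hasLoneUnit_of_x_eq_mul_z (ax : Axes x y z) {c : ℤ} (hc : 1 ≤ c)
    (hplane : ∀ q ∈ B, q x = c * q z) {R₀ W₁ W₂ : Fin 3 → ℤ} (hR₀ : R₀ ∈ B) (hW₁ : W₁ ∈ B)
    (hW₂ : W₂ ∈ B) (hR₀z : 2 ≤ R₀ z) (hR₀y : R₀ y = 0) (hW₁z : W₁ z = 0) (hW₁y : W₁ y = 0)
    (hW₂z : W₂ z = 0) (hW₂y : W₂ y = 1) :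
    HasLoneUnit B := by
  have hR₀x : 2 ≤ R₀ x := by rw [hplane R₀ hR₀]; nlinarith
  have hW₂x : W₂ x = 0 := by rw [hplane W₂ hW₂, hW₂z, mul_zero]
  refine ⟨y, W₂, hW₂, hW₂y, fun q hq hne => ?_⟩
  by_contra hqy
  have hqy₁ : 1 ≤ q y := by have := hB.nonneg q hq y; omega
  by_cases hqz : q z = 0
  · have h := hB.unit_xyz_of_minor ax hR₀ hq hW₁ y z (by
      simp only [minor, hR₀y, hW₁y, hW₁z, hqz]; intro h; nlinarith)
    have : q x = 0 := by rw [hplane q hq, hqz, mul_zero]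
    have : q y = 1 := by unfold IsUnitAt at h; omega
    exact hne (ax.ext (by omega) (by omega) (by omega))
  · have hqz₁ : 1 ≤ q z := by have := hB.nonneg q hq z; omega
    have hqx : 1 ≤ q x := by rw [hplane q hq]; nlinarith
    have h := hB.unit_xyz_of_minor ax hq hW₂ hR₀ y z (by
      simp only [minor, hR₀y, hW₂y, hW₂z]; intro h; nlinarith)
    unfold IsUnitAt at h; omega

theorem hasLoneUnit_of_high_of_level_zero_x (ax : Axes x y z) {P₁ P₂ P₃ R₀ : Fin 3 → ℤ}
    (hP₁ : P₁ ∈ B) (hP₂ : P₂ ∈ B) (hP₃ : P₃ ∈ B) (hR₀ : R₀ ∈ B)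
    (hind : AffineIndependent ℚ ![toQ P₁, toQ P₂, toQ P₃]) (hP₁z : P₁ z = 1) (hP₂z : P₂ z = 0)
    (hP₃z : P₃ z = 0) (hR₀z : 2 ≤ R₀ z) (hx : ∀ W ∈ B, W z = 0 → W x = 0) : HasLoneUnit B := by
  have hP₂x := hx P₂ hP₂ hP₂z
  have hP₃x := hx P₃ hP₃ hP₃z
  have hplane (q) (hq : q ∈ B) : q x = P₁ x * q z := by
    have := hB.affine_eq hP₁ hP₂ hP₃ hind x y z 1 0 (-P₁ x) 0 (by rw [hP₁z]; ring)
      (by rw [hP₂x, hP₂z]; ring) (by rw [hP₃x, hP₃z]; ring) q hq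
    linarith
  by_cases hc : P₁ x = 0
  · exact hB.hasLoneUnit_of_const ⟨ax.yz, ax.xy.symm, ax.xz.symm⟩ (c := 0)
      (fun q hq => by simpa [hc] using hplane q hq) ⟨P₁, hP₁, P₂, hP₂, P₃, hP₃, hind⟩
  have hc₁ : 1 ≤ P₁ x := by have := hB.nonneg P₁ hP₁ x; omega
  have hR₀x : 2 ≤ R₀ x := by rw [hplane R₀ hR₀]; nlinarith
  have hP₂₃ : P₂ y ≠ P₃ y := fun h => ne_of_affineIndependent hind
    (ax.ext (hP₂x.trans hP₃x.symm) h (hP₂z.trans hP₃z.symm))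
  have hm : minor y z R₀ P₂ P₃ = R₀ z * (P₃ y - P₂ y) := by
    simp only [minor, hP₂z, hP₃z]; ring
  have h := hB.unit_xyz_of_minor ax hR₀ hP₂ hP₃ y z
    (hm ▸ mul_ne_zero (by omega) (sub_ne_zero.mpr hP₂₃.symm))
  unfold IsUnitAt at h
  have hR₀y : R₀ y = 0 := by omega
  by_cases h₂ : P₂ y = 1
  · exact hB.hasLoneUnit_of_x_eq_mul_z ax hc₁ hplane hR₀ hP₃ hP₂ hR₀z hR₀y hP₃z
      (by omega) hP₂z h₂
  · exact hB.hasLoneUnit_of_x_eq_mul_z ax hc₁ hplane hR₀ hP₂ hP₃ hR₀z hR₀y hP₂z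
      (by omega) hP₃z (by omega)

section High

-- Here `R₀` lies at height `z ≥ 2` with `y = 0`, and `W₁`, `W₂` lie at height `0` with `y = 0`
-- and `y = 1` respectively.
variable {R₀ W₁ W₂ : Fin 3 → ℤ}

theorem high_plane (hR₀ : R₀ ∈ B) (hW₁ : W₁ ∈ B) (hW₂ : W₂ ∈ B) (hR₀z : R₀ z ≠ 0)
    (hR₀y : R₀ y = 0) (hW₁z : W₁ z = 0) (hW₁y : W₁ y = 0) (hW₂z : W₂ z = 0) (hW₂y : W₂ y = 1) :
    ∀ q ∈ B, R₀ z * q x + R₀ z * (W₁ x - W₂ x) * q y + (W₁ x - R₀ x) * q z = W₁ x * R₀ z :=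
  hB.affine_eq hR₀ hW₁ hW₂ (affineIndependent_of_minor_ne_zero y z
    (by simpa [minor, hR₀y, hW₁z, hW₁y, hW₂z, hW₂y] using hR₀z)) x y z _ _ _ _
    (by rw [hR₀y]; ring) (by rw [hW₁y, hW₁z]; ring) (by rw [hW₂y, hW₂z]; ring)

theorem high_unit_of_pos (ax : Axes x y z) (hW₁ : W₁ ∈ B) (hW₂ : W₂ ∈ B) (hW₁z : W₁ z = 0)
    (hW₁y : W₁ y = 0) (hW₂z : W₂ z = 0) (hW₂y : W₂ y = 1) {R : Fin 3 → ℤ} (hR : R ∈ B)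
    (hRz : 1 ≤ R z) : R z = 1 ∨ R y = 0 ∨ IsUnitAt x R W₁ W₂ := by
  have h := hB.unit_xyz_of_minor ax hR hW₁ hW₂ y z (by
    simp only [minor, hW₁z, hW₁y, hW₂z, hW₂y]; intro h; nlinarith)
  rcases h with h | h | h
  · exact .inr (.inr h)
  all_goals unfold IsUnitAt at h; omega

theorem high_level_zero_y (ax : Axes x y z) {P₁ : Fin 3 → ℤ} (hP₁ : P₁ ∈ B) (hR₀ : R₀ ∈ B)
    (hW₁ : W₁ ∈ B) (hW₂ : W₂ ∈ B) (hP₁z : P₁ z = 1) (hR₀z : 2 ≤ R₀ z) (hR₀y : R₀ y = 0)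
    (hW₁z : W₁ z = 0) (hW₁y : W₁ y = 0) (hW₂z : W₂ z = 0) (hW₂y : W₂ y = 1) {q : Fin 3 → ℤ}
    (hq : q ∈ B) (hqz : q z = 0) (hqW₂ : q ≠ W₂) : q y = 0 := by
  have hplane := hB.high_plane (x := x) hR₀ hW₁ hW₂ (by omega) hR₀y hW₁z hW₁y hW₂z hW₂y
  by_contra hqy
  have hqy₁ : 1 ≤ q y := by have := hB.nonneg q hq y; omega
  have h₁ := hB.unit_xyz_of_minor ax hR₀ hq hW₁ y z (by
    simp only [minor, hR₀y, hW₁y, hW₁z, hqz]; intro h; nlinarith)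
  have hq' := hplane q hq
  rw [hqz] at hq'
  by_cases hqy₂ : q y = 1
  · rw [hqy₂] at hq'
    have hqx : q x = W₂ x := mul_left_cancel₀ (by omega : R₀ z ≠ 0) (by linarith)
    exact hqW₂ (ax.ext hqx (hqy₂.trans hW₂y.symm) (hqz.trans hW₂z.symm))
  have hqy₂' : 2 ≤ q y := by omega
  have h₂ := hB.unit_xyz_of_minor ax hR₀ hq hW₂ y z (by
    simp only [minor, hR₀y, hW₂y, hW₂z, hqz]; intro h; nlinarith)
  have hP₁' := hplane P₁ hP₁
  rw [hP₁z] at hP₁'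
  have := hB.nonneg P₁ hP₁ x
  unfold IsUnitAt at h₁ h₂
  have : (R₀ x = 1 ∧ q x = 0 ∧ W₁ x = 0 ∧ W₂ x = 0) ∨ (R₀ x = 0 ∧ q x = 1 ∧ W₁ x = 0 ∧ W₂ x = 0) ∨
      (R₀ x = 0 ∧ q x = 0 ∧ W₁ x = 1 ∧ W₂ x = 1) := by omega
  rcases this with ⟨e₁, -, e₃, e₄⟩ | ⟨e₁, e₂, e₃, e₄⟩ | ⟨e₁, e₂, e₃, e₄⟩
  · rw [e₁, e₃, e₄] at hP₁'
    have := Int.eq_one_of_mul_eq_one_right (by omega) (by linarith : R₀ z * P₁ x = 1)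
    omega
  · rw [e₁, e₂, e₃, e₄] at hq'; linarith
  · rw [e₁, e₂, e₃, e₄] at hq'; linarith

theorem high_eq_or_of_flat (ax : Axes x y z) {Rs : Fin 3 → ℤ} (hR₀ : R₀ ∈ B) (hW₁ : W₁ ∈ B)
    (hW₂ : W₂ ∈ B) (hRs : Rs ∈ B) (hR₀x : R₀ x = 0) (hR₀y : R₀ y = 0) (hR₀z : 2 ≤ R₀ z)
    (hW₁x : W₁ x = R₀ z) (hW₁y : W₁ y = 0) (hW₁z : W₁ z = 0) (hW₂x : W₂ x = 1) (hW₂y : W₂ y = 1)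
    (hW₂z : W₂ z = 0) (hRsx : Rs x = 0) (hRsy : Rs y = 1) (hRsz : Rs z = 1) :
    ∀ p ∈ B, p = R₀ ∨ p = W₁ ∨ p = Rs ∨ p = W₂ := by
  have hplane (q) (hq : q ∈ B) : q x + (R₀ z - 1) * q y + q z = R₀ z := by
    have := hB.high_plane (x := x) hR₀ hW₁ hW₂ (by omega) hR₀y hW₁z hW₁y hW₂z hW₂y q hq
    rw [hW₁x, hW₂x, hR₀x] at this
    exact mul_left_cancel₀ (by omega : R₀ z ≠ 0) (by linear_combination this)
  intro p hp
  have hpl := hplane p hp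
  have := hB.nonneg p hp x; have := hB.nonneg p hp y
  by_cases hpz : p z = 0
  · by_cases hpW₂ : p = W₂
    · exact .inr (.inr (.inr hpW₂))
    have hpy := hB.high_level_zero_y ax hRs hR₀ hW₁ hW₂ hRsz hR₀z hR₀y hW₁z hW₁y hW₂z hW₂y hp hpz
      hpW₂
    rw [hpy, hpz] at hpl
    exact .inr (.inl (ax.ext (by linarith) (by omega) (by omega)))
  have hpz₁ : 1 ≤ p z := by have := hB.nonneg p hp z; omega
  by_cases hpy : p y = 0
  · have h := hB.unit_xyz_of_minor ax hp hRs hW₂ y z (by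
      simp only [minor, hpy, hRsy, hRsz, hW₂y, hW₂z]; intro h; linarith)
    have hpx : p x = 0 := by unfold IsUnitAt at h; omega
    rw [hpy, hpx] at hpl
    exact .inl (ax.ext (by omega) (by omega) (by linarith))
  · have h := hB.high_unit_of_pos ax hW₁ hW₂ hW₁z hW₁y hW₂z hW₂y hp hpz₁
    have hpz' : p z = 1 := by unfold IsUnitAt at h; omega
    rw [hpz'] at hpl
    have hpy₁ : p y = 1 := by
      have : 1 ≤ p y := by omega
      nlinarith [mul_nonneg (by omega : (0 : ℤ) ≤ R₀ z - 2) (by omega : (0 : ℤ) ≤ p y - 1)]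
    rw [hpy₁] at hpl
    exact .inr (.inr (.inl (ax.ext (by omega) (by omega) (by omega))))

theorem high_units_of_pos_y (ax : Axes x y z) {Rs : Fin 3 → ℤ} (hR₀ : R₀ ∈ B) (hW₁ : W₁ ∈ B)
    (hW₂ : W₂ ∈ B) (hRs : Rs ∈ B) (hR₀z : 2 ≤ R₀ z) (hR₀y : R₀ y = 0) (hW₁z : W₁ z = 0)
    (hW₁y : W₁ y = 0) (hW₂z : W₂ z = 0) (hW₂y : W₂ y = 1) (hRsz : 1 ≤ Rs z) (hRsy : 1 ≤ Rs y) :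
    (Rs y = 1 ∨ IsUnitAt x Rs R₀ W₁) ∧ IsUnitAt x Rs R₀ W₂ := by
  have h₁ := hB.unit_xyz_of_minor ax hRs hR₀ hW₁ y z (by
    simp only [minor, hR₀y, hW₁y, hW₁z]; intro h; nlinarith)
  have h₂ := hB.unit_xyz_of_minor ax hRs hR₀ hW₂ y z (by
    simp only [minor, hR₀y, hW₂y, hW₂z]; intro h; nlinarith)
  refine ⟨?_, ?_⟩
  · rcases h₁ with h | h | h
    · exact .inr h
    all_goals unfold IsUnitAt at h; omega
  · rcases h₂ with h | h | h
    · exact h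
    all_goals unfold IsUnitAt at h; omega

theorem high_classify_of_pos_y (ax : Axes x y z) {P₁ Rs : Fin 3 → ℤ} (hP₁ : P₁ ∈ B)
    (hR₀ : R₀ ∈ B) (hW₁ : W₁ ∈ B) (hW₂ : W₂ ∈ B) (hRs : Rs ∈ B) (hP₁z : P₁ z = 1)
    (hR₀z : 2 ≤ R₀ z) (hR₀y : R₀ y = 0) (hW₁z : W₁ z = 0) (hW₁y : W₁ y = 0) (hW₂z : W₂ z = 0)
    (hW₂y : W₂ y = 1) (hRsz : 1 ≤ Rs z) (hRsy : Rs y ≠ 0) : InUnitTriangle B ∨ IsFlatQuad B := by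
  have hplane := hB.high_plane (x := x) hR₀ hW₁ hW₂ (by omega) hR₀y hW₁z hW₁y hW₂z hW₂y
  have hRsy₁ : 1 ≤ Rs y := by have := hB.nonneg Rs hRs y; omega
  have hW₁x := hB.nonneg W₁ hW₁ x
  obtain ⟨F₁, F₂⟩ := hB.high_units_of_pos_y ax hR₀ hW₁ hW₂ hRs hR₀z hR₀y hW₁z hW₁y hW₂z hW₂y
    hRsz hRsy₁
  have U := hB.high_unit_of_pos ax hW₁ hW₂ hW₁z hW₁y hW₂z hW₂y hRs hRsz
  have hpRs := hplane Rs hRs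
  unfold IsUnitAt at F₁ F₂ U
  rcases F₂ with ⟨e₁, e₂, e₃⟩ | ⟨e₁, e₂, e₃⟩ | ⟨e₁, e₂, e₃⟩
  · have hW₁x₀ : W₁ x ≠ 0 := by intro h; rw [e₁, e₂, e₃, h] at hpRs; nlinarith
    rw [e₁, e₂, e₃, show Rs y = 1 by omega, show Rs z = 1 by omega] at hpRs
    nlinarith
  · have hW₁x₀ : W₁ x ≠ 0 := by intro h; rw [e₁, e₂, e₃, h] at hpRs; nlinarith
    rw [e₁, e₂, e₃, show Rs y = 1 by omega] at hpRs
    have hW₁x₁ : W₁ x = 1 :=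
      sub_eq_zero.mp ((mul_eq_zero.mp (by linarith : (W₁ x - 1) * Rs z = 0)).resolve_right
        (by omega))
    refine .inl ⟨x, y, ax.xy, fun q hq => ?_⟩
    have hq' := hplane q hq
    rw [hW₁x₁, e₂, e₃] at hq'
    have := (mul_eq_zero.mp (by linarith : R₀ z * (q x + q y - 1) = 0)).resolve_left (by omega)
    have := hB.nonneg q hq x; have := hB.nonneg q hq y
    omega
  · have hW₁x₁ : W₁ x ≠ 1 := by
      intro h
      have hP := hplane P₁ hP₁
      rw [h, e₂, e₃, hP₁z] at hP
      have := Int.eq_one_of_mul_eq_one_right (by omega) (by linarith : R₀ z * (1 - P₁ x) = 1)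
      omega
    have hRsy' : Rs y = 1 := by omega
    have hW₁x₀ : W₁ x ≠ 0 := by intro h; rw [e₁, e₂, e₃, h, hRsy'] at hpRs; nlinarith
    have hRsz' : Rs z = 1 := by omega
    rw [e₁, e₂, e₃, hRsy', hRsz'] at hpRs
    have hW₁xz : W₁ x = R₀ z := by nlinarith
    exact .inr ⟨x, y, z, ax, R₀ z, by omega, R₀, hR₀, W₁, hW₁, Rs, hRs, W₂, hW₂, by rw [e₂, hR₀y],
      by rw [hW₁xz, hW₁y, hW₁z], by rw [e₁, hRsy', hRsz'], by rw [e₃, hW₂y, hW₂z],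
      hB.high_eq_or_of_flat ax hR₀ hW₁ hW₂ hRs e₂ hR₀y hR₀z hW₁xz hW₁y hW₁z e₃ hW₂y hW₂z e₁
        hRsy' hRsz'⟩

theorem high_classify (ax : Axes x y z) {P₁ R₀ W₁ W₂ : Fin 3 → ℤ} (hP₁ : P₁ ∈ B)
    (hR₀ : R₀ ∈ B) (hW₁ : W₁ ∈ B) (hW₂ : W₂ ∈ B) (hP₁z : P₁ z = 1) (hR₀z : 2 ≤ R₀ z)
    (hR₀y : R₀ y = 0) (hW₁z : W₁ z = 0) (hW₁y : W₁ y = 0) (hW₂z : W₂ z = 0) (hW₂y : W₂ y = 1) :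
    HasLoneUnit B ∨ InUnitTriangle B ∨ IsFlatQuad B := by
  by_cases hpos : ∃ R ∈ B, 1 ≤ R z ∧ R y ≠ 0
  · obtain ⟨Rs, hRs, hRsz, hRsy⟩ := hpos
    exact .inr (hB.high_classify_of_pos_y ax hP₁ hR₀ hW₁ hW₂ hRs hP₁z hR₀z hR₀y hW₁z hW₁y hW₂z
      hW₂y hRsz hRsy)
  push Not at hpos
  refine .inl ⟨y, W₂, hW₂, hW₂y, fun p hp hne => ?_⟩
  by_cases hpz : p z = 0
  · exact hB.high_level_zero_y ax hP₁ hR₀ hW₁ hW₂ hP₁z hR₀z hR₀y hW₁z hW₁y hW₂z hW₂y hp hpz hne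
  · exact hpos p hp (by have := hB.nonneg p hp z; omega)

end High

theorem classify_of_high (ax : Axes x y z) {P₁ P₂ P₃ R₀ : Fin 3 → ℤ} (hP₁ : P₁ ∈ B)
    (hP₂ : P₂ ∈ B) (hP₃ : P₃ ∈ B) (hR₀ : R₀ ∈ B)
    (hind : AffineIndependent ℚ ![toQ P₁, toQ P₂, toQ P₃]) (hP₁z : P₁ z = 1) (hP₂z : P₂ z = 0)
    (hP₃z : P₃ z = 0) (hR₀z : 2 ≤ R₀ z) : HasLoneUnit B ∨ InUnitTriangle B ∨ IsFlatQuad B := by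
  by_cases hx : ∀ W ∈ B, W z = 0 → W x = 0
  · exact .inl (hB.hasLoneUnit_of_high_of_level_zero_x ax hP₁ hP₂ hP₃ hR₀ hind hP₁z hP₂z hP₃z
      hR₀z hx)
  by_cases hy : ∀ W ∈ B, W z = 0 → W y = 0
  · exact .inl (hB.hasLoneUnit_of_high_of_level_zero_x ax.swap hP₁ hP₂ hP₃ hR₀ hind hP₁z hP₂z hP₃z
      hR₀z hy)
  push Not at hx hy
  obtain ⟨Wa, hWa, hWaz, hWax⟩ := hx
  obtain ⟨Wb, hWb, hWbz, hWby⟩ := hy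
  obtain ⟨Wc, hWc, hWcz, hWcb⟩ : ∃ Wc ∈ B, Wc z = 0 ∧ Wb ≠ Wc := by
    by_cases h : Wb = P₂
    · exact ⟨P₃, hP₃, hP₃z, h ▸ ne_of_affineIndependent hind⟩
    · exact ⟨P₂, hP₂, hP₂z, h⟩
  have hbc := hB.unit_xy_of_level ax hWb hWc hR₀ hWcb (hWbz.trans hWcz.symm) (by omega) (by omega)
  unfold IsUnitAt at hbc
  by_cases hRy : R₀ y = 0 ∧ Wb y = 1 ∧ Wc y = 0
  · exact hB.high_classify ax hP₁ hR₀ hWc hWb hP₁z hR₀z hRy.1 hWcz hRy.2.2 hWbz hRy.2.1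
  by_cases hbx : Wb x = 1
  · exact hB.high_classify ax.swap hP₁ hR₀ hWc hWb hP₁z hR₀z (by omega) hWcz (by omega) hWbz hbx
  by_cases hcx : Wc x = 1
  · exact hB.high_classify ax.swap hP₁ hR₀ hWb hWc hP₁z hR₀z (by omega) hWbz (by omega) hWcz hcx
  have hab := hB.unit_xy_of_level ax hWa hWb hR₀ (fun h => hWax (by rw [h]; omega))
    (hWaz.trans hWbz.symm) (by omega) (by omega)
  unfold IsUnitAt at hab
  exact hB.high_classify ax hP₁ hR₀ hWa hWb hP₁z hR₀z (by omega) hWaz (by omega) hWbz (by omega)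

theorem classify
    (hne : ∃ p₁ ∈ B, ∃ p₂ ∈ B, ∃ p₃ ∈ B, AffineIndependent ℚ ![toQ p₁, toQ p₂, toQ p₃]) :
    HasLoneUnit B ∨ InUnitTriangle B ∨ IsFlatQuad B := by
  obtain ⟨p₁, h₁, p₂, h₂, p₃, h₃, hind⟩ := hne
  obtain ⟨z, hz⟩ := hB.unit p₁ h₁ p₂ h₂ p₃ h₃ hind
  obtain ⟨P₁, hP₁, P₂, hP₂, P₃, hP₃, hind, hP₁z, hP₂z, hP₃z⟩ := hz.exists_ordered h₁ h₂ h₃ hind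
  obtain ⟨x, y, ax⟩ := Axes.exists_of_third z
  by_cases hlone : ∀ p ∈ B, p ≠ P₁ → p z = 0
  · exact .inl ⟨z, P₁, hP₁, hP₁z, hlone⟩
  push Not at hlone
  obtain ⟨R, hR, hRP₁, hRz⟩ := hlone
  by_cases hhigh : ∃ R₀ ∈ B, 2 ≤ R₀ z
  · obtain ⟨R₀, hR₀, hR₀z⟩ := hhigh
    exact hB.classify_of_high ax hP₁ hP₂ hP₃ hR₀ hind hP₁z hP₂z hP₃z hR₀z
  push Not at hhigh
  have hz01 (p) (hp : p ∈ B) : p z = 0 ∨ p z = 1 := by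
    have := hB.nonneg p hp z; have := hhigh p hp; omega
  exact hB.classify_of_levels_zero_one ax hz01 hP₁ hR hP₂ hRP₁ hP₁z
    ((hz01 R hR).resolve_left hRz) hP₂z

end IsUnitPlanar

/-! ### The shadow of a pyramidal B-facet -/

namespace IsBFacet

variable {S : Finset (Fin 4 → ℤ)} {i : Fin 4} {Q : Fin 4 → ℤ}

theorem affineIndependent_removeNth_iff (hS : IsBFacet S) {ι : Type*} [Fintype ι]
    {v : ι → Fin 4 → ℤ} (hv : ∀ j, v j ∈ S) :
    AffineIndependent ℚ (fun j => toQ (Fin.removeNth i (v j))) ↔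
      AffineIndependent ℚ (fun j => toQ (v j)) := by
  obtain ⟨-, ⟨a, ha, b, hab⟩, -, -⟩ := hS
  have hplane (j) : ∑ m, (a m : ℚ) * toQ (v j) m = b := by
    simp only [toQ]; exact_mod_cast hab _ (hv j)
  exact _root_.affineIndependent_removeNth_iff (p := fun j => toQ (v j))
    (by exact_mod_cast (ha i).ne') hplane

theorem eq_of_removeNth_eq (hS : IsBFacet S) {p q : Fin 4 → ℤ} (hp : p ∈ S) (hq : q ∈ S)
    (h : Fin.removeNth i p = Fin.removeNth i q) : p = q := by
  obtain ⟨-, ⟨a, ha, b, hab⟩, -, -⟩ := hS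
  exact _root_.eq_of_removeNth_eq (ha i).ne' (hab p hp) (hab q hq) h

theorem exists_apply_ne_zero (hS : IsBFacet S) {k : Fin 3} :
    ∃ p ∈ S, p (i.succAbove k) ≠ 0 := by
  by_contra! h
  obtain ⟨v, hv, hind⟩ := hS.2.2.1
  exact not_affineIndependent_of_apply_eq_zero (by simp) k
    (fun j => by simp [toQ, Fin.removeNth_apply, h _ (hv j)])
    ((hS.affineIndependent_removeNth_iff (i := i) hv).mpr hind)

-- Otherwise the shadows of all points of `S` would lie in the plane of the shadow of `A`.
theorem affineIndependent_cons_of_base (hS : IsBFacet S)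
    (hplanar : ∀ v : Fin 4 → Fin 4 → ℤ, (∀ k, v k ∈ S.erase Q) →
      ¬ AffineIndependent ℚ (fun k => toQ (v k)))
    {A : Fin 3 → Fin 4 → ℤ} (hA : ∀ j, A j ∈ S.erase Q)
    (hind : AffineIndependent ℚ (fun j => toQ (Fin.removeNth i (A j)))) :
    AffineIndependent ℚ (fun j => toQ ((Fin.cons Q A : Fin 4 → Fin 4 → ℤ) j)) := by
  by_contra hQA
  have hmem (p) (hp : p ∈ S) : ∀ j, (Fin.cons p A : Fin 4 → Fin 4 → ℤ) j ∈ S :=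
    Fin.cases hp fun j => Finset.mem_of_mem_erase (hA j)
  have hspan (p) (hp : p ∈ S) :
      toQ (Fin.removeNth i p) ∈ affineSpan ℚ (Set.range fun j => toQ (Fin.removeNth i (A j))) := by
    refine mem_affineSpan_of_not_affineIndependent_cons hind fun hcons => ?_
    have hAI := (hS.affineIndependent_removeNth_iff (hmem p hp)).mp (by
      convert hcons using 1; funext j; cases j using Fin.cases <;> rfl)
    by_cases hpQ : p = Q
    · exact hQA (hpQ ▸ hAI)
    · exact hplanar _ (Fin.cases (Finset.mem_erase.mpr ⟨hpQ, hp⟩) hA) hAI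
  obtain ⟨v, hv, hvind⟩ := hS.2.2.1
  have := ((hS.affineIndependent_removeNth_iff (i := i) hv).mpr hvind)
    |>.card_le_finrank_direction_succ fun j => hspan _ (hv j)
  rw [direction_affineSpan] at this
  have := finrank_vectorSpan_range_le ℚ (fun j => toQ (Fin.removeNth i (A j))) (n := 2) rfl
  simp only [Fintype.card_fin] at *
  omega

theorem isUnitAt_of_base (hS : IsBFacet S) (hQ : Q ∈ S) (hray : (∀ m, m ≠ i → Q m = 0) ∧ 2 ≤ Q i)
    (hplanar : ∀ v : Fin 4 → Fin 4 → ℤ, (∀ k, v k ∈ S.erase Q) →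
      ¬ AffineIndependent ℚ (fun k => toQ (v k)))
    {A₁ A₂ A₃ : Fin 4 → ℤ} (h₁ : A₁ ∈ S.erase Q) (h₂ : A₂ ∈ S.erase Q) (h₃ : A₃ ∈ S.erase Q)
    (hind : AffineIndependent ℚ
      ![toQ (Fin.removeNth i A₁), toQ (Fin.removeNth i A₂), toQ (Fin.removeNth i A₃)]) :
    ∃ k, IsUnitAt k (Fin.removeNth i A₁) (Fin.removeNth i A₂) (Fin.removeNth i A₃) := by
  have hA : ∀ j, ![A₁, A₂, A₃] j ∈ S.erase Q := Fin.cases h₁ (Fin.cases h₂ (Fin.cases h₃ nofun))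
  have hQA := hS.affineIndependent_cons_of_base hplanar hA (by
    convert hind using 1; funext j; fin_cases j <;> rfl)
  obtain ⟨m, a, ha, h0⟩ := hS.2.2.2 _ (Fin.cases hQ fun j => Finset.mem_of_mem_erase (hA j)) hQA
  have ha0 : a ≠ 0 := by
    rintro rfl
    have hQm : Q m = 1 := ha
    by_cases hm : m = i
    · subst hm; omega
    · rw [hray.1 m hm] at hQm; omega
  have hmi : m ≠ i := by
    rintro rfl
    have : Q m = 0 := h0 0 ha0.symm
    omega
  obtain ⟨k, rfl⟩ := Fin.exists_succAbove_eq hmi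
  refine ⟨k, ?_⟩
  simp only [IsUnitAt, Fin.removeNth_apply]
  fin_cases a
  · exact absurd rfl ha0
  · exact .inl ⟨ha, h0 2 (by decide), h0 3 (by decide)⟩
  · exact .inr (.inl ⟨h0 1 (by decide), ha, h0 3 (by decide)⟩)
  · exact .inr (.inr ⟨h0 1 (by decide), h0 2 (by decide), ha⟩)

theorem isUnitPlanar_base (hS : IsBFacet S) (hQ : Q ∈ S)
    (hray : (∀ m, m ≠ i → Q m = 0) ∧ 2 ≤ Q i)
    (hplanar : ∀ v : Fin 4 → Fin 4 → ℤ, (∀ k, v k ∈ S.erase Q) →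
      ¬ AffineIndependent ℚ (fun k => toQ (v k))) :
    IsUnitPlanar ((S.erase Q).image (Fin.removeNth i)) where
  nonneg := by
    intro p hp k
    obtain ⟨u, hu, rfl⟩ := Finset.mem_image.mp hp
    exact hS.1 u (Finset.mem_of_mem_erase hu) _
  coplanar := by
    intro p₁ h₁ p₂ h₂ p₃ h₃ p₄ h₄ hind
    obtain ⟨u₁, hu₁, rfl⟩ := Finset.mem_image.mp h₁
    obtain ⟨u₂, hu₂, rfl⟩ := Finset.mem_image.mp h₂
    obtain ⟨u₃, hu₃, rfl⟩ := Finset.mem_image.mp h₃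
    obtain ⟨u₄, hu₄, rfl⟩ := Finset.mem_image.mp h₄
    have hu : ∀ j, ![u₁, u₂, u₃, u₄] j ∈ S.erase Q :=
      Fin.cases hu₁ (Fin.cases hu₂ (Fin.cases hu₃ (Fin.cases hu₄ nofun)))
    refine hplanar _ hu ((hS.affineIndependent_removeNth_iff (i := i)
      fun j => Finset.mem_of_mem_erase (hu j)).mp ?_)
    convert hind using 1; funext j; fin_cases j <;> rfl
  unit := by
    intro p₁ h₁ p₂ h₂ p₃ h₃ hind
    obtain ⟨u₁, hu₁, rfl⟩ := Finset.mem_image.mp h₁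
    obtain ⟨u₂, hu₂, rfl⟩ := Finset.mem_image.mp h₂
    obtain ⟨u₃, hu₃, rfl⟩ := Finset.mem_image.mp h₃
    exact hS.isUnitAt_of_base hQ hray hplanar hu₁ hu₂ hu₃ hind

theorem exists_noncollinear_base (hS : IsBFacet S)
    (hbase : ∃ w : Fin 3 → Fin 4 → ℤ, (∀ k, w k ∈ S.erase Q) ∧
      AffineIndependent ℚ (fun k => toQ (w k))) :
    ∃ p₁ ∈ (S.erase Q).image (Fin.removeNth i), ∃ p₂ ∈ (S.erase Q).image (Fin.removeNth i),
      ∃ p₃ ∈ (S.erase Q).image (Fin.removeNth i),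
        AffineIndependent ℚ ![toQ p₁, toQ p₂, toQ p₃] := by
  obtain ⟨w, hw, hind⟩ := hbase
  refine ⟨_, Finset.mem_image_of_mem _ (hw 0), _, Finset.mem_image_of_mem _ (hw 1), _,
    Finset.mem_image_of_mem _ (hw 2), ?_⟩
  convert (hS.affineIndependent_removeNth_iff (i := i)
    fun j => Finset.mem_of_mem_erase (hw j)).mpr hind using 1
  funext j; fin_cases j <;> rfl

theorem isB1Facet_of_hasLoneUnit (hS : IsBFacet S) (hQ₀ : ∀ m, m ≠ i → Q m = 0)
    (h : HasLoneUnit ((S.erase Q).image (Fin.removeNth i))) : IsB1Facet S := by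
  obtain ⟨k, q, hq, hq₁, hq₀⟩ := h
  obtain ⟨u, hu, rfl⟩ := Finset.mem_image.mp hq
  refine ⟨i.succAbove k, u, Finset.mem_of_mem_erase hu, hq₁, fun p hp hpu => ?_⟩
  by_cases hpQ : p = Q
  · exact hpQ ▸ hQ₀ _ (Fin.succAbove_ne i k)
  · exact hq₀ _ (Finset.mem_image_of_mem _ (Finset.mem_erase.mpr ⟨hpQ, hp⟩))
      fun h => hpu (hS.eq_of_removeNth_eq hp (Finset.mem_of_mem_erase hu) h)

theorem isB2Facet_of_inUnitTriangle (hS : IsBFacet S) (hQ : Q ∈ S)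
    (hQ₀ : ∀ m, m ≠ i → Q m = 0) (h : InUnitTriangle ((S.erase Q).image (Fin.removeNth i))) :
    IsB2Facet S := by
  obtain ⟨k, l, hkl, hall⟩ := h
  have hallS (p) (hp : p ∈ S) : (p (i.succAbove k) = 0 ∧ p (i.succAbove l) = 0) ∨
      (p (i.succAbove k) = 1 ∧ p (i.succAbove l) = 0) ∨
      (p (i.succAbove k) = 0 ∧ p (i.succAbove l) = 1) := by
    by_cases hpQ : p = Q
    · exact .inl ⟨hpQ ▸ hQ₀ _ (Fin.succAbove_ne i k), hpQ ▸ hQ₀ _ (Fin.succAbove_ne i l)⟩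
    · exact hall _ (Finset.mem_image_of_mem _ (Finset.mem_erase.mpr ⟨hpQ, hp⟩))
  obtain ⟨p, hp, hpk⟩ := hS.exists_apply_ne_zero (i := i) (k := k)
  obtain ⟨q, hq, hql⟩ := hS.exists_apply_ne_zero (i := i) (k := l)
  refine ⟨_, _, Fin.succAbove_right_injective.ne hkl, hallS,
    ⟨Q, hQ, hQ₀ _ (Fin.succAbove_ne i k), hQ₀ _ (Fin.succAbove_ne i l)⟩, ⟨p, hp, ?_⟩, ⟨q, hq, ?_⟩⟩
  · have := hallS p hp; omega
  · have := hallS q hq; omega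

theorem isFlatBBorderPyramid_of_isFlatQuad (hS : IsBFacet S) (hQ : Q ∈ S)
    (hQ₀ : ∀ m, m ≠ i → Q m = 0)
    (hplanar : ∀ v : Fin 4 → Fin 4 → ℤ, (∀ k, v k ∈ S.erase Q) →
      ¬ AffineIndependent ℚ (fun k => toQ (v k)))
    (h : IsFlatQuad ((S.erase Q).image (Fin.removeNth i))) : IsFlatBBorderPyramid S := by
  obtain ⟨x, y, z, ax, a, ha, _, m₁, _, m₂, _, m₃, _, m₄, e₁, e₂, e₃, e₄, hall⟩ := h
  obtain ⟨u₁, hu₁, rfl⟩ := Finset.mem_image.mp m₁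
  obtain ⟨u₂, hu₂, rfl⟩ := Finset.mem_image.mp m₂
  obtain ⟨u₃, hu₃, rfl⟩ := Finset.mem_image.mp m₃
  obtain ⟨u₄, hu₄, rfl⟩ := Finset.mem_image.mp m₄
  set σ := ax.succAbovePerm i
  have hcomp {u : Fin 4 → ℤ} {c₁ c₂ c₃ : ℤ}
      (e : (Fin.removeNth i u x, Fin.removeNth i u y, Fin.removeNth i u z) = (c₁, c₂, c₃)) :
      u ∘ σ = ![c₁, c₂, c₃, u i] := by
    simp only [Prod.mk.injEq, Fin.removeNth_apply] at e
    rw [ax.comp_succAbovePerm, e.1, e.2.1, e.2.2]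
  have hQσ : Q ∘ σ = ![0, 0, 0, Q i] := hcomp (by
    simp [Fin.removeNth_apply, hQ₀ _ (Fin.succAbove_ne i _)])
  have hbase : (S.erase Q).image (· ∘ σ) = {u₁ ∘ σ, u₂ ∘ σ, u₃ ∘ σ, u₄ ∘ σ} := by
    ext q
    simp only [Finset.mem_image, Finset.mem_insert, Finset.mem_singleton]
    constructor
    · rintro ⟨p, hp, rfl⟩
      have heq {u} (hu : u ∈ S.erase Q) (h : Fin.removeNth i p = Fin.removeNth i u) : p = u :=
        hS.eq_of_removeNth_eq (Finset.mem_of_mem_erase hp) (Finset.mem_of_mem_erase hu) h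
      rcases hall _ (Finset.mem_image_of_mem _ hp) with h | h | h | h
      exacts [.inl (heq hu₁ h ▸ rfl), .inr (.inl (heq hu₂ h ▸ rfl)),
        .inr (.inr (.inl (heq hu₃ h ▸ rfl))), .inr (.inr (.inr (heq hu₄ h ▸ rfl)))]
    · rintro (rfl | rfl | rfl | rfl)
      exacts [⟨u₁, hu₁, rfl⟩, ⟨u₂, hu₂, rfl⟩, ⟨u₃, hu₃, rfl⟩, ⟨u₄, hu₄, rfl⟩]
  refine ⟨σ, a, Q i, u₁ i, u₂ i, u₃ i, u₄ i, ha, ?_, fun hind => ?_⟩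
  · rw [← Finset.insert_erase hQ, Finset.image_insert, hbase, hQσ, hcomp e₁, hcomp e₂, hcomp e₃,
      hcomp e₄]
  · refine hplanar ![u₁, u₂, u₃, u₄] (Fin.cases hu₁ (Fin.cases hu₂ (Fin.cases hu₃
      (Fin.cases hu₄ nofun)))) (.of_comp_perm σ ?_)
    convert hind using 2 with j
    fin_cases j
    exacts [congrArg toQ (hcomp e₁), congrArg toQ (hcomp e₂), congrArg toQ (hcomp e₃),
      congrArg toQ (hcomp e₄)]

end IsBFacet

/-- pyramid with apex on a coordinate ray: if a B-facet `τ ⊂ ℤ⁴_{≥0}` is a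
pyramid whose apex `Q` lies on a coordinate ray (with coordinate ≥ 2) and whose base
`τ \ {Q}` is 2-dimensional (contained in an affine 2-plane), then `τ` is a B₁-facet, a
B₂-facet, or a flat B-border pyramid. -/
theorem stmt16 (S : Finset (Fin 4 → ℤ)) (hS : IsBFacet S)
    (i : Fin 4) (Q : Fin 4 → ℤ) (hQ : Q ∈ S)
    (hray : (∀ m, m ≠ i → Q m = 0) ∧ 2 ≤ Q i)
    (hbase2 : ∃ w : Fin 3 → (Fin 4 → ℤ), (∀ k, w k ∈ S.erase Q) ∧
      AffineIndependent ℚ (fun k => toQ (w k)))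
    (hbaseplanar : ∀ v : Fin 4 → (Fin 4 → ℤ), (∀ k, v k ∈ S.erase Q) →
      ¬ AffineIndependent ℚ (fun k => toQ (v k))) :
    IsB1Facet S ∨ IsB2Facet S ∨ IsFlatBBorderPyramid S := by
  rcases (hS.isUnitPlanar_base hQ hray hbaseplanar).classify
    (hS.exists_noncollinear_base hbase2) with h | h | h
  · exact .inl (hS.isB1Facet_of_hasLoneUnit hray.1 h)
  · exact .inr (.inl (hS.isB2Facet_of_inUnitTriangle hQ hray.1 h))
  · exact .inr (.inr (hS.isFlatBBorderPyramid_of_isFlatQuad hQ hray.1 hbaseplanar h))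
end
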